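/- arXiv:2004.09399 — 11 statements merged into one kernel-verified Lean document; each statement's English description precedes it below -/
import Mathlib

section
/- Let f ∈ L¹(ℝ, ℂ) and let g : ℝ → ℂ be a Schwartz function. Then for every fixed η ∈ ℝ the function t ↦ V_f^g(t,η) is differentiable at every t ∈ ℝ, with derivative ∂_t V_f^g(t,η) = 2πiη · V_f^g(t,η) − V_f^{g'}(t,η). -/
open MeasureTheory Real

/-- The (modified) short-time Fourier transform of `f` with window `g`. -/
noncomputable def STFT (f g : ℝ → ℂ) (t η : ℝ) : ℂ :=
  ∫ τ : ℝ, f (t + τ) * (starRingEnd ℂ) (g τ) *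
    Complex.exp (-2 * (π : ℂ) * Complex.I * (η : ℂ) * (τ : ℂ))

private lemma exp_norm_one' (η x : ℝ) :
    ‖Complex.exp (-2 * (π : ℂ) * Complex.I * (η : ℂ) * (x : ℂ))‖ = 1 := by
  have h : -2 * (π : ℂ) * Complex.I * (η : ℂ) * (x : ℂ)
      = ((-2 * π * η * x : ℝ) : ℂ) * Complex.I := by push_cast; ring
  rw [h]
  exact Complex.norm_exp_ofReal_mul_I _

private lemma integrable_mul_bdd (f : ℝ → ℂ) (hf : Integrable f) {h : ℝ → ℂ}
    (hc : Continuous h) {C : ℝ} (hC : ∀ x, ‖h x‖ ≤ C) :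
    Integrable (fun u => f u * h u) := by
  simpa [mul_comm] using hf.bdd_mul hc.aestronglyMeasurable (Filter.Eventually.of_forall hC)

private lemma stft_shift (f w : ℝ → ℂ) (t η : ℝ) :
    STFT f w t η = ∫ u : ℝ, f u * ((starRingEnd ℂ) (w (u - t)) *
      Complex.exp (-2 * (π : ℂ) * Complex.I * (η : ℂ) * ((u - t : ℝ) : ℂ))) := by
  rw [STFT, ← integral_add_left_eq_self (fun u : ℝ => f u * ((starRingEnd ℂ) (w (u - t)) *
      Complex.exp (-2 * (π : ℂ) * Complex.I * (η : ℂ) * ((u - t : ℝ) : ℂ)))) t]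
  simp [add_sub_cancel_left, mul_assoc]

/-- `∂_t V_f^g(t,η) = 2πiη · V_f^g(t,η) − V_f^{g'}(t,η)`. -/
theorem stft_deriv_time (f : ℝ → ℂ) (hf : Integrable f) (g : SchwartzMap ℝ ℂ) (η : ℝ) :
    ∀ t : ℝ,
      HasDerivAt (fun t' : ℝ => STFT f (⇑g) t' η)
        (2 * (π : ℂ) * Complex.I * (η : ℂ) * STFT f (⇑g) t η
          - STFT f (deriv (⇑g)) t η) t := by
  intro t
  set c : ℂ := -2 * (π : ℂ) * Complex.I * (η : ℂ) with hc
  set c₂ : ℂ := 2 * (π : ℂ) * Complex.I * (η : ℂ) with hc₂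
  -- bounds on g and deriv g
  obtain ⟨Cg, -, hCg⟩ := g.decay 0 0
  have hCg' : ∀ x, ‖g x‖ ≤ Cg := by
    intro x; simpa using hCg x
  obtain ⟨Cd, -, hCd⟩ := (SchwartzMap.derivCLM ℝ ℂ g).decay 0 0
  have hCd' : ∀ x, ‖deriv (⇑g) x‖ ≤ Cd := by
    intro x
    have := hCd x
    simpa [SchwartzMap.derivCLM_apply] using this
  have hgc : Continuous (⇑g) := g.continuous
  have hdc : Continuous (deriv (⇑g)) := by
    have := (SchwartzMap.derivCLM ℝ ℂ g).continuous
    simpa [funext fun x => SchwartzMap.derivCLM_apply (𝕜 := ℝ) g x] using this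
  -- the family and its t-derivative
  set F : ℝ → ℝ → ℂ := fun t' u => f u * ((starRingEnd ℂ) (g (u - t')) *
      Complex.exp (c * ((u - t' : ℝ) : ℂ))) with hF
  set F' : ℝ → ℝ → ℂ := fun t' u =>
      f u * ((starRingEnd ℂ) (g (u - t')) * Complex.exp (c * ((u - t' : ℝ) : ℂ))) * c₂
      - f u * ((starRingEnd ℂ) (deriv (⇑g) (u - t')) * Complex.exp (c * ((u - t' : ℝ) : ℂ)))
    with hF'
  have hexp : ∀ x : ℝ, ‖Complex.exp (c * (x : ℂ))‖ = 1 := by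
    intro x
    have := exp_norm_one' η x
    simpa [hc, mul_assoc] using this
  have hexpc : ∀ s : ℝ, Continuous fun u : ℝ => Complex.exp (c * ((u - s : ℝ) : ℂ)) := by
    intro s
    exact Complex.continuous_exp.comp (by continuity)
  -- integrability of the two pieces, for any shift s
  have hIntA : ∀ s : ℝ, Integrable (fun u => f u * ((starRingEnd ℂ) (g (u - s)) *
      Complex.exp (c * ((u - s : ℝ) : ℂ)))) := by
    intro s
    refine integrable_mul_bdd f hf ?_ (C := Cg) ?_
    · exact ((Complex.continuous_conj.comp (hgc.comp (by continuity))).mul (hexpc s))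
    · intro x
      rw [norm_mul, hexp]
      simpa using hCg' (x - s)
  have hIntB : ∀ s : ℝ, Integrable (fun u => f u * ((starRingEnd ℂ) (deriv (⇑g) (u - s)) *
      Complex.exp (c * ((u - s : ℝ) : ℂ)))) := by
    intro s
    refine integrable_mul_bdd f hf ?_ (C := Cd) ?_
    · exact ((Complex.continuous_conj.comp (hdc.comp (by continuity))).mul (hexpc s))
    · intro x
      rw [norm_mul, hexp]
      simpa using hCd' (x - s)
  have hc₂norm : ‖c₂‖ = 2 * π * |η| := by
    simp [hc₂, norm_mul, abs_of_nonneg pi_pos.le]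
  -- apply differentiation under the integral
  have key := hasDerivAt_integral_of_dominated_loc_of_deriv_le (μ := volume)
      (F := F) (F' := F') (x₀ := t)
      (bound := fun u => ‖f u‖ * (Cg * (2 * π * |η|) + Cd)) (s := Metric.ball t 1) (Metric.ball_mem_nhds t one_pos)
      ?_ ?_ ?_ ?_ ?_ ?_
  · obtain ⟨-, hder⟩ := key
    have heq : (fun t' : ℝ => STFT f (⇑g) t' η) =ᶠ[nhds t] fun t' => ∫ u, F t' u := by
      filter_upwards with t'
      simpa [hF, hc, mul_assoc] using stft_shift f (⇑g) t' η
    have hval : (∫ u, F' t u) = c₂ * STFT f (⇑g) t η - STFT f (deriv (⇑g)) t η := by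
      rw [hF']
      rw [integral_sub ((hIntA t).mul_const c₂) (hIntB t), integral_mul_const]
      have h1 : STFT f (⇑g) t η = ∫ u, f u * ((starRingEnd ℂ) (g (u - t)) *
          Complex.exp (c * ((u - t : ℝ) : ℂ))) := by
        simpa [hc, mul_assoc] using stft_shift f (⇑g) t η
      have h2 : STFT f (deriv (⇑g)) t η = ∫ u, f u * ((starRingEnd ℂ) (deriv (⇑g) (u - t)) *
          Complex.exp (c * ((u - t : ℝ) : ℂ))) := by
        simpa [hc, mul_assoc] using stft_shift f (deriv (⇑g)) t η
      rw [← h1, ← h2, mul_comm]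
    rw [← hval]
    exact hder.congr_of_eventuallyEq heq
  -- measurability of F t'
  · filter_upwards with t'
    exact (hIntA t').aestronglyMeasurable
  -- integrability of F t
  · exact hIntA t
  -- measurability of F' t
  · exact (((hIntA t).mul_const c₂).sub (hIntB t)).aestronglyMeasurable
  -- the bound
  · filter_upwards with u
    intro s _
    have h1 : ‖f u * ((starRingEnd ℂ) (g (u - s)) * Complex.exp (c * ((u - s : ℝ) : ℂ))) * c₂‖
        ≤ ‖f u‖ * Cg * (2 * π * |η|) := by
      rw [norm_mul, norm_mul, norm_mul, hexp, hc₂norm, mul_one]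
      have hb : ‖(starRingEnd ℂ) (g (u - s))‖ ≤ Cg := by
        rw [RCLike.norm_conj]; exact hCg' (u - s)
      exact mul_le_mul_of_nonneg_right
        (mul_le_mul_of_nonneg_left hb (norm_nonneg _)) (by positivity)
    have h2 : ‖f u * ((starRingEnd ℂ) (deriv (⇑g) (u - s)) *
        Complex.exp (c * ((u - s : ℝ) : ℂ)))‖ ≤ ‖f u‖ * Cd := by
      rw [norm_mul, norm_mul, hexp, mul_one]
      have hb : ‖(starRingEnd ℂ) (deriv (⇑g) (u - s))‖ ≤ Cd := by
        rw [RCLike.norm_conj]; exact hCd' (u - s)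
      exact mul_le_mul_of_nonneg_left hb (norm_nonneg _)
    calc ‖F' s u‖ ≤ ‖f u * ((starRingEnd ℂ) (g (u - s)) *
            Complex.exp (c * ((u - s : ℝ) : ℂ))) * c₂‖
          + ‖f u * ((starRingEnd ℂ) (deriv (⇑g) (u - s)) *
            Complex.exp (c * ((u - s : ℝ) : ℂ)))‖ := norm_sub_le _ _
      _ ≤ ‖f u‖ * Cg * (2 * π * |η|) + ‖f u‖ * Cd := add_le_add h1 h2
      _ = ‖f u‖ * (Cg * (2 * π * |η|) + Cd) := by ring
  -- bound integrable
  · exact hf.norm.mul_const _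
  -- differentiability
  · filter_upwards with u
    intro s _
    have h1 : HasDerivAt (fun s : ℝ => u - s) (-1 : ℝ) s := by
      simpa using (hasDerivAt_id s).const_sub u
    have hgd : HasDerivAt (fun s : ℝ => g (u - s)) ((-1 : ℝ) • deriv (⇑g) (u - s)) s := by
      have := HasDerivAt.scomp (𝕜' := ℝ) s
        ((g.differentiable (u - s)).hasDerivAt) h1
      exact this
    have hgc2 : HasDerivAt (fun s : ℝ => (starRingEnd ℂ) (g (u - s)))
        ((starRingEnd ℂ) ((-1 : ℝ) • deriv (⇑g) (u - s))) s := by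
      exact hgd.star
    have h0 : HasDerivAt (fun s : ℝ => ((u - s : ℝ) : ℂ)) (-1 : ℂ) s := by
      simpa using h1.ofReal_comp
    have he : HasDerivAt (fun s : ℝ => Complex.exp (c * ((u - s : ℝ) : ℂ)))
        (Complex.exp (c * ((u - s : ℝ) : ℂ)) * (c * (-1))) s :=
      (h0.const_mul c).cexp
    have hprod := (hgc2.mul he).const_mul (f u)
    convert hprod using 1
    show f u * ((starRingEnd ℂ) (g (u - s)) * Complex.exp (c * ((u - s : ℝ) : ℂ))) * c₂
      - f u * ((starRingEnd ℂ) (deriv (⇑g) (u - s)) * Complex.exp (c * ((u - s : ℝ) : ℂ))) = _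
    rw [hc, hc₂]
    simp only [neg_smul, one_smul, map_neg]
    ring
    · rfl
    · rfl
end

section
/- Let f ∈ L¹(ℝ, ℂ) and let g : ℝ → ℂ be a Schwartz function. Then at every point (t,η) with V_f^g(t,η) ≠ 0, the complex reassignment operators admit the closed forms ω̃_f(t,η) = η − (1/(2πi)) · V_f^{g'}(t,η)/V_f^g(t,η) and τ̃_f(t,η) = t + V_f^{tg}(t,η)/V_f^g(t,η). -/
open MeasureTheory Real

namespace ReassignAux

noncomputable def ker (η τ : ℝ) : ℂ :=
  Complex.exp (-2 * (π : ℂ) * Complex.I * (η : ℂ) * (τ : ℂ))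

lemma norm_ker (η τ : ℝ) : ‖ker η τ‖ = 1 := by
  have : (-2 * (π : ℂ) * Complex.I * (η : ℂ) * (τ : ℂ)).re = 0 := by
    simp [Complex.mul_re, Complex.mul_im]
  simp [ker, Complex.norm_exp, this]

lemma continuous_ker (η : ℝ) : Continuous (fun τ : ℝ => ker η τ) := by
  unfold ker; fun_prop

lemma ker_hasDerivAt (η τ : ℝ) :
    HasDerivAt (fun η' : ℝ => ker η' τ)
      (-2 * (π : ℂ) * Complex.I * (τ : ℂ) * ker η τ) η := by
  have h1 : HasDerivAt (fun η' : ℝ => ((η' : ℂ))) 1 η := by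
    simpa using (hasDerivAt_id η).ofReal_comp
  have h2 : HasDerivAt (fun η' : ℝ => (-2 * (π : ℂ) * Complex.I * (τ : ℂ)) * (η' : ℂ))
      (-2 * (π : ℂ) * Complex.I * (τ : ℂ)) η := by
    simpa using h1.const_mul (-2 * (π : ℂ) * Complex.I * (τ : ℂ))
  have h3 := h2.cexp
  have hfun : (fun η' : ℝ => Complex.exp (-2 * (π : ℂ) * Complex.I * (τ : ℂ) * (η' : ℂ)))
      = fun η' : ℝ => ker η' τ := by
    funext η'; unfold ker; ring_nf
  rw [hfun] at h3
  convert h3 using 1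
  unfold ker; ring_nf

/-- Integrability of `f · h · ker` for bounded continuous `h`. -/
lemma integrable_mul_ker {f h : ℝ → ℂ} (hf : Integrable f) (hh : Continuous h) {C : ℝ}
    (hC : ∀ u, ‖h u‖ ≤ C) (η : ℝ) :
    Integrable (fun u : ℝ => f u * h u * ker η u) := by
  apply Integrable.mono' (hf.norm.const_mul C)
    ((hf.aestronglyMeasurable.mul hh.aestronglyMeasurable).mul
      (continuous_ker η).aestronglyMeasurable)
  filter_upwards with u
  simp only [Pi.mul_apply]
  rw [norm_mul, norm_mul, norm_ker, mul_one]
  calc ‖f u‖ * ‖h u‖ ≤ ‖f u‖ * C := by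
        gcongr; exact hC u
    _ = C * ‖f u‖ := mul_comm _ _

/-- The STFT after change of variables `u = t + τ`, without the phase factor. -/
noncomputable def W (f g : ℝ → ℂ) (t η : ℝ) : ℂ :=
  ∫ u : ℝ, f u * (starRingEnd ℂ) (g (u - t)) * ker η u

lemma STFT_eq_phase_mul_W (f g : ℝ → ℂ) (t η : ℝ) :
    STFT f g t η = Complex.exp (2 * (π : ℂ) * Complex.I * (η : ℂ) * (t : ℂ)) * W f g t η := by
  unfold STFT W ker
  rw [← integral_const_mul]
  rw [← integral_add_left_eq_self (μ := volume)
    (fun u : ℝ => Complex.exp (2 * (π : ℂ) * Complex.I * (η : ℂ) * (t : ℂ)) *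
      (f u * (starRingEnd ℂ) (g (u - t)) *
        Complex.exp (-2 * (π : ℂ) * Complex.I * (η : ℂ) * (u : ℂ)))) t]
  congr 1 with τ
  have h : ((t : ℝ) + τ - t : ℝ) = τ := by ring
  rw [h]
  push_cast
  rw [show Complex.exp (2 * (π : ℂ) * Complex.I * (η : ℂ) * (t : ℂ)) *
      (f (t + τ) * (starRingEnd ℂ) (g τ) *
        Complex.exp (-2 * (π : ℂ) * Complex.I * (η : ℂ) * ((t : ℂ) + (τ : ℂ)))) =
      f (t + τ) * (starRingEnd ℂ) (g τ) *
      (Complex.exp (2 * (π : ℂ) * Complex.I * (η : ℂ) * (t : ℂ)) *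
        Complex.exp (-2 * (π : ℂ) * Complex.I * (η : ℂ) * ((t : ℂ) + (τ : ℂ)))) from by ring,
    ← Complex.exp_add]
  congr 2
  ring

end ReassignAux

open ReassignAux in
/-- closed forms for the complex reassignment operators
`ω̃_f(t,η) = η − (1/(2πi))·V_f^{g'}/V_f^g` and `τ̃_f(t,η) = t + V_f^{tg}/V_f^g`. -/
theorem reassignment_operators_closed_form (f : ℝ → ℂ) (hf : Integrable f)
    (g : SchwartzMap ℝ ℂ) (t η : ℝ) (hV : STFT f (⇑g) t η ≠ 0) :
    deriv (fun t' : ℝ => STFT f (⇑g) t' η) t / (2 * (π : ℂ) * Complex.I * STFT f (⇑g) t η)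
        = (η : ℂ) - (1 / (2 * (π : ℂ) * Complex.I)) *
            (STFT f (deriv (⇑g)) t η / STFT f (⇑g) t η) ∧
    (t : ℂ) - deriv (fun η' : ℝ => STFT f (⇑g) t η') η /
          (2 * (π : ℂ) * Complex.I * STFT f (⇑g) t η)
        = (t : ℂ) + STFT f (fun τ : ℝ => (τ : ℂ) * g τ) t η / STFT f (⇑g) t η := by
  have hpi : (2 * (π : ℂ) * Complex.I) ≠ 0 := by
    simp [Real.pi_ne_zero, Complex.I_ne_zero, Complex.ofReal_ne_zero]
  have hft : Integrable (fun τ : ℝ => f (t + τ)) := by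
    simpa using hf.comp_add_left t
  constructor
  · -- time derivative part
    set g' : SchwartzMap ℝ ℂ := SchwartzMap.derivCLM ℝ ℂ g with hg'def
    have hg'eq : deriv (⇑g) = ⇑g' := by
      funext x; exact (SchwartzMap.derivCLM_apply ℝ g x).symm
    -- derivative of W in t
    have hWder : HasDerivAt (fun t' : ℝ => W f (⇑g) t' η)
        (∫ u : ℝ, f u * (-(starRingEnd ℂ) (g' (u - t))) * ker η u) t := by
      have hcont : ∀ t' : ℝ, Continuous fun u : ℝ => (starRingEnd ℂ) (g (u - t')) :=
        fun t' => RCLike.continuous_conj.comp (g.continuous.comp (by fun_prop))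
      have hcont' : ∀ t' : ℝ, Continuous fun u : ℝ => -(starRingEnd ℂ) (g' (u - t')) :=
        fun t' => (RCLike.continuous_conj.comp (g'.continuous.comp (by fun_prop))).neg
      have key := hasDerivAt_integral_of_dominated_loc_of_deriv_le (μ := volume)
        (x₀ := t) (s := Metric.ball t 1)
        (F := fun t' u => f u * (starRingEnd ℂ) (g (u - t')) * ker η u)
        (F' := fun t' u => f u * (-(starRingEnd ℂ) (g' (u - t'))) * ker η u)
        (bound := fun u => SchwartzMap.seminorm ℝ 0 0 g' * ‖f u‖)
        (Metric.ball_mem_nhds t one_pos)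
        (Filter.Eventually.of_forall fun t' =>
          ((hf.aestronglyMeasurable.mul (hcont t').aestronglyMeasurable).mul
            (continuous_ker η).aestronglyMeasurable))
        (integrable_mul_ker hf (hcont t)
          (fun u => by simpa [RCLike.norm_conj] using SchwartzMap.norm_le_seminorm ℝ g (u - t)) η)
        ((hf.aestronglyMeasurable.mul (hcont' t).aestronglyMeasurable).mul
          (continuous_ker η).aestronglyMeasurable)
        (Filter.Eventually.of_forall fun u t' _ => by
          rw [norm_mul, norm_mul, norm_ker, mul_one]
          calc ‖f u‖ * ‖-(starRingEnd ℂ) (g' (u - t'))‖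
              ≤ ‖f u‖ * SchwartzMap.seminorm ℝ 0 0 g' := by
                gcongr
                simpa [RCLike.norm_conj] using SchwartzMap.norm_le_seminorm ℝ g' (u - t')
            _ = SchwartzMap.seminorm ℝ 0 0 g' * ‖f u‖ := mul_comm _ _)
        (hf.norm.const_mul _)
        (Filter.Eventually.of_forall fun u t' _ => by
          have hg : HasDerivAt (fun t'' : ℝ => g (u - t'')) (-(g' (u - t'))) t' := by
            have h1 : HasDerivAt (fun t'' : ℝ => u - t'') (-1 : ℝ) t' := by
              simpa using (hasDerivAt_id t').const_sub u
            have h2 : HasDerivAt (⇑g) (g' (u - t')) (u - t') := by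
              have h3 := (g.differentiable.differentiableAt (x := u - t')).hasDerivAt
              rwa [hg'eq] at h3
            have h4 := HasDerivAt.scomp (h := fun t'' : ℝ => u - t'') (x := t') h2 h1
            have h5 : ((-1 : ℝ) • g' (u - t')) = -(g' (u - t')) := by
              rw [neg_smul, one_smul]
            rw [← h5]
            exact h4
          have hgc : HasDerivAt (fun t'' : ℝ => (starRingEnd ℂ) (g (u - t'')))
              (-(starRingEnd ℂ) (g' (u - t'))) t' := by
            have h6 := hg.star
            simp only [star_neg] at h6
            simp only [starRingEnd_apply]
            exact h6
          exact (hgc.const_mul (f u)).mul_const (ker η u))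
      exact key.2
    -- derivative of STFT in t
    have hph : ∀ t' : ℝ, HasDerivAt
        (fun t'' : ℝ => Complex.exp (2 * (π : ℂ) * Complex.I * (η : ℂ) * (t'' : ℂ)))
        (2 * (π : ℂ) * Complex.I * (η : ℂ) *
          Complex.exp (2 * (π : ℂ) * Complex.I * (η : ℂ) * (t' : ℂ))) t' := by
      intro t'
      have h1 : HasDerivAt (fun t'' : ℝ => ((t'' : ℂ))) 1 t' := by
        simpa using (hasDerivAt_id t').ofReal_comp
      have h2 := (h1.const_mul (2 * (π : ℂ) * Complex.I * (η : ℂ))).cexp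
      simpa [mul_comm] using h2
    have hVder : HasDerivAt (fun t' : ℝ => STFT f (⇑g) t' η)
        (2 * (π : ℂ) * Complex.I * (η : ℂ) * STFT f (⇑g) t η -
          STFT f (⇑g') t η) t := by
      have heq : (fun t' : ℝ => STFT f (⇑g) t' η) = fun t' : ℝ =>
          Complex.exp (2 * (π : ℂ) * Complex.I * (η : ℂ) * (t' : ℂ)) * W f (⇑g) t' η := by
        funext t'; exact STFT_eq_phase_mul_W f (⇑g) t' η
      rw [heq]
      have := (hph t).mul hWder
      refine this.congr_deriv ?_
      have hW' : (∫ u : ℝ, f u * (-(starRingEnd ℂ) (g' (u - t))) * ker η u)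
          = -W f (⇑g') t η := by
        rw [show -W f (⇑g') t η = ∫ u : ℝ, -(f u * (starRingEnd ℂ) (g' (u - t)) * ker η u) from
          (integral_neg _).symm]
        congr 1 with u
        ring
      rw [hW', STFT_eq_phase_mul_W f (⇑g) t η, STFT_eq_phase_mul_W f (⇑g') t η]
      ring
    rw [hg'eq, hVder.deriv]
    field_simp
  · -- frequency derivative part
    have hgb : ∀ τ, ‖(starRingEnd ℂ) (g τ)‖ ≤ SchwartzMap.seminorm ℝ 0 0 g := fun τ => by
      simpa [RCLike.norm_conj] using SchwartzMap.norm_le_seminorm ℝ g τ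
    have hcg : Continuous fun τ : ℝ => (starRingEnd ℂ) (g τ) :=
      RCLike.continuous_conj.comp g.continuous
    have htg : ∀ τ : ℝ, ‖(τ : ℂ) * g τ‖ ≤ SchwartzMap.seminorm ℝ 1 0 g := fun τ => by
      have := SchwartzMap.le_seminorm ℝ 1 0 g τ
      simpa [norm_mul, Complex.norm_real, pow_one, norm_iteratedFDeriv_zero] using this
    have key := hasDerivAt_integral_of_dominated_loc_of_deriv_le (μ := volume)
      (x₀ := η) (s := Metric.ball η 1)
      (F := fun η' τ => f (t + τ) * (starRingEnd ℂ) (g τ) * ker η' τ)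
      (F' := fun η' τ => -2 * (π : ℂ) * Complex.I *
        (f (t + τ) * ((τ : ℂ) * (starRingEnd ℂ) (g τ))) * ker η' τ)
      (bound := fun τ => (2 * π * SchwartzMap.seminorm ℝ 1 0 g) * ‖f (t + τ)‖)
      (Metric.ball_mem_nhds η one_pos)
      (Filter.Eventually.of_forall fun η' =>
        ((hft.aestronglyMeasurable.mul hcg.aestronglyMeasurable).mul
          (continuous_ker η').aestronglyMeasurable))
      (integrable_mul_ker hft hcg hgb η)
      (AEStronglyMeasurable.congr
        (((hft.aestronglyMeasurable.mul
          ((Complex.continuous_ofReal.mul hcg).aestronglyMeasurable)).mul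
          (continuous_ker η).aestronglyMeasurable).const_mul (-2 * (π : ℂ) * Complex.I))
        (Filter.EventuallyEq.of_eq (by
          funext τ; simp only [Pi.mul_apply]; ring)))
      (Filter.Eventually.of_forall fun τ η' _ => by
        rw [norm_mul, norm_ker, mul_one, norm_mul]
        have h1 : ‖(-2 : ℂ) * (π : ℂ) * Complex.I‖ = 2 * π := by
          simp [norm_mul, abs_of_nonneg Real.pi_nonneg]
        rw [h1, norm_mul, mul_comm (2 * π)]
        have h2 : ‖(τ : ℂ) * (starRingEnd ℂ) (g τ)‖ ≤ SchwartzMap.seminorm ℝ 1 0 g := by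
          have := htg τ
          simpa [norm_mul, RCLike.norm_conj] using this
        calc ‖f (t + τ)‖ * ‖(τ : ℂ) * (starRingEnd ℂ) (g τ)‖ * (2 * π)
            ≤ ‖f (t + τ)‖ * SchwartzMap.seminorm ℝ 1 0 g * (2 * π) := by
              gcongr
          _ = 2 * π * SchwartzMap.seminorm ℝ 1 0 g * ‖f (t + τ)‖ := by ring)
      ((hft.norm.const_mul _))
      (Filter.Eventually.of_forall fun τ η' _ => by
        have := ((ker_hasDerivAt η' τ).const_mul (f (t + τ) * (starRingEnd ℂ) (g τ)))
        refine this.congr_deriv ?_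
        ring)
    have hder : deriv (fun η' : ℝ => STFT f (⇑g) t η') η
        = -(2 * (π : ℂ) * Complex.I) * STFT f (fun τ : ℝ => (τ : ℂ) * g τ) t η := by
      have h1 : (fun η' : ℝ => STFT f (⇑g) t η') = fun η' : ℝ =>
          ∫ τ : ℝ, f (t + τ) * (starRingEnd ℂ) (g τ) * ker η' τ := rfl
      rw [h1, key.2.deriv]
      rw [show STFT f (fun τ : ℝ => (τ : ℂ) * g τ) t η
          = ∫ τ : ℝ, f (t + τ) * (starRingEnd ℂ) ((τ : ℂ) * g τ) * ker η τ from rfl]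
      rw [← integral_const_mul]
      congr 1 with τ
      rw [map_mul]
      have : (starRingEnd ℂ) ((τ : ℝ) : ℂ) = ((τ : ℝ) : ℂ) := Complex.conj_ofReal τ
      rw [this]
      ring
    rw [hder]
    field_simp
    ring
end

section
/- Let P(τ) = Σ_{k=0}^N c_k τ^k/k! be a complex polynomial of degree at most N ≥ 1 whose real part is bounded above on ℝ, set f(τ) = exp(P(τ)), and let g : ℝ → ℂ be a Schwartz function. Then for every fixed η ∈ ℝ, the function t ↦ V_f^g(t,η) is differentiable at every t ∈ ℝ with derivative ∂_t V_f^g(t,η) = Σ_{k=1}^N (P^{(k)}(t)/(k−1)!) · V_f^{t^{k−1} g}(t,η). -/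
open MeasureTheory Real

/-- A polynomial of degree at most `N` is bounded by `C * (1 + ‖z‖)^N`. -/
lemma polyBound (Q : Polynomial ℂ) (N : ℕ) (hQ : Q.natDegree ≤ N) :
    ∃ C : ℝ, 0 ≤ C ∧ ∀ z : ℂ, ‖Q.eval z‖ ≤ C * (1 + ‖z‖) ^ N := by
  refine ⟨∑ j ∈ Finset.range (N + 1), ‖Q.coeff j‖,
    Finset.sum_nonneg fun _ _ => norm_nonneg _, fun z => ?_⟩
  rw [Polynomial.eval_eq_sum_range' (Nat.lt_succ_of_le hQ)]
  calc ‖∑ j ∈ Finset.range (N + 1), Q.coeff j * z ^ j‖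
      ≤ ∑ j ∈ Finset.range (N + 1), ‖Q.coeff j * z ^ j‖ := norm_sum_le _ _
    _ ≤ ∑ j ∈ Finset.range (N + 1), ‖Q.coeff j‖ * (1 + ‖z‖) ^ N := by
        refine Finset.sum_le_sum fun j hj => ?_
        rw [norm_mul, norm_pow]
        refine mul_le_mul_of_nonneg_left ?_ (norm_nonneg _)
        calc ‖z‖ ^ j ≤ (1 + ‖z‖) ^ j := by
              refine pow_le_pow_left₀ (norm_nonneg _) (by linarith [norm_nonneg z]) _
          _ ≤ (1 + ‖z‖) ^ N := by
              refine pow_le_pow_right₀ (by linarith [norm_nonneg z]) ?_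
              exact Nat.lt_succ_iff.mp (Finset.mem_range.mp hj)
    _ = (∑ j ∈ Finset.range (N + 1), ‖Q.coeff j‖) * (1 + ‖z‖) ^ N :=
        (Finset.sum_mul _ _ _).symm

/-- Taylor expansion of the derivative of a polynomial. -/
lemma taylorDeriv (P : Polynomial ℂ) (N : ℕ) (hN : 1 ≤ N) (hdeg : P.natDegree ≤ N)
    (x y : ℂ) :
    (Polynomial.derivative P).eval (x + y) =
      ∑ k ∈ Finset.Icc 1 N,
        ((Polynomial.derivative^[k] P).eval x / (Nat.factorial (k - 1) : ℂ)) * y ^ (k - 1) := by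
  set Q := Polynomial.derivative P with hQdef
  have hQdeg : (Polynomial.taylor x Q).natDegree < N := by
    rw [Polynomial.natDegree_taylor]
    have h1 : Q.natDegree ≤ N - 1 :=
      (Polynomial.natDegree_derivative_le P).trans (Nat.sub_le_sub_right hdeg 1)
    omega
  have hL : Q.eval (x + y) = ∑ n ∈ Finset.range N, (Polynomial.hasseDeriv n Q).eval x * y ^ n := by
    rw [show x + y = y + x by ring, ← Polynomial.taylor_eval,
      Polynomial.eval_eq_sum_range' hQdeg]
    exact Finset.sum_congr rfl fun n _ => by rw [Polynomial.taylor_coeff]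
  rw [hL, show Finset.Icc 1 N = Finset.Ico 1 (N + 1) by rw [Finset.Ico_add_one_right_eq_Icc],
    Finset.sum_Ico_eq_sum_range, show N + 1 - 1 = N by omega]
  refine Finset.sum_congr rfl fun n _ => ?_
  have hhd : (Nat.factorial n : ℂ) * (Polynomial.hasseDeriv n Q).eval x
      = (Polynomial.derivative^[n] Q).eval x := by
    have := congrFun (Polynomial.factorial_smul_hasseDeriv (R := ℂ) n) Q
    have h2 := congrArg (Polynomial.eval x) this
    simpa [Polynomial.eval_smul, nsmul_eq_mul] using h2
  have hfac : (Nat.factorial n : ℂ) ≠ 0 := Nat.cast_ne_zero.mpr (Nat.factorial_ne_zero n)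
  have h3 : (Polynomial.hasseDeriv n Q).eval x
      = (Polynomial.derivative^[n] Q).eval x / (Nat.factorial n : ℂ) := by
    field_simp [← hhd]
    rw [← hhd]; ring
  rw [h3]
  have h4 : Polynomial.derivative^[n] Q = Polynomial.derivative^[1 + n] P := by
    rw [hQdef, add_comm, Function.iterate_succ_apply]
  rw [h4]
  simp

/-- for `f = exp ∘ P` with `P` a polynomial of degree at most `N`
whose real part is bounded above on `ℝ`,
`∂_t V_f^g(t,η) = Σ_{k=1}^N (P^{(k)}(t)/(k−1)!) · V_f^{t^{k−1} g}(t,η)`. -/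
theorem stft_deriv_time_poly_exp (N : ℕ) (hN : 1 ≤ N) (P : Polynomial ℂ)
    (hdeg : P.natDegree ≤ N)
    (hbd : ∃ M : ℝ, ∀ τ : ℝ, (P.eval (τ : ℂ)).re ≤ M)
    (f : ℝ → ℂ) (hf : f = fun τ : ℝ => Complex.exp (P.eval (τ : ℂ)))
    (g : SchwartzMap ℝ ℂ) (η : ℝ) :
    ∀ t : ℝ,
      HasDerivAt (fun t' : ℝ => STFT f (⇑g) t' η)
        (∑ k ∈ Finset.Icc 1 N,
          ((Polynomial.derivative^[k] P).eval (t : ℂ) / (Nat.factorial (k - 1) : ℂ)) *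
            STFT f (fun τ : ℝ => (τ : ℂ) ^ (k - 1) * g τ) t η) t := by
  intro t
  obtain ⟨M, hM⟩ := hbd
  obtain ⟨C, hC0, hC⟩ := polyBound (Polynomial.derivative P) N
    ((Polynomial.natDegree_derivative_le P).trans (by omega))
  set e : ℝ → ℂ := fun τ => Complex.exp (-2 * (π : ℂ) * Complex.I * (η : ℂ) * (τ : ℂ)) with he
  have hnorme : ∀ τ : ℝ, ‖e τ‖ = 1 := by
    intro τ
    have h : (-2 * (π : ℂ) * Complex.I * (η : ℂ) * (τ : ℂ))
        = ((-2 * π * η * τ : ℝ) : ℂ) * Complex.I := by push_cast; ring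
    rw [he]
    simp only [h, Complex.norm_exp_ofReal_mul_I]
  have hnormf : ∀ s : ℝ, ‖f s‖ ≤ Real.exp M := by
    intro s
    rw [hf]
    simp only [Complex.norm_exp]
    exact Real.exp_le_exp.2 (hM s)
  have hfc : Continuous f := by
    rw [hf]; exact Complex.continuous_exp.comp (P.continuous.comp Complex.continuous_ofReal)
  have hec : Continuous e := by
    rw [he]; exact Complex.continuous_exp.comp (by fun_prop)
  -- the integrand and its t-derivative
  set F : ℝ → ℝ → ℂ := fun t' τ => f (t' + τ) * (starRingEnd ℂ) (g τ) * e τ with hF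
  set F' : ℝ → ℝ → ℂ := fun t' τ =>
    (Polynomial.derivative P).eval (((t' + τ : ℝ) : ℂ)) * f (t' + τ)
      * (starRingEnd ℂ) (g τ) * e τ with hF'
  have hderiv : ∀ (t' τ : ℝ), HasDerivAt (fun s => F s τ) (F' t' τ) t' := by
    intro t' τ
    have h0 : HasDerivAt (fun s : ℝ => f (s + τ))
        ((Polynomial.derivative P).eval (((t' + τ : ℝ) : ℂ)) * f (t' + τ)) t' := by
      rw [hf]
      have h1 : HasDerivAt (fun y : ℝ => Complex.exp (P.eval (y : ℂ)))
          (Complex.exp (P.eval (((t' + τ : ℝ) : ℂ)))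
            * (Polynomial.derivative P).eval (((t' + τ : ℝ) : ℂ))) (t' + τ) :=
        ((P.hasDerivAt _).comp_ofReal).cexp
      have h2 : HasDerivAt (fun s : ℝ => s + τ) 1 t' := (hasDerivAt_id t').add_const τ
      have h3 := HasDerivAt.scomp_of_eq t' h1 h2 rfl
      simp only [Function.comp_def, one_smul, smul_eq_mul, one_mul] at h3
      simpa [mul_comm] using h3
    exact (h0.mul_const _).mul_const _
  have hgcont : Continuous fun τ : ℝ => (starRingEnd ℂ) (g τ) :=
    RCLike.continuous_conj.comp g.continuous
  have hcontF : ∀ t' : ℝ, Continuous (F t') := by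
    intro t'
    exact ((hfc.comp (by fun_prop)).mul hgcont).mul hec
  have hcontF' : Continuous (F' t) := by
    refine (((?_ : Continuous fun τ : ℝ => (Polynomial.derivative P).eval (((t + τ : ℝ) : ℂ))).mul
      (hfc.comp (by fun_prop))).mul hgcont).mul hec
    exact (Polynomial.derivative P).continuous.comp (by fun_prop)
  have hnormF : ∀ (t' τ : ℝ), ‖F t' τ‖ = ‖f (t' + τ)‖ * ‖g τ‖ := by
    intro t' τ
    simp only [hF, norm_mul, hnorme τ, mul_one, RCLike.norm_conj]
  -- integrability of the bound
  have hb_int : Integrable (fun τ : ℝ => (1 + ‖τ‖) ^ N * ‖g τ‖) (volume : Measure ℝ) := by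
    have hEq : (fun τ : ℝ => (1 + ‖τ‖) ^ N * ‖g τ‖)
        = fun τ : ℝ => ∑ j ∈ Finset.range (N + 1),
            (N.choose j : ℝ) * (‖τ‖ ^ j * ‖g τ‖) := by
      funext τ
      rw [add_comm (1 : ℝ), add_pow, Finset.sum_mul]
      exact Finset.sum_congr rfl fun j _ => by ring
    rw [hEq]
    exact integrable_finset_sum _ fun j _ => ((g.integrable_pow_mul volume j).const_mul _)
  set bound : ℝ → ℝ := fun τ =>
    Real.exp M * (C * (2 + |t|) ^ N) * ((1 + ‖τ‖) ^ N * ‖g τ‖) with hbound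
  have hbound_int : Integrable bound (volume : Measure ℝ) := hb_int.const_mul _
  have h_bound : ∀ τ : ℝ, ∀ t' ∈ Metric.ball t 1, ‖F' t' τ‖ ≤ bound τ := by
    intro τ t' ht'
    have ht'abs : |t'| ≤ |t| + 1 := by
      have := Metric.mem_ball.mp ht'
      rw [Real.dist_eq] at this
      cases' abs_cases (t' - t) with h h <;> cases' abs_cases t' with h2 h2 <;>
        cases' abs_cases t with h3 h3 <;> linarith
    have hnormF' : ‖F' t' τ‖ = ‖(Polynomial.derivative P).eval (((t' + τ : ℝ) : ℂ))‖
        * ‖f (t' + τ)‖ * ‖g τ‖ := by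
      simp only [hF', norm_mul, hnorme τ, mul_one, RCLike.norm_conj]
    rw [hnormF']
    have h1 : ‖(Polynomial.derivative P).eval (((t' + τ : ℝ) : ℂ))‖
        ≤ C * ((2 + |t|) ^ N * (1 + ‖τ‖) ^ N) := by
      refine (hC _).trans ?_
      rw [← mul_pow]
      refine mul_le_mul_of_nonneg_left (pow_le_pow_left₀ ?_ ?_ N) hC0
      · positivity
      · rw [Complex.norm_real, Real.norm_eq_abs]
        have h4 : |t' + τ| ≤ |t'| + |τ| := abs_add_le _ _
        have h5 : (0:ℝ) ≤ |τ| := abs_nonneg _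
        have h6 : (0:ℝ) ≤ |t| := abs_nonneg _
        have : ‖τ‖ = |τ| := rfl
        rw [this]
        nlinarith
    calc ‖(Polynomial.derivative P).eval (((t' + τ : ℝ) : ℂ))‖ * ‖f (t' + τ)‖ * ‖g τ‖
        ≤ (C * ((2 + |t|) ^ N * (1 + ‖τ‖) ^ N)) * Real.exp M * ‖g τ‖ := by
          refine mul_le_mul_of_nonneg_right ?_ (norm_nonneg _)
          exact mul_le_mul h1 (hnormf _) (norm_nonneg _) (by positivity)
      _ = bound τ := by rw [hbound]; ring
  -- integrability of F t
  have hFt_int : Integrable (F t) (volume : Measure ℝ) := by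
    refine Integrable.mono' ((g.integrable (μ := volume)).norm.const_mul (Real.exp M))
      (hcontF t).aestronglyMeasurable (Filter.Eventually.of_forall fun τ => ?_)
    rw [hnormF]
    exact mul_le_mul_of_nonneg_right (hnormf _) (norm_nonneg _)
  -- apply differentiation under the integral
  have key := hasDerivAt_integral_of_dominated_loc_of_deriv_le
    (F := F) (F' := F') (x₀ := t) (bound := bound) (s := Metric.ball t 1) (Metric.ball_mem_nhds t one_pos)
    (Filter.Eventually.of_forall fun t' => (hcontF t').aestronglyMeasurable)
    hFt_int hcontF'.aestronglyMeasurable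
    (Filter.Eventually.of_forall fun τ => h_bound τ) hbound_int
    (Filter.Eventually.of_forall fun τ t' _ => hderiv t' τ)
  obtain ⟨-, hd⟩ := key
  -- rewrite the derivative integral as the sum of STFTs
  have hintk : ∀ k : ℕ, Integrable
      (fun τ : ℝ => ((τ : ℂ)) ^ (k - 1) * (f (t + τ) * (starRingEnd ℂ) (g τ) * e τ))
      (volume : Measure ℝ) := by
    intro k
    refine Integrable.mono' ((g.integrable_pow_mul volume (k - 1)).const_mul (Real.exp M))
      (Continuous.aestronglyMeasurable (by exact (Complex.continuous_ofReal.pow _).mul (hcontF t)))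
      (Filter.Eventually.of_forall fun τ => ?_)
    rw [norm_mul, norm_pow, hnormF]
    rw [Complex.norm_real]
    calc ‖τ‖ ^ (k - 1) * (‖f (t + τ)‖ * ‖g τ‖)
        ≤ ‖τ‖ ^ (k - 1) * (Real.exp M * ‖g τ‖) := by
          refine mul_le_mul_of_nonneg_left ?_ (by positivity)
          exact mul_le_mul_of_nonneg_right (hnormf _) (norm_nonneg _)
      _ = Real.exp M * (‖τ‖ ^ (k - 1) * ‖g τ‖) := by ring
  have hptw : ∀ τ : ℝ, F' t τ = ∑ k ∈ Finset.Icc 1 N,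
      ((Polynomial.derivative^[k] P).eval (t : ℂ) / (Nat.factorial (k - 1) : ℂ)) *
        (((τ : ℂ)) ^ (k - 1) * (f (t + τ) * (starRingEnd ℂ) (g τ) * e τ)) := by
    intro τ
    have h := taylorDeriv P N hN hdeg (t : ℂ) (τ : ℂ)
    have hcast : (((t + τ : ℝ)) : ℂ) = (t : ℂ) + (τ : ℂ) := by push_cast; ring
    simp only [hF']
    rw [hcast, h, Finset.sum_mul, Finset.sum_mul, Finset.sum_mul]
    exact Finset.sum_congr rfl fun k _ => by ring
  have hrw : (∫ τ : ℝ, F' t τ) = ∑ k ∈ Finset.Icc 1 N,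
      ((Polynomial.derivative^[k] P).eval (t : ℂ) / (Nat.factorial (k - 1) : ℂ)) *
        STFT f (fun τ : ℝ => (τ : ℂ) ^ (k - 1) * g τ) t η := by
    rw [MeasureTheory.integral_congr_ae (Filter.Eventually.of_forall hptw)]
    rw [MeasureTheory.integral_finset_sum _
      (fun k (_ : k ∈ Finset.Icc 1 N) => Integrable.const_mul (hintk k)
        ((Polynomial.derivative^[k] P).eval (t : ℂ) / (Nat.factorial (k - 1) : ℂ)))]
    refine Finset.sum_congr rfl fun k _ => ?_
    rw [MeasureTheory.integral_const_mul]
    congr 1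
    simp only [STFT]
    refine MeasureTheory.integral_congr_ae (Filter.Eventually.of_forall fun τ => ?_)
    simp only [map_mul, map_pow, Complex.conj_ofReal, he]
    ring
  rw [hrw] at hd
  exact hd
end

section
/- Let P(τ) = Σ_{k=0}^N c_k τ^k/k! be a complex polynomial of degree at most N ≥ 1 whose real part is bounded above on ℝ, set f(τ) = exp(P(τ)), let g : ℝ → ℂ be a Schwartz function, and define r_k(t) = P^{(k)}(t)/(2πi·(k−1)!) for 1 ≤ k ≤ N. Then at every point (t,η) with V_f^g(t,η) ≠ 0, the local complex instantaneous-frequency estimate satisfies ω̃_f(t,η) = Σ_{k=1}^N r_k(t) · V_f^{t^{k−1} g}(t,η)/V_f^g(t,η). -/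
open MeasureTheory Real

private lemma aux_pow_bound (c x : ℝ) (hc : 0 ≤ c) (i : ℕ) :
    (c + |x|) ^ i ≤ 2 ^ i * c ^ i + 2 ^ i * |x| ^ i := by
  have h1 : c + |x| ≤ 2 * max c |x| := by
    rcases le_total c |x| with h | h
    · rw [max_eq_right h]; linarith
    · rw [max_eq_left h]; linarith
  calc (c + |x|) ^ i ≤ (2 * max c |x|) ^ i := by
        apply pow_le_pow_left₀ (by positivity) h1
    _ = 2 ^ i * (max c |x|) ^ i := by rw [mul_pow]
    _ ≤ 2 ^ i * (c ^ i + |x| ^ i) := by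
        gcongr
        rcases le_total c |x| with h | h
        · rw [max_eq_right h]
          have : (0:ℝ) ≤ c ^ i := by positivity
          linarith
        · rw [max_eq_left h]
          have : (0:ℝ) ≤ |x| ^ i := by positivity
          linarith
    _ = _ := by ring

private lemma aux_integrable (g : SchwartzMap ℝ ℂ) (c : ℝ) (hc : 0 ≤ c) (i : ℕ) :
    Integrable (fun τ : ℝ => (c + |τ|) ^ i * ‖g τ‖) := by
  have hint : Integrable (fun τ : ℝ =>
      2 ^ i * c ^ i * ‖g τ‖ + 2 ^ i * (|τ| ^ i * ‖g τ‖)) := by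
    apply Integrable.add
    · exact (g.integrable (μ := volume)).norm.const_mul _
    · have := g.integrable_pow_mul (volume) i
      simp only [Real.norm_eq_abs] at this
      exact this.const_mul _
  apply hint.mono'
  · apply Continuous.aestronglyMeasurable
    exact ((continuous_const.add continuous_abs).pow i).mul g.continuous.norm
  · filter_upwards with τ
    have h1 : (c + |τ|) ^ i ≤ 2 ^ i * c ^ i + 2 ^ i * |τ| ^ i := aux_pow_bound c τ hc i
    have h2 : (0:ℝ) ≤ ‖g τ‖ := norm_nonneg _
    have h3 : (0:ℝ) ≤ (c + |τ|) ^ i := by positivity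
    rw [Real.norm_eq_abs, abs_of_nonneg (by positivity)]
    nlinarith

/-- for `f = exp ∘ P` with `P` a polynomial of degree at most `N`
whose real part is bounded above, where `r_k(t) = P^{(k)}(t)/(2πi·(k−1)!)`,
`ω̃_f(t,η) = Σ_{k=1}^N r_k(t) · V_f^{t^{k−1} g}(t,η)/V_f^g(t,η)`. -/
theorem if_estimate_poly_exp (N : ℕ) (hN : 1 ≤ N) (P : Polynomial ℂ)
    (hdeg : P.natDegree ≤ N)
    (hbd : ∃ M : ℝ, ∀ τ : ℝ, (P.eval (τ : ℂ)).re ≤ M)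
    (f : ℝ → ℂ) (hf : f = fun τ : ℝ => Complex.exp (P.eval (τ : ℂ)))
    (g : SchwartzMap ℝ ℂ) (r : ℕ → ℝ → ℂ)
    (hr : ∀ k : ℕ, 1 ≤ k → k ≤ N → ∀ t : ℝ,
      r k t = (Polynomial.derivative^[k] P).eval (t : ℂ) /
        (2 * (π : ℂ) * Complex.I * (Nat.factorial (k - 1) : ℂ)))
    (t η : ℝ) (hV : STFT f (⇑g) t η ≠ 0) :
    deriv (fun t' : ℝ => STFT f (⇑g) t' η) t / (2 * (π : ℂ) * Complex.I * STFT f (⇑g) t η)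
      = ∑ k ∈ Finset.Icc 1 N,
          r k t * (STFT f (fun τ : ℝ => (τ : ℂ) ^ (k - 1) * g τ) t η / STFT f (⇑g) t η) := by
  obtain ⟨M, hM⟩ := hbd
  set d := Polynomial.derivative P with hd
  set E : ℝ → ℂ := fun τ => Complex.exp (-2 * (π : ℂ) * Complex.I * (η : ℂ) * (τ : ℂ))
    with hE_def
  have hE : ∀ τ : ℝ, ‖E τ‖ = 1 := by
    intro τ
    rw [hE_def]
    rw [Complex.norm_exp]
    simp [Complex.mul_re, Complex.mul_im]
  set F : ℝ → ℝ → ℂ := fun s τ =>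
    Complex.exp (P.eval ((s : ℂ) + τ)) * (starRingEnd ℂ) (g τ) * E τ with hF_def
  set F' : ℝ → ℝ → ℂ := fun s τ => d.eval ((s : ℂ) + τ) * F s τ with hF'_def
  have hSTFT : ∀ s : ℝ, STFT f (⇑g) s η = ∫ τ : ℝ, F s τ := by
    intro s
    unfold STFT
    congr 1
    funext τ
    rw [hf]
    push_cast
    rfl
  have hnormF : ∀ s τ : ℝ, ‖F s τ‖ = Real.exp ((P.eval ((s:ℂ)+τ)).re) * ‖g τ‖ := by
    intro s τ
    rw [hF_def]
    simp only [norm_mul, hE, mul_one, RCLike.norm_conj]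
    rw [Complex.norm_exp]
  have hre : ∀ s τ : ℝ, (P.eval ((s:ℂ)+τ)).re ≤ M := by
    intro s τ
    have := hM (s + τ)
    push_cast at this
    exact this
  have hcontF : ∀ s : ℝ, Continuous (F s) := by
    intro s
    apply Continuous.mul
    apply Continuous.mul
    · exact Complex.continuous_exp.comp (P.continuous.comp
        (continuous_const.add Complex.continuous_ofReal))
    · exact Complex.continuous_conj.comp g.continuous
    · exact Complex.continuous_exp.comp (by continuity)
  have hcontF' : Continuous (F' t) := by
    apply Continuous.mul
    · exact d.continuous.comp (continuous_const.add Complex.continuous_ofReal)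
    · exact hcontF t
  -- integrability of F t
  have hFint : Integrable (F t) := by
    apply Integrable.mono' (((g.integrable (μ := volume)).norm).const_mul (Real.exp M))
      (hcontF t).aestronglyMeasurable
    filter_upwards with τ
    rw [hnormF]
    exact mul_le_mul_of_nonneg_right (Real.exp_le_exp.mpr (hre t τ)) (norm_nonneg _)
  -- the bound for the derivative
  set c : ℝ := |t| + 1 with hc_def
  have hc : 0 ≤ c := by positivity
  set bound : ℝ → ℝ := fun τ => ∑ i ∈ Finset.range (d.natDegree + 1),
    (Real.exp M * ‖d.coeff i‖) * ((c + |τ|) ^ i * ‖g τ‖) with hbound_def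
  have bound_int : Integrable bound := by
    apply integrable_finset_sum
    intro i _
    exact (aux_integrable g c hc i).const_mul _
  have h_bound : ∀ τ : ℝ, ∀ s ∈ Metric.ball t 1, ‖F' s τ‖ ≤ bound τ := by
    intro τ s hs
    have hz : ‖(s:ℂ) + (τ:ℂ)‖ ≤ c + |τ| := by
      have h1 : ((s:ℂ) + (τ:ℂ)) = ((s + τ : ℝ) : ℂ) := by push_cast; ring
      rw [h1, Complex.norm_real, Real.norm_eq_abs]
      have h2 : |s - t| < 1 := by
        rw [Metric.mem_ball, Real.dist_eq] at hs; exact hs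
      have h3 : |s| ≤ |t| + 1 := by
        have := abs_sub_abs_le_abs_sub s t
        linarith
      calc |s + τ| ≤ |s| + |τ| := abs_add_le _ _
        _ ≤ c + |τ| := by rw [hc_def]; linarith
    have hdeval : ‖d.eval ((s:ℂ) + τ)‖ ≤
        ∑ i ∈ Finset.range (d.natDegree + 1), ‖d.coeff i‖ * (c + |τ|) ^ i := by
      rw [Polynomial.eval_eq_sum_range' (Nat.lt_succ_self _) ((s:ℂ) + τ)]
      refine (norm_sum_le _ _).trans ?_
      apply Finset.sum_le_sum
      intro i _
      rw [norm_mul, norm_pow]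
      gcongr
    have hFn : ‖F s τ‖ ≤ Real.exp M * ‖g τ‖ := by
      rw [hnormF]
      exact mul_le_mul_of_nonneg_right (Real.exp_le_exp.mpr (hre s τ)) (norm_nonneg _)
    calc ‖F' s τ‖ = ‖d.eval ((s:ℂ) + τ)‖ * ‖F s τ‖ := by rw [hF'_def]; exact norm_mul _ _
      _ ≤ (∑ i ∈ Finset.range (d.natDegree + 1), ‖d.coeff i‖ * (c + |τ|) ^ i)
            * (Real.exp M * ‖g τ‖) := by
          apply mul_le_mul hdeval hFn (norm_nonneg _)
          apply Finset.sum_nonneg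
          intro i _
          positivity
      _ = bound τ := by
          rw [hbound_def, Finset.sum_mul]
          apply Finset.sum_congr rfl
          intro i _
          ring
  have h_diff : ∀ τ : ℝ, ∀ s ∈ Metric.ball t 1, HasDerivAt (fun u => F u τ) (F' s τ) s := by
    intro τ s _
    have hp : HasDerivAt (fun z : ℂ => P.eval (z + τ)) (d.eval ((s:ℂ) + τ)) (s:ℂ) := by
      have h0 := (P.hasDerivAt ((s:ℂ) + τ)).comp (s:ℂ)
        ((hasDerivAt_id (s:ℂ)).add_const (τ:ℂ))
      simp only [mul_one] at h0
      exact h0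
    have h1 := hp.cexp
    have h2 := (h1.comp_ofReal).mul_const ((starRingEnd ℂ) (g τ) * E τ)
    have h3 : (fun u : ℝ => F u τ)
        = fun u : ℝ => Complex.exp (P.eval ((u:ℂ) + τ)) * ((starRingEnd ℂ) (g τ) * E τ) := by
      funext u
      rw [hF_def]
      ring
    rw [h3]
    refine h2.congr_deriv ?_
    rw [hF'_def, hF_def]
    ring
  have main := hasDerivAt_integral_of_dominated_loc_of_deriv_le (μ := volume)
    (F := F) (F' := F') (x₀ := t) (bound := bound) (Metric.ball_mem_nhds t one_pos)
    (Filter.Eventually.of_forall fun s => (hcontF s).aestronglyMeasurable)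
    hFint hcontF'.aestronglyMeasurable
    (Filter.Eventually.of_forall fun τ => fun s hs => h_bound τ s hs)
    bound_int
    (Filter.Eventually.of_forall fun τ => fun s hs => h_diff τ s hs)
  have hderiv : deriv (fun t' : ℝ => STFT f (⇑g) t' η) t = ∫ τ : ℝ, F' t τ := by
    have heq : (fun t' : ℝ => STFT f (⇑g) t' η) = fun s => ∫ τ : ℝ, F s τ := by
      funext s; exact hSTFT s
    rw [heq]
    exact main.2.deriv
  -- Taylor expansion step
  set a : ℕ → ℂ := fun j => (Polynomial.derivative^[j+1] P).eval (t:ℂ) / (j.factorial : ℂ)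
    with ha_def
  have hdegd : d.natDegree < N := by
    have h1 : d.natDegree ≤ P.natDegree - 1 := P.natDegree_derivative_le
    have h2 : P.natDegree - 1 ≤ N - 1 := Nat.sub_le_sub_right hdeg 1
    have h3 : N - 1 < N := Nat.sub_lt (lt_of_lt_of_le Nat.one_pos hN) Nat.one_pos
    omega
  have hTaylor : ∀ τ : ℝ, d.eval ((t:ℂ) + τ) = ∑ j ∈ Finset.range N, a j * (τ:ℂ) ^ j := by
    intro τ
    have h1 : d.eval ((t:ℂ) + τ) = (Polynomial.taylor (t:ℂ) d).eval (τ:ℂ) := by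
      rw [Polynomial.taylor_eval]
      ring_nf
    rw [h1, Polynomial.eval_eq_sum_range' (n := N) (by rwa [Polynomial.natDegree_taylor]) (τ:ℂ)]
    apply Finset.sum_congr rfl
    intro j _
    congr 1
    rw [Polynomial.taylor_coeff]
    have h3 : (Polynomial.derivative^[j+1] P) = j.factorial • (Polynomial.hasseDeriv j d) := by
      rw [Function.iterate_succ_apply, ← hd, ← Polynomial.factorial_smul_hasseDeriv]
      rfl
    simp only [ha_def]
    rw [h3]
    simp only [Polynomial.eval_smul, nsmul_eq_mul]
    have hfac : ((j.factorial : ℂ)) ≠ 0 := by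
      exact_mod_cast Nat.cast_ne_zero.mpr (Nat.factorial_ne_zero j)
    field_simp
    rw [Polynomial.eval_natCast_mul, mul_comm]
  -- integrability of each term
  have hint_j : ∀ j : ℕ, Integrable (fun τ : ℝ => (τ:ℂ) ^ j * F t τ) := by
    intro j
    apply Integrable.mono' (((g.integrable_pow_mul (volume) j)).const_mul (Real.exp M))
    · exact ((Complex.continuous_ofReal.pow j).mul (hcontF t)).aestronglyMeasurable
    · filter_upwards with τ
      rw [norm_mul, norm_pow, Complex.norm_real, hnormF]
      have h1 : Real.exp ((P.eval ((t:ℂ)+τ)).re) ≤ Real.exp M := Real.exp_le_exp.mpr (hre t τ)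
      have h2 : (0:ℝ) ≤ ‖τ‖ ^ j := by positivity
      have h3 : (0:ℝ) ≤ ‖g τ‖ := norm_nonneg _
      calc ‖(τ:ℝ)‖ ^ j * (Real.exp ((P.eval ((t:ℂ)+τ)).re) * ‖g τ‖)
          ≤ ‖(τ:ℝ)‖ ^ j * (Real.exp M * ‖g τ‖) := by gcongr
        _ = Real.exp M * (‖(τ:ℝ)‖ ^ j * ‖g τ‖) := by ring
  have hsplit : (∫ τ : ℝ, F' t τ)
      = ∑ j ∈ Finset.range N, a j * ∫ τ : ℝ, (τ:ℂ) ^ j * F t τ := by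
    have h1 : (fun τ : ℝ => F' t τ)
        = fun τ : ℝ => ∑ j ∈ Finset.range N, a j * ((τ:ℂ) ^ j * F t τ) := by
      funext τ
      rw [hF'_def]
      simp only
      rw [hTaylor τ, Finset.sum_mul]
      apply Finset.sum_congr rfl
      intro j _
      ring
    rw [h1, integral_finset_sum]
    · apply Finset.sum_congr rfl
      intro j _
      exact integral_const_mul (a j) _
    · intro j _
      exact (hint_j j).const_mul _
  have hW : ∀ j : ℕ, (∫ τ : ℝ, (τ:ℂ) ^ j * F t τ)
      = STFT f (fun τ : ℝ => (τ : ℂ) ^ j * g τ) t η := by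
    intro j
    unfold STFT
    congr 1
    funext τ
    rw [hf, hF_def]
    simp only [map_mul, map_pow, Complex.conj_ofReal]
    push_cast
    ring
  have hderiv2 : deriv (fun t' : ℝ => STFT f (⇑g) t' η) t
      = ∑ j ∈ Finset.range N, a j * STFT f (fun τ : ℝ => (τ : ℂ) ^ j * g τ) t η := by
    rw [hderiv, hsplit]
    apply Finset.sum_congr rfl
    intro j _
    rw [hW j]
  rw [hderiv2]
  rw [← Finset.Ico_add_one_right_eq_Icc, Finset.sum_Ico_eq_sum_range]
  rw [Finset.sum_div]
  apply Finset.sum_congr rfl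
  intro j hj
  rw [Finset.mem_range] at hj
  rw [hr (1 + j) (by omega) (by omega) t]
  have hkm : 1 + j - 1 = j := by omega
  rw [hkm]
  rw [ha_def]
  simp only
  have hfac : ((j.factorial : ℂ)) ≠ 0 := Nat.cast_ne_zero.mpr (Nat.factorial_ne_zero j)
  have hpi : ((π : ℂ)) ≠ 0 := by
    exact_mod_cast Complex.ofReal_ne_zero.mpr Real.pi_ne_zero
  have hI : Complex.I ≠ 0 := Complex.I_ne_zero
  have h1j : Polynomial.derivative^[1 + j] P = Polynomial.derivative^[j + 1] P := by
    rw [Nat.add_comm]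
  rw [h1j]
  field_simp
end

section
/- Let f(τ) = A(τ)·exp(2πi·φ(τ)) be a Gaussian modulated linear chirp with log A(τ) = α₀ + α₁τ + (α₂/2)τ², φ(τ) = β₀ + β₁τ + (β₂/2)τ², real coefficients, and A bounded on ℝ; let g : ℝ → ℂ be a Schwartz function. Then at every point (t,η) with V_f^g(t,η) ≠ 0 one has ω̃_f(t,η) = Σ_{k=1}^{2} (α_k/(2πi) + β_k)·t^{k−1} + (α₂/(2πi) + β₂) · V_f^{tg}(t,η)/V_f^g(t,η). -/
open MeasureTheory Real

lemma alg_aux (a₁ a₂ b₁ b₂ : ℝ) (T V W : ℂ) (hV : V ≠ 0) :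
    ((((a₁:ℂ) + 2*(π:ℂ)*Complex.I*b₁) + ((a₂:ℂ) + 2*(π:ℂ)*Complex.I*b₂)*T)*V
        + ((a₂:ℂ) + 2*(π:ℂ)*Complex.I*b₂)*W) / (2*(π:ℂ)*Complex.I*V)
      = ((a₁:ℂ)/(2*(π:ℂ)*Complex.I) + (b₁:ℂ)) + ((a₂:ℂ)/(2*(π:ℂ)*Complex.I) + (b₂:ℂ))*T
        + ((a₂:ℂ)/(2*(π:ℂ)*Complex.I) + (b₂:ℂ))*(W/V) := by
  have hp : (2*(π:ℂ)*Complex.I) ≠ 0 :=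
    mul_ne_zero (mul_ne_zero two_ne_zero (Complex.ofReal_ne_zero.2 Real.pi_ne_zero))
      Complex.I_ne_zero
  field_simp

/-- for a Gaussian modulated linear chirp,
`ω̃_f(t,η) = Σ_{k=1}^{2} (α_k/(2πi) + β_k)·t^{k−1} + (α₂/(2πi) + β₂)·V_f^{tg}/V_f^g`. -/
theorem if_estimate_gaussian_chirp (α₀ α₁ α₂ β₀ β₁ β₂ : ℝ)
    (A : ℝ → ℝ) (hA : ∀ τ : ℝ, A τ = Real.exp (α₀ + α₁ * τ + α₂ / 2 * τ ^ 2))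
    (φ : ℝ → ℝ) (hφ : ∀ τ : ℝ, φ τ = β₀ + β₁ * τ + β₂ / 2 * τ ^ 2)
    (hbd : ∃ M : ℝ, ∀ τ : ℝ, A τ ≤ M)
    (f : ℝ → ℂ)
    (hf : ∀ τ : ℝ, f τ = (A τ : ℂ) * Complex.exp (2 * (π : ℂ) * Complex.I * (φ τ : ℂ)))
    (g : SchwartzMap ℝ ℂ) (t η : ℝ) (hV : STFT f (⇑g) t η ≠ 0) :
    deriv (fun t' : ℝ => STFT f (⇑g) t' η) t / (2 * (π : ℂ) * Complex.I * STFT f (⇑g) t η)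
      = ((α₁ : ℂ) / (2 * (π : ℂ) * Complex.I) + (β₁ : ℂ))
        + ((α₂ : ℂ) / (2 * (π : ℂ) * Complex.I) + (β₂ : ℂ)) * (t : ℂ)
        + ((α₂ : ℂ) / (2 * (π : ℂ) * Complex.I) + (β₂ : ℂ)) *
            (STFT f (fun τ : ℝ => (τ : ℂ) * g τ) t η / STFT f (⇑g) t η) := by
  obtain ⟨M, hM⟩ := hbd
  have hM0 : 0 < M := lt_of_lt_of_le (by rw [hA 0]; positivity) (hM 0)
  set c₁ : ℂ := (α₁ : ℂ) + 2 * π * Complex.I * β₁ with hc₁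
  set c₂ : ℂ := (α₂ : ℂ) + 2 * π * Complex.I * β₂ with hc₂
  -- norm of f
  have hnf : ∀ s : ℝ, ‖f s‖ ≤ M := by
    intro s
    rw [hf s, norm_mul, Complex.norm_exp]
    have : (2 * (π : ℂ) * Complex.I * (φ s : ℂ)).re = 0 := by
      simp [Complex.mul_re, Complex.mul_im]
    rw [this, Real.exp_zero, mul_one, Complex.norm_real, Real.norm_eq_abs,
      abs_of_pos (by rw [hA s]; positivity)]
    exact hM s
  -- f as an exponential
  have hfe : ∀ s : ℝ, f s =
      Complex.exp (((α₀ : ℂ) + 2 * π * Complex.I * β₀) + c₁ * s + c₂ / 2 * s ^ 2) := by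
    intro s
    rw [hf s, hA s, hφ s, Complex.ofReal_exp, ← Complex.exp_add]
    congr 1
    push_cast
    ring
  -- derivative of f
  have hfd : ∀ s : ℝ, HasDerivAt f ((c₁ + c₂ * s) * f s) s := by
    intro s
    have hs : HasDerivAt (fun s : ℝ => (s : ℂ)) 1 s := by
      simpa using (hasDerivAt_id s).ofReal_comp
    have ha : HasDerivAt (fun s : ℝ => (s : ℂ) ^ 2) (2 * (s : ℂ)) s := by
      simp only [pow_two]
      exact (hs.mul hs).congr_deriv (by ring)
    have h1 : HasDerivAt
        (fun s : ℝ => ((α₀ : ℂ) + 2 * π * Complex.I * β₀) + c₁ * s + c₂ / 2 * s ^ 2)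
        (c₁ + c₂ * s) s := by
      have := ((hs.const_mul c₁).const_add ((α₀ : ℂ) + 2 * π * Complex.I * β₀)).add
        (ha.const_mul (c₂ / 2))
      exact this.congr_deriv (by ring)
    have h2 := h1.cexp
    have h4 : HasDerivAt f
        (Complex.exp (((α₀ : ℂ) + 2 * π * Complex.I * β₀) + c₁ * s + c₂ / 2 * s ^ 2)
          * (c₁ + c₂ * s)) s :=
      h2.congr_of_eventuallyEq (Filter.Eventually.of_forall hfe)
    convert h4 using 1
    rw [hfe s]
    ring
  have hfc : Continuous f := continuous_iff_continuousAt.2 fun s => (hfd s).continuousAt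
  set e : ℝ → ℂ := fun τ => Complex.exp (-2 * (π : ℂ) * Complex.I * (η : ℂ) * (τ : ℂ)) with he
  have hec : Continuous e := by
    apply Complex.continuous_exp.comp
    continuity
  have hne : ∀ τ : ℝ, ‖e τ‖ = 1 := by
    intro τ
    rw [he]
    simp only []
    rw [Complex.norm_exp]
    have : (-2 * (π : ℂ) * Complex.I * (η : ℂ) * (τ : ℂ)).re = 0 := by
      simp [Complex.mul_re, Complex.mul_im]
    rw [this, Real.exp_zero]
  set F : ℝ → ℝ → ℂ := fun t' τ => f (t' + τ) * (starRingEnd ℂ) (g τ) * e τ with hF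
  set F' : ℝ → ℝ → ℂ :=
    fun t' τ => (c₁ + c₂ * (t' + τ)) * f (t' + τ) * (starRingEnd ℂ) (g τ) * e τ with hF'
  have hgc : Continuous fun τ : ℝ => (starRingEnd ℂ) (g τ) :=
    Complex.continuous_conj.comp g.continuous
  have hFc : ∀ t' : ℝ, Continuous (F t') := by
    intro t'
    exact ((hfc.comp (continuous_const.add continuous_id)).mul hgc).mul hec
  have hF'c : ∀ t' : ℝ, Continuous (F' t') := by
    intro t'
    apply Continuous.mul _ hec
    apply Continuous.mul _ hgc
    apply Continuous.mul _ (hfc.comp (continuous_const.add continuous_id))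
    continuity
  have hnormF : ∀ t' τ : ℝ, ‖F t' τ‖ = ‖f (t' + τ)‖ * ‖g τ‖ := by
    intro t' τ
    simp only [hF, norm_mul, hne τ, mul_one, RCLike.norm_conj]
  have hgint : Integrable (⇑g) (volume : Measure ℝ) := g.integrable
  have hgint1 : Integrable (fun τ : ℝ => |τ| * ‖g τ‖) (volume : Measure ℝ) := by
    simpa using g.integrable_pow_mul (volume : Measure ℝ) 1
  have hFint : ∀ t' : ℝ, Integrable (F t') (volume : Measure ℝ) := by
    intro t'
    apply Integrable.mono' (hgint.norm.const_mul M) (hFc t').aestronglyMeasurable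
    filter_upwards with τ
    rw [hnormF]
    exact mul_le_mul_of_nonneg_right (hnf _) (norm_nonneg _)
  set bound : ℝ → ℝ := fun τ =>
    M * (‖c₁‖ + ‖c₂‖ * (|t| + 1)) * ‖g τ‖ + M * ‖c₂‖ * (|τ| * ‖g τ‖) with hbnd
  have hbound_int : Integrable bound (volume : Measure ℝ) :=
    ((hgint.norm.const_mul _)).add (hgint1.const_mul _)
  have key := hasDerivAt_integral_of_dominated_loc_of_deriv_le (F := F) (F' := F')
    (x₀ := t) (bound := bound) (Metric.ball_mem_nhds t one_pos)
    (Filter.Eventually.of_forall fun x => (hFc x).aestronglyMeasurable)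
    (hFint t) (hF'c t).aestronglyMeasurable
    ?_ hbound_int ?_
  · obtain ⟨hintF', hder⟩ := key
    have hVd : STFT f (⇑g) t η = ∫ τ : ℝ, F t τ := rfl
    have hderSTFT : deriv (fun t' : ℝ => STFT f (⇑g) t' η) t = ∫ τ : ℝ, F' t τ := by
      have hfun : (fun t' : ℝ => STFT f (⇑g) t' η) = fun t' : ℝ => ∫ τ : ℝ, F t' τ := rfl
      rw [hfun]
      exact hder.deriv
    have hInt1 : Integrable (fun τ : ℝ => (c₁ + c₂ * t) * F t τ) (volume : Measure ℝ) :=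
      (hFint t).const_mul _
    have hInt2 : Integrable (fun τ : ℝ => c₂ * ((τ : ℂ) * F t τ)) (volume : Measure ℝ) := by
      apply Integrable.mono' ((hgint1.const_mul (‖c₂‖ * M)))
      · apply Continuous.aestronglyMeasurable
        exact continuous_const.mul ((Complex.continuous_ofReal.comp continuous_id).mul (hFc t))
      · filter_upwards with τ
        rw [norm_mul, norm_mul, hnormF, Complex.norm_real, Real.norm_eq_abs]
        calc ‖c₂‖ * (|τ| * (‖f (t + τ)‖ * ‖g τ‖))
            ≤ ‖c₂‖ * (|τ| * (M * ‖g τ‖)) := by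
              gcongr
              exact hnf _
          _ = ‖c₂‖ * M * (|τ| * ‖g τ‖) := by ring
    have hW : STFT f (fun τ : ℝ => (τ : ℂ) * g τ) t η = ∫ τ : ℝ, (τ : ℂ) * F t τ := by
      rw [STFT]
      congr 1
      funext τ
      simp only [hF, he, map_mul, Complex.conj_ofReal]
      ring
    have hsplit : (∫ τ : ℝ, F' t τ)
        = (c₁ + c₂ * t) * STFT f (⇑g) t η
          + c₂ * STFT f (fun τ : ℝ => (τ : ℂ) * g τ) t η := by
      have h1 : (fun τ : ℝ => F' t τ)
          = fun τ : ℝ => (c₁ + c₂ * t) * F t τ + c₂ * ((τ : ℂ) * F t τ) := by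
        funext τ
        simp only [hF, hF']
        ring
      rw [h1, integral_add hInt1 hInt2, integral_const_mul, integral_const_mul, hVd, hW]
    rw [hderSTFT, hsplit, hc₁, hc₂]
    exact alg_aux α₁ α₂ β₁ β₂ t _ _ hV
  · -- the bound
    filter_upwards with τ
    intro x hx
    have hx1 : |x| ≤ |t| + 1 := by
      have hd := Metric.mem_ball.1 hx
      rw [Real.dist_eq] at hd
      have h := abs_sub_abs_le_abs_sub x t
      linarith
    simp only [hF']
    rw [norm_mul, norm_mul, norm_mul, hne τ, mul_one, RCLike.norm_conj]
    have h1 : ‖c₁ + c₂ * ((x : ℂ) + (τ : ℂ))‖ ≤ ‖c₁‖ + ‖c₂‖ * ((|t| + 1) + |τ|) := by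
      refine (norm_add_le _ _).trans ?_
      gcongr
      rw [norm_mul]
      gcongr
      calc ‖(x : ℂ) + (τ : ℂ)‖ = |x + τ| := by
            rw [show (x : ℂ) + (τ : ℂ) = ((x + τ : ℝ) : ℂ) by push_cast; ring,
              Complex.norm_real, Real.norm_eq_abs]
        _ ≤ |x| + |τ| := abs_add_le _ _
        _ ≤ (|t| + 1) + |τ| := by linarith
    have h2 : ‖f (x + τ)‖ ≤ M := hnf _
    calc ‖c₁ + c₂ * ((x : ℂ) + (τ : ℂ))‖ * ‖f (x + τ)‖ * ‖g τ‖
        ≤ (‖c₁‖ + ‖c₂‖ * ((|t| + 1) + |τ|)) * M * ‖g τ‖ := by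
          have := mul_le_mul h1 h2 (norm_nonneg _) (by positivity)
          exact mul_le_mul_of_nonneg_right this (norm_nonneg _)
      _ = bound τ := by rw [hbnd]; ring
  · -- differentiability
    filter_upwards with τ
    intro x _
    have h' : HasDerivAt (fun x : ℝ => f (x + τ))
        ((c₁ + c₂ * ((x + τ : ℝ) : ℂ)) * f (x + τ)) x :=
      HasDerivAt.comp_add_const x τ (hfd (x + τ))
    have hmc := (h'.mul_const ((starRingEnd ℂ) (g τ))).mul_const (e τ)
    simp only [hF, hF']
    exact hmc.congr_deriv (by push_cast; ring)
end

section
/- Let f(τ) = A(τ)·exp(2πi·φ(τ)) be a Gaussian modulated linear chirp with log A(τ) = α₀ + α₁τ + (α₂/2)τ², φ(τ) = β₀ + β₁τ + (β₂/2)τ², real coefficients, and A bounded on ℝ; let g : ℝ → ℂ be a Schwartz function. Fix (t,η) with V_f^g(t,η) ≠ 0. Then the functions η ↦ ω̃_f(t,η) and η ↦ τ̃_f(t,η) are differentiable at η and ∂_η ω̃_f(t,η) = (α₂/(2πi) + β₂) · ∂_η τ̃_f(t,η). -/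
open MeasureTheory Real FourierTransform

set_option maxHeartbeats 1000000 in
/-- for a Gaussian modulated linear chirp, `η ↦ ωe_f(t,η)` and
`η ↦ τe_f(t,η)` are differentiable at `η` and
`∂_η ωe_f(t,η) = (α₂/(2πi) + β₂)·∂_η τe_f(t,η)`. -/
theorem deriv_reassignment_gaussian_chirp (α₀ α₁ α₂ β₀ β₁ β₂ : ℝ)
    (A : ℝ → ℝ) (hA : ∀ τ : ℝ, A τ = Real.exp (α₀ + α₁ * τ + α₂ / 2 * τ ^ 2))
    (φ : ℝ → ℝ) (hφ : ∀ τ : ℝ, φ τ = β₀ + β₁ * τ + β₂ / 2 * τ ^ 2)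
    (hbd : ∃ M : ℝ, ∀ τ : ℝ, A τ ≤ M)
    (f : ℝ → ℂ)
    (hf : ∀ τ : ℝ, f τ = (A τ : ℂ) * Complex.exp (2 * (π : ℂ) * Complex.I * (φ τ : ℂ)))
    (g : SchwartzMap ℝ ℂ) (t η : ℝ) (hV : STFT f (⇑g) t η ≠ 0)
    (ωe τe : ℝ → ℂ)
    (hω : ωe = fun η' : ℝ => deriv (fun t' : ℝ => STFT f (⇑g) t' η') t /
      (2 * (π : ℂ) * Complex.I * STFT f (⇑g) t η'))
    (hτ : τe = fun η' : ℝ => (t : ℂ) - deriv (fun η'' : ℝ => STFT f (⇑g) t η'') η' /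
      (2 * (π : ℂ) * Complex.I * STFT f (⇑g) t η')) :
    DifferentiableAt ℝ ωe η ∧ DifferentiableAt ℝ τe η ∧
      deriv ωe η = ((α₂ : ℂ) / (2 * (π : ℂ) * Complex.I) + (β₂ : ℂ)) * deriv τe η := by
  obtain ⟨M, hM⟩ := hbd
  set k : ℂ := (α₂ : ℂ) / (2 * (π : ℂ) * Complex.I) + (β₂ : ℂ) with hkdef
  set c₀ : ℂ := (α₀ : ℂ) + 2*π*Complex.I*β₀ with hc₀def
  set p₁ : ℂ := (α₁ : ℂ) + 2*π*Complex.I*β₁ with hp₁def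
  set p₂ : ℂ := (α₂ : ℂ)/2 + π*Complex.I*β₂ with hp₂def
  have h2πI : (2 * (π : ℂ) * Complex.I) ≠ 0 := by
    simp [Real.pi_ne_zero, Complex.I_ne_zero]
  have hk2 : 2 * p₂ = (2 * (π : ℂ) * Complex.I) * k := by
    rw [hp₂def, hkdef]
    field_simp
  -- f as a complex exponential of a quadratic
  have hfe : ∀ s : ℝ, f s = Complex.exp (c₀ + p₁*s + p₂*s^2) := by
    intro s
    rw [hf, hA, hφ, Complex.ofReal_exp, ← Complex.exp_add]
    congr 1
    push_cast
    ring
  have hfeq : f = fun s : ℝ => Complex.exp (c₀ + p₁*s + p₂*(s:ℂ)^2) := funext hfe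
  have hfc : Continuous f := by
    rw [hfeq]
    exact Complex.continuous_exp.comp (by continuity)
  have hMnn : 0 ≤ M := le_trans (by rw [hA]; positivity) (hM 0)
  have hMf : ∀ s : ℝ, ‖f s‖ ≤ M := by
    intro s
    rw [hf, norm_mul]
    have h1 : ‖Complex.exp (2 * (π : ℂ) * Complex.I * (φ s : ℂ))‖ = 1 := by
      rw [Complex.norm_exp]
      simp [mul_comm, mul_assoc]
    rw [h1, mul_one, Complex.norm_real, Real.norm_eq_abs,
      abs_of_nonneg (by rw [hA]; positivity)]
    exact hM s
  -- derivative of f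
  have hfderiv : ∀ s : ℝ, HasDerivAt f ((p₁ + 2*p₂*s) * f s) s := by
    intro s
    have h1 : HasDerivAt (fun s : ℝ => (s:ℂ)) 1 s := by
      simpa using (hasDerivAt_id s).ofReal_comp
    have ha : HasDerivAt (fun s : ℝ => p₁*(s:ℂ)) p₁ s := by
      simpa using h1.const_mul p₁
    have hsq : HasDerivAt (fun s : ℝ => ((s:ℂ))*((s:ℂ))) ((s:ℂ) + (s:ℂ)) s := by
      have h := h1.mul h1; simp only [one_mul, mul_one] at h; exact h
    have h2 : HasDerivAt (fun s : ℝ => c₀ + p₁*(s:ℂ) + p₂*(s:ℂ)^2) (p₁ + 2*p₂*s) s := by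
      have h4 := (ha.const_add c₀).add (hsq.const_mul p₂)
      simp only [← pow_two] at h4
      convert h4 using 1
      · rfl
      · rfl
      ring
    have h3 := h2.cexp
    rw [hfeq]
    convert h3 using 1
    ring
  -- integrability of monomials times the windowed signal
  have hint : ∀ n : ℕ, Integrable
      (fun τ : ℝ => ((τ:ℂ))^n * (f (t+τ) * (starRingEnd ℂ) (g τ))) := by
    intro n
    refine ((g.integrable_pow_mul volume n).const_mul M).mono ?_ ?_
    · exact ((Complex.continuous_ofReal.pow n).mul
        ((hfc.comp (continuous_const.add continuous_id)).mul
          (continuous_star.comp g.continuous))).aestronglyMeasurable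
    · filter_upwards with τ
      have hL : ‖((τ:ℂ))^n * (f (t+τ) * (starRingEnd ℂ) (g τ))‖
          = ‖τ‖^n * (‖f (t+τ)‖ * ‖g τ‖) := by
        simp [norm_mul, Complex.norm_real]
      have hR : ‖M * (‖τ‖^n * ‖g τ‖)‖ = M * (‖τ‖^n * ‖g τ‖) :=
        Real.norm_of_nonneg (by positivity)
      rw [hL, hR]
      calc ‖τ‖^n * (‖f (t+τ)‖ * ‖g τ‖) ≤ ‖τ‖^n * (M * ‖g τ‖) := by
            gcongr
            exact hMf _
        _ = M * (‖τ‖^n * ‖g τ‖) := by ring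
  have hint0 : Integrable (fun τ : ℝ => f (t+τ) * (starRingEnd ℂ) (g τ)) := by
    simpa using hint 0
  have hint1 : Integrable (fun τ : ℝ => τ • (f (t+τ) * (starRingEnd ℂ) (g τ))) := by
    have := hint 1
    simpa [Complex.real_smul] using this
  -- the STFT as a Fourier transform
  have hSTFT : ∀ t' η' : ℝ,
      STFT f (⇑g) t' η' = 𝓕 (fun τ : ℝ => f (t'+τ) * (starRingEnd ℂ) (g τ)) η' := by
    intro t' η'
    rw [Real.fourier_eq']
    refine integral_congr_ae (Filter.Eventually.of_forall fun τ => ?_)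
    simp only [RCLike.inner_apply, conj_trivial, smul_eq_mul]
    rw [mul_comm]
    congr 1
    congr 1
    push_cast
    ring
  set W : ℝ → ℂ :=
    𝓕 (fun τ : ℝ => (-2*(π:ℂ)*Complex.I*τ) • (f (t+τ) * (starRingEnd ℂ) (g τ))) with hWdef
  -- derivative in η
  have hD1 : ∀ η' : ℝ, HasDerivAt (fun x : ℝ => STFT f (⇑g) t x) (W η') η' := by
    intro η'
    have heq : (fun x : ℝ => STFT f (⇑g) t x)
        = 𝓕 (fun τ : ℝ => f (t+τ) * (starRingEnd ℂ) (g τ)) := funext (hSTFT t)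
    rw [heq]
    exact Real.hasDerivAt_fourier hint0 hint1 η'
  -- second derivative in η (differentiability of W)
  have hf₁ : Integrable
      (fun τ : ℝ => (-2*(π:ℂ)*Complex.I*τ) • (f (t+τ) * (starRingEnd ℂ) (g τ))) := by
    have heq : (fun τ : ℝ => (-2*(π:ℂ)*Complex.I*τ) • (f (t+τ) * (starRingEnd ℂ) (g τ)))
        = fun τ : ℝ => (-2*(π:ℂ)*Complex.I) * ((τ:ℂ)^1 * (f (t+τ) * (starRingEnd ℂ) (g τ))) := by
      funext τ; simp only [smul_eq_mul, pow_one]; ring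
    rw [heq]
    exact (hint 1).const_mul _
  have hf₁' : Integrable (fun τ : ℝ =>
      τ • ((-2*(π:ℂ)*Complex.I*τ) • (f (t+τ) * (starRingEnd ℂ) (g τ)))) := by
    have heq : (fun τ : ℝ => τ • ((-2*(π:ℂ)*Complex.I*τ) • (f (t+τ) * (starRingEnd ℂ) (g τ))))
        = fun τ : ℝ => (-2*(π:ℂ)*Complex.I) * ((τ:ℂ)^2 * (f (t+τ) * (starRingEnd ℂ) (g τ))) := by
      funext τ; simp only [smul_eq_mul, Complex.real_smul]; ring
    rw [heq]
    exact (hint 2).const_mul _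
  have hD2 : DifferentiableAt ℝ W η :=
    (Real.hasDerivAt_fourier hf₁ hf₁' η).differentiableAt
  -- W as an explicit integral
  have hW_eq : ∀ η' : ℝ, W η' = (-2*(π:ℂ)*Complex.I) *
      ∫ τ : ℝ, (τ:ℂ) * (f (t+τ) * (starRingEnd ℂ) (g τ) *
        Complex.exp (-2 * (π : ℂ) * Complex.I * (η' : ℂ) * (τ : ℂ))) := by
    intro η'
    rw [hWdef, Real.fourier_eq', ← integral_const_mul]
    refine integral_congr_ae (Filter.Eventually.of_forall fun τ => ?_)
    simp only [RCLike.inner_apply, conj_trivial, smul_eq_mul]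
    have hexp : Complex.exp ((↑(-2 * π * (η' * τ)) : ℂ) * Complex.I)
        = Complex.exp (-2 * (π : ℂ) * Complex.I * (η' : ℂ) * (τ : ℂ)) := by
      congr 1; push_cast; ring
    rw [hexp]; ring
  -- integrability of monomials times the full integrand
  have hintE : ∀ (η' : ℝ) (n : ℕ), Integrable (fun τ : ℝ =>
      (τ:ℂ)^n * (f (t+τ) * (starRingEnd ℂ) (g τ) *
        Complex.exp (-2 * (π : ℂ) * Complex.I * (η' : ℂ) * (τ : ℂ)))) := by
    intro η' n
    have hbd1 : ∀ τ : ℝ, ‖Complex.exp (-2 * (π : ℂ) * Complex.I * (η' : ℂ) * (τ : ℂ))‖ ≤ 1 := by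
      intro τ
      rw [Complex.norm_exp]
      have : (-2 * (π : ℂ) * Complex.I * (η' : ℂ) * (τ : ℂ)).re = 0 := by
        simp [Complex.mul_re, Complex.mul_im]
      rw [this, Real.exp_zero]
    have hec : Continuous (fun τ : ℝ =>
        Complex.exp (-2 * (π : ℂ) * Complex.I * (η' : ℂ) * (τ : ℂ))) :=
      Complex.continuous_exp.comp (continuous_const.mul Complex.continuous_ofReal)
    have := ((hint n).bdd_mul (c := 1) hec.aestronglyMeasurable (Filter.Eventually.of_forall hbd1))
    refine this.congr (Filter.Eventually.of_forall fun τ => ?_)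
    ring
  -- derivative in t
  set a : ℂ := p₁ + 2*p₂*t with hadef
  have hVt : ∀ η' : ℝ, HasDerivAt (fun t' : ℝ => STFT f (⇑g) t' η')
      (a * STFT f (⇑g) t η' - k * W η') t := by
    intro η'
    have he1 : ∀ τ : ℝ, ‖Complex.exp (-2 * (π : ℂ) * Complex.I * (η' : ℂ) * (τ : ℂ))‖ = 1 := by
      intro τ
      rw [Complex.norm_exp]
      have : (-2 * (π : ℂ) * Complex.I * (η' : ℂ) * (τ : ℂ)).re = 0 := by
        simp [Complex.mul_re, Complex.mul_im]
      rw [this, Real.exp_zero]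
    have hec : Continuous (fun τ : ℝ =>
        Complex.exp (-2 * (π : ℂ) * Complex.I * (η' : ℂ) * (τ : ℂ))) :=
      Complex.continuous_exp.comp (continuous_const.mul Complex.continuous_ofReal)
    have hFmeas : ∀ t' : ℝ, AEStronglyMeasurable (fun τ : ℝ =>
        f (t'+τ) * (starRingEnd ℂ) (g τ) *
          Complex.exp (-2 * (π : ℂ) * Complex.I * (η' : ℂ) * (τ : ℂ))) volume := by
      intro t'
      exact (((hfc.comp (continuous_const.add continuous_id)).mul
        (continuous_star.comp g.continuous)).mul hec).aestronglyMeasurable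
    have hFint : Integrable (fun τ : ℝ =>
        f (t+τ) * (starRingEnd ℂ) (g τ) *
          Complex.exp (-2 * (π : ℂ) * Complex.I * (η' : ℂ) * (τ : ℂ))) := by
      have := hintE η' 0
      refine this.congr (Filter.Eventually.of_forall fun τ => ?_)
      simp
    have hF'meas : AEStronglyMeasurable (fun τ : ℝ =>
        (p₁ + 2*p₂*((t:ℂ)+τ)) * (f (t+τ) * (starRingEnd ℂ) (g τ) *
          Complex.exp (-2 * (π : ℂ) * Complex.I * (η' : ℂ) * (τ : ℂ)))) volume := by
      refine Continuous.aestronglyMeasurable ?_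
      exact ((continuous_const.add (continuous_const.mul
        (continuous_const.add Complex.continuous_ofReal))).mul
        (((hfc.comp (continuous_const.add continuous_id)).mul
          (continuous_star.comp g.continuous)).mul hec))
    have hbint : Integrable (fun τ : ℝ =>
        ((‖p₁‖ + 2*‖p₂‖*(|t|+1)) + 2*‖p₂‖*‖τ‖) * (M * ‖g τ‖)) := by
      have h0 := (g.integrable_pow_mul volume 0).const_mul ((‖p₁‖ + 2*‖p₂‖*(|t|+1)) * M)
      have h1 := (g.integrable_pow_mul volume 1).const_mul (2*‖p₂‖ * M)
      refine (h0.add h1).congr (Filter.Eventually.of_forall fun τ => ?_)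
      simp only [Pi.add_apply, pow_zero, pow_one, one_mul]
      ring
    have key := hasDerivAt_integral_of_dominated_loc_of_deriv_le
      (F := fun t' τ => f (t'+τ) * (starRingEnd ℂ) (g τ) *
          Complex.exp (-2 * (π : ℂ) * Complex.I * (η' : ℂ) * (τ : ℂ)))
      (F' := fun t' τ => (p₁ + 2*p₂*((t':ℂ)+τ)) * (f (t'+τ) * (starRingEnd ℂ) (g τ) *
          Complex.exp (-2 * (π : ℂ) * Complex.I * (η' : ℂ) * (τ : ℂ))))
      (bound := fun τ => ((‖p₁‖ + 2*‖p₂‖*(|t|+1)) + 2*‖p₂‖*‖τ‖) * (M * ‖g τ‖))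
      (Metric.ball_mem_nhds t one_pos)
      (Filter.Eventually.of_forall hFmeas) hFint hF'meas
      ?_ hbint ?_
    · obtain ⟨-, hkey⟩ := key
      have heq : (fun t' : ℝ => STFT f (⇑g) t' η') = fun t' : ℝ =>
          ∫ τ : ℝ, f (t'+τ) * (starRingEnd ℂ) (g τ) *
            Complex.exp (-2 * (π : ℂ) * Complex.I * (η' : ℂ) * (τ : ℂ)) := rfl
      rw [heq]
      convert hkey using 1
      · rfl
      beta_reduce
      -- value identification
      have hsplit : ∫ τ : ℝ, (p₁ + 2*p₂*((t:ℂ)+τ)) * (f (t+τ) * (starRingEnd ℂ) (g τ) *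
            Complex.exp (-2 * (π : ℂ) * Complex.I * (η' : ℂ) * (τ : ℂ)))
          = a * (∫ τ : ℝ, f (t+τ) * (starRingEnd ℂ) (g τ) *
              Complex.exp (-2 * (π : ℂ) * Complex.I * (η' : ℂ) * (τ : ℂ)))
            + (2*p₂) * ∫ τ : ℝ, (τ:ℂ) * (f (t+τ) * (starRingEnd ℂ) (g τ) *
              Complex.exp (-2 * (π : ℂ) * Complex.I * (η' : ℂ) * (τ : ℂ))) := by
        rw [← integral_const_mul, ← integral_const_mul, ← integral_add]
        · refine integral_congr_ae (Filter.Eventually.of_forall fun τ => ?_)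
          rw [hadef]; ring
        · exact hFint.const_mul a
        · have := (hintE η' 1).const_mul (2*p₂)
          refine this.congr (Filter.Eventually.of_forall fun τ => ?_)
          simp only [pow_one]
        -- done
      have hWτ : (2*p₂) * (∫ τ : ℝ, (τ:ℂ) * (f (t+τ) * (starRingEnd ℂ) (g τ) *
            Complex.exp (-2 * (π : ℂ) * Complex.I * (η' : ℂ) * (τ : ℂ)))) = - (k * W η') := by
        rw [hW_eq η', hk2]
        ring
      rw [hsplit, hWτ]
      have : STFT f (⇑g) t η' = ∫ τ : ℝ, f (t+τ) * (starRingEnd ℂ) (g τ) *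
          Complex.exp (-2 * (π : ℂ) * Complex.I * (η' : ℂ) * (τ : ℂ)) := rfl
      rw [this]
      ring
    · -- bound
      refine Filter.Eventually.of_forall fun τ => fun x hx => ?_
      have hxt : |x| ≤ |t| + 1 := by
        have := Metric.mem_ball.mp hx
        rw [Real.dist_eq] at this
        have := abs_sub_abs_le_abs_sub x t
        linarith [le_of_lt (Metric.mem_ball.mp hx), abs_sub_abs_le_abs_sub x t,
          (Real.dist_eq x t) ▸ le_of_lt (Metric.mem_ball.mp hx)]
      have hnorm : ‖(p₁ + 2*p₂*((x:ℂ)+τ)) * (f (x+τ) * (starRingEnd ℂ) (g τ) *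
            Complex.exp (-2 * (π : ℂ) * Complex.I * (η' : ℂ) * (τ : ℂ)))‖
          = ‖p₁ + 2*p₂*((x:ℂ)+τ)‖ * (‖f (x+τ)‖ * ‖g τ‖) := by
        rw [norm_mul, norm_mul, norm_mul, he1, mul_one, RCLike.norm_conj]
      rw [hnorm]
      have h1 : ‖p₁ + 2*p₂*((x:ℂ)+τ)‖ ≤ (‖p₁‖ + 2*‖p₂‖*(|t|+1)) + 2*‖p₂‖*‖τ‖ := by
        calc ‖p₁ + 2*p₂*((x:ℂ)+τ)‖ ≤ ‖p₁‖ + ‖2*p₂*((x:ℂ)+τ)‖ := norm_add_le _ _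
          _ = ‖p₁‖ + 2*‖p₂‖*‖(x:ℂ)+τ‖ := by
              rw [norm_mul, norm_mul]; norm_num
          _ ≤ ‖p₁‖ + 2*‖p₂‖*(|x| + |τ|) := by
              gcongr
              calc ‖(x:ℂ)+(τ:ℂ)‖ ≤ ‖(x:ℂ)‖ + ‖(τ:ℂ)‖ := norm_add_le _ _
                _ = |x| + |τ| := by simp [Complex.norm_real]
          _ ≤ ‖p₁‖ + 2*‖p₂‖*((|t|+1) + |τ|) := by gcongr
          _ = (‖p₁‖ + 2*‖p₂‖*(|t|+1)) + 2*‖p₂‖*‖τ‖ := by rw [Real.norm_eq_abs]; ring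
      calc ‖p₁ + 2*p₂*((x:ℂ)+τ)‖ * (‖f (x+τ)‖ * ‖g τ‖)
          ≤ ((‖p₁‖ + 2*‖p₂‖*(|t|+1)) + 2*‖p₂‖*‖τ‖) * (M * ‖g τ‖) := by
            gcongr
            · exact hMf _
        _ = _ := rfl
    · -- differentiability in t'
      refine Filter.Eventually.of_forall fun τ => fun x _ => ?_
      have h0 : HasDerivAt (fun t' : ℝ => f (t'+τ)) ((p₁ + 2*p₂*((x+τ:ℝ))) * f (x+τ)) x := by
        have hadd : HasDerivAt (fun y : ℝ => y + τ) 1 x := by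
          simpa using (hasDerivAt_id x).add_const τ
        have h5 := (hfderiv (x+τ)).scomp x hadd
        convert h5 using 1
        · rfl
        · rfl
        simp
      have H := (h0.mul_const ((starRingEnd ℂ) (g τ))).mul_const
        (Complex.exp (-2 * (π : ℂ) * Complex.I * (η' : ℂ) * (τ : ℂ)))
      beta_reduce
      convert H using 1
      · rfl
      push_cast
      ring
  -- differentiability of τe
  have hτeq : τe = fun η' : ℝ => (t : ℂ) - W η' / (2 * (π : ℂ) * Complex.I * STFT f (⇑g) t η') := by
    rw [hτ]
    funext η'
    rw [(hD1 η').deriv]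
  have hτdiff : DifferentiableAt ℝ τe η := by
    rw [hτeq]
    refine (differentiableAt_const _).sub (hD2.div ?_ ?_)
    · exact ((hD1 η).differentiableAt.const_mul _)
    · exact mul_ne_zero h2πI hV
  -- eventual identity ωe = C + k * τe
  set C : ℂ := a / (2 * (π : ℂ) * Complex.I) - k * t with hCdef
  have hU : ∀ᶠ η' in nhds η, STFT f (⇑g) t η' ≠ 0 :=
    ((hD1 η).differentiableAt.continuousAt).eventually_ne hV
  have key : ∀ η' : ℝ, STFT f (⇑g) t η' ≠ 0 → ωe η' = C + k * τe η' := by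
    intro η' hne
    rw [hω, hτ]
    simp only
    rw [(hVt η').deriv, (hD1 η').deriv, hCdef]
    field_simp
    ring
  have hev : ωe =ᶠ[nhds η] fun η' => C + k * τe η' := hU.mono key
  have hωdiff : DifferentiableAt ℝ ωe η := by
    have : DifferentiableAt ℝ (fun η' => C + k * τe η') η :=
      (differentiableAt_const C).add (hτdiff.const_mul k)
    exact this.congr_of_eventuallyEq hev
  refine ⟨hωdiff, hτdiff, ?_⟩
  rw [hev.deriv_eq, deriv_const_add, deriv_const_mul _ hτdiff]
end

section
/- Let f(τ) = A(τ)·exp(2πi·φ(τ)) be a Gaussian modulated linear chirp with log A(τ) = α₀ + α₁τ + (α₂/2)τ², φ(τ) = β₀ + β₁τ + (β₂/2)τ², real coefficients, and A bounded on ℝ; let g : ℝ → ℂ be a Schwartz function. Fix (t,η) with V_f^g(t,η) ≠ 0 and ∂_η τ̃_f(t,η) ≠ 0. Then the second-order local complex modulation operator q̃_{η,f}(t,η) = ∂_η ω̃_f(t,η)/∂_η τ̃_f(t,η) satisfies Re(q̃_{η,f}(t,η)) = φ''(t) = β₂. -/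
open MeasureTheory Real

private lemma stft_deriv_eta (f : ℝ → ℂ) (hc : Continuous f) (M : ℝ) (hM : ∀ x, ‖f x‖ ≤ M)
    (g : SchwartzMap ℝ ℂ) (t η₀ : ℝ) :
    Integrable (fun τ : ℝ => (-2 * (π:ℂ) * Complex.I * τ) * (f (t + τ) * (starRingEnd ℂ) (g τ) *
        Complex.exp (-2 * (π : ℂ) * Complex.I * (η₀ : ℂ) * (τ : ℂ)))) ∧
    HasDerivAt (fun η' => STFT f (⇑g) t η')
      (∫ τ : ℝ, (-2 * (π:ℂ) * Complex.I * τ) * (f (t + τ) * (starRingEnd ℂ) (g τ) *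
        Complex.exp (-2 * (π : ℂ) * Complex.I * (η₀ : ℂ) * (τ : ℂ)))) η₀ := by
  set F : ℝ → ℝ → ℂ := fun η' τ => f (t + τ) * (starRingEnd ℂ) (g τ) *
      Complex.exp (-2 * (π : ℂ) * Complex.I * (η' : ℂ) * (τ : ℂ)) with hF
  set F' : ℝ → ℝ → ℂ := fun η' τ => (-2 * (π:ℂ) * Complex.I * τ) * F η' τ with hF'
  have hcont : ∀ η', Continuous (F η') := by
    intro η'
    exact ((hc.comp (continuous_const.add continuous_id)).mul
      (Complex.continuous_conj.comp g.continuous)).mul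
      (Complex.continuous_exp.comp (by continuity))
  have hnorm : ∀ (x τ : ℝ), ‖F x τ‖ = ‖f (t+τ)‖ * ‖g τ‖ := by
    intro x τ
    simp only [hF, norm_mul, Complex.norm_exp]
    have h0 : (-2 * (π:ℂ) * Complex.I * (x:ℂ) * (τ:ℂ)).re = 0 := by simp
    rw [h0, Real.exp_zero, mul_one]
    simp
  exact hasDerivAt_integral_of_dominated_loc_of_deriv_le (μ := volume)
    (F := F) (F' := F') (x₀ := η₀) (bound := fun τ => (2*π*M) * (‖τ‖^1 * ‖g τ‖))
    (Metric.ball_mem_nhds _ one_pos)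
    (Filter.Eventually.of_forall fun η' => (hcont η').aestronglyMeasurable)
    (by
      apply ((g.integrable_pow_mul volume 0).const_mul M).mono
        (hcont η₀).aestronglyMeasurable
      refine Filter.Eventually.of_forall fun τ => ?_
      rw [hnorm]
      calc ‖f (t+τ)‖ * ‖g τ‖ ≤ M * ‖g τ‖ :=
            mul_le_mul_of_nonneg_right (hM _) (norm_nonneg _)
        _ = M * (‖τ‖^0 * ‖g τ‖) := by simp
        _ ≤ ‖M * (‖τ‖^0 * ‖g τ‖)‖ := le_abs_self _)
    (((by continuity : Continuous (fun τ : ℝ => (-2 * (π:ℂ) * Complex.I * τ))).mul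
      (hcont η₀)).aestronglyMeasurable)
    (Filter.Eventually.of_forall fun τ x _ => by
      have h1 : ‖(-2 * (π:ℂ) * Complex.I * (τ:ℂ))‖ = 2*π*‖τ‖ := by
        simp [norm_mul, abs_of_nonneg pi_pos.le]
      rw [show F' x τ = (-2 * (π:ℂ) * Complex.I * (τ:ℂ)) * F x τ from rfl, norm_mul, hnorm, h1]
      have hπ : (0:ℝ) ≤ 2*π*‖τ‖ := by positivity
      calc 2*π*‖τ‖ * (‖f (t+τ)‖ * ‖g τ‖) ≤ 2*π*‖τ‖ * (M * ‖g τ‖) :=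
            mul_le_mul_of_nonneg_left
              (mul_le_mul_of_nonneg_right (hM _) (norm_nonneg _)) hπ
        _ = 2*π*M * (‖τ‖^1 * ‖g τ‖) := by ring)
    (((g.integrable_pow_mul volume 1).const_mul (2*π*M)))
    (Filter.Eventually.of_forall fun τ x _ => by
      have hid : HasDerivAt (fun y : ℝ => (y : ℂ)) 1 x := by
        simpa using (hasDerivAt_id x).ofReal_comp
      have h2 : HasDerivAt (fun y : ℝ => -2 * (π:ℂ) * Complex.I * (y:ℂ) * (τ:ℂ))
          (-2 * (π:ℂ) * Complex.I * (τ:ℂ)) x := by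
        have := (hid.const_mul (-2 * (π:ℂ) * Complex.I)).mul_const (τ:ℂ)
        refine this.congr_deriv ?_; ring
      have h3 := (h2.cexp).const_mul (f (t + τ) * (starRingEnd ℂ) (g τ))
      refine h3.congr_deriv ?_
      simp only [hF', hF]; ring)

private lemma stft_deriv_t (f : ℝ → ℂ) (c₀ c₁ : ℂ)
    (hd : ∀ x : ℝ, HasDerivAt f ((c₀ + c₁*x) * f x) x)
    (M : ℝ) (hM : ∀ x, ‖f x‖ ≤ M)
    (g : SchwartzMap ℝ ℂ) (t η' : ℝ) :
    Integrable (fun τ : ℝ => (c₀ + c₁*(t+τ)) * (f (t + τ) * (starRingEnd ℂ) (g τ) *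
        Complex.exp (-2 * (π : ℂ) * Complex.I * (η' : ℂ) * (τ : ℂ)))) ∧
    HasDerivAt (fun t' => STFT f (⇑g) t' η')
      (∫ τ : ℝ, (c₀ + c₁*(t+τ)) * (f (t + τ) * (starRingEnd ℂ) (g τ) *
        Complex.exp (-2 * (π : ℂ) * Complex.I * (η' : ℂ) * (τ : ℂ)))) t := by
  have hc : Continuous f := by
    have : Differentiable ℝ f := fun x => (hd x).differentiableAt
    exact this.continuous
  set F : ℝ → ℝ → ℂ := fun t' τ => f (t' + τ) * (starRingEnd ℂ) (g τ) *
      Complex.exp (-2 * (π : ℂ) * Complex.I * (η' : ℂ) * (τ : ℂ)) with hF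
  set F' : ℝ → ℝ → ℂ := fun t' τ => (c₀ + c₁*(t'+τ)) * F t' τ with hF'
  have hcont : ∀ t', Continuous (F t') := by
    intro t'
    exact ((hc.comp (continuous_const.add continuous_id)).mul
      (Complex.continuous_conj.comp g.continuous)).mul
      (Complex.continuous_exp.comp (by continuity))
  have hnorm : ∀ (x τ : ℝ), ‖F x τ‖ = ‖f (x+τ)‖ * ‖g τ‖ := by
    intro x τ
    simp only [hF, norm_mul, Complex.norm_exp]
    have h0 : (-2 * (π:ℂ) * Complex.I * (η':ℂ) * (τ:ℂ)).re = 0 := by simp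
    rw [h0, Real.exp_zero, mul_one]
    simp
  have hMnn : 0 ≤ M := le_trans (norm_nonneg _) (hM 0)
  exact hasDerivAt_integral_of_dominated_loc_of_deriv_le (μ := volume)
    (F := F) (F' := F') (x₀ := t)
    (bound := fun τ => ((‖c₀‖ + ‖c₁‖*(|t|+1))*M) * (‖τ‖^0*‖g τ‖) + (‖c₁‖*M) * (‖τ‖^1*‖g τ‖))
    (Metric.ball_mem_nhds _ one_pos)
    (Filter.Eventually.of_forall fun t' => (hcont t').aestronglyMeasurable)
    (by
      apply ((g.integrable_pow_mul volume 0).const_mul M).mono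
        (hcont t).aestronglyMeasurable
      refine Filter.Eventually.of_forall fun τ => ?_
      rw [hnorm]
      calc ‖f (t+τ)‖ * ‖g τ‖ ≤ M * ‖g τ‖ :=
            mul_le_mul_of_nonneg_right (hM _) (norm_nonneg _)
        _ = M * (‖τ‖^0 * ‖g τ‖) := by simp
        _ ≤ ‖M * (‖τ‖^0 * ‖g τ‖)‖ := le_abs_self _)
    (((by continuity : Continuous fun τ : ℝ => c₀ + c₁*((t:ℂ)+(τ:ℂ))).mul
      (hcont t)).aestronglyMeasurable)
    (Filter.Eventually.of_forall fun τ x hx => by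
      have hxt : |x - t| < 1 := by
        simpa [Real.dist_eq] using hx
      rw [show F' x τ = (c₀ + c₁*(x+τ)) * F x τ from rfl, norm_mul, hnorm]
      have h1 : ‖c₀ + c₁*((x:ℂ)+(τ:ℂ))‖ ≤ ‖c₀‖ + ‖c₁‖*(|t|+1+‖τ‖) := by
        calc ‖c₀ + c₁*((x:ℂ)+(τ:ℂ))‖ ≤ ‖c₀‖ + ‖c₁*((x:ℂ)+(τ:ℂ))‖ := norm_add_le _ _
          _ = ‖c₀‖ + ‖c₁‖*‖(x:ℂ)+(τ:ℂ)‖ := by rw [norm_mul]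
          _ ≤ ‖c₀‖ + ‖c₁‖*(|t|+1+‖τ‖) := by
              have : ‖(x:ℂ)+(τ:ℂ)‖ ≤ |t|+1+‖τ‖ := by
                calc ‖(x:ℂ)+(τ:ℂ)‖ ≤ ‖(x:ℂ)‖ + ‖(τ:ℂ)‖ := norm_add_le _ _
                  _ = |x| + |τ| := by simp
                  _ ≤ (|t|+1) + |τ| := by
                      have : |x| ≤ |t| + 1 := by
                        have := abs_sub_abs_le_abs_sub x t
                        linarith
                      linarith [this]
                  _ = |t|+1+‖τ‖ := by simp [Real.norm_eq_abs]
              exact add_le_add_right (mul_le_mul_of_nonneg_left this (norm_nonneg _)) _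
      have h2 : ‖f (x+τ)‖ * ‖g τ‖ ≤ M * ‖g τ‖ :=
        mul_le_mul_of_nonneg_right (hM _) (norm_nonneg _)
      calc ‖c₀ + c₁*((x:ℂ)+(τ:ℂ))‖ * (‖f (x+τ)‖ * ‖g τ‖)
          ≤ (‖c₀‖ + ‖c₁‖*(|t|+1+‖τ‖)) * (M * ‖g τ‖) := by
            apply mul_le_mul h1 h2 (by positivity) (by positivity)
        _ = ((‖c₀‖ + ‖c₁‖*(|t|+1))*M) * (‖τ‖^0*‖g τ‖) + (‖c₁‖*M) * (‖τ‖^1*‖g τ‖) := by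
            simp [Real.norm_eq_abs]; ring)
    ((((g.integrable_pow_mul volume 0).const_mul _).add
      ((g.integrable_pow_mul volume 1).const_mul _)))
    (Filter.Eventually.of_forall fun τ x _ => by
      have hshift : HasDerivAt (fun y : ℝ => f (y + τ))
          ((c₀ + c₁*((x:ℂ)+(τ:ℂ))) * f (x+τ)) x := by
        have h4 := (hd (x+τ)).comp_add_const x τ
        refine h4.congr_deriv ?_
        rw [Complex.ofReal_add]
      have h3 := (hshift.mul_const ((starRingEnd ℂ) (g τ) *
        Complex.exp (-2 * (π : ℂ) * Complex.I * (η' : ℂ) * (τ : ℂ))))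
      convert h3 using 1
      · rfl
      · ext y; simp only [hF]; ring
      · simp only [hF', hF]; ring)

/-- for a Gaussian modulated linear chirp, the second-order local complex
modulation operator `q̃_{η,f}(t,η) = ∂_η ω̃_f(t,η)/∂_η τ̃_f(t,η)` satisfies
`Re(q̃_{η,f}(t,η)) = φ''(t) = β₂`. -/
theorem modulation_operator_gaussian_chirp (α₀ α₁ α₂ β₀ β₁ β₂ : ℝ)
    (A : ℝ → ℝ) (hA : ∀ τ : ℝ, A τ = Real.exp (α₀ + α₁ * τ + α₂ / 2 * τ ^ 2))
    (φ : ℝ → ℝ) (hφ : ∀ τ : ℝ, φ τ = β₀ + β₁ * τ + β₂ / 2 * τ ^ 2)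
    (hbd : ∃ M : ℝ, ∀ τ : ℝ, A τ ≤ M)
    (f : ℝ → ℂ)
    (hf : ∀ τ : ℝ, f τ = (A τ : ℂ) * Complex.exp (2 * (π : ℂ) * Complex.I * (φ τ : ℂ)))
    (g : SchwartzMap ℝ ℂ) (t η : ℝ) (hV : STFT f (⇑g) t η ≠ 0)
    (ωe τe : ℝ → ℂ)
    (hω : ωe = fun η' : ℝ => deriv (fun t' : ℝ => STFT f (⇑g) t' η') t /
      (2 * (π : ℂ) * Complex.I * STFT f (⇑g) t η'))
    (hτ : τe = fun η' : ℝ => (t : ℂ) - deriv (fun η'' : ℝ => STFT f (⇑g) t η'') η' /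
      (2 * (π : ℂ) * Complex.I * STFT f (⇑g) t η'))
    (hne : deriv τe η ≠ 0) :
    (deriv ωe η / deriv τe η).re = deriv (deriv φ) t ∧ deriv (deriv φ) t = β₂ := by
  -- second derivative of φ
  have hφ1 : deriv φ = fun x => β₁ + β₂ * x := by
    funext x
    have h : HasDerivAt φ (β₁ + β₂*x) x := by
      rw [funext hφ]
      have := ((hasDerivAt_const x β₀).add ((hasDerivAt_id x).const_mul β₁)).add
        ((hasDerivAt_pow 2 x).const_mul (β₂/2))
      refine this.congr_deriv ?_; push_cast; ring
    exact h.deriv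
  have hφ2 : deriv (deriv φ) t = β₂ := by
    rw [hφ1]
    have h : HasDerivAt (fun x : ℝ => β₁ + β₂ * x) β₂ t := by
      have := (hasDerivAt_const t β₁).add ((hasDerivAt_id t).const_mul β₂)
      refine this.congr_deriv ?_; ring
    exact h.deriv
  refine ⟨?_, hφ2⟩
  rw [hφ2]
  -- setup
  obtain ⟨M, hMb⟩ := hbd
  set c₀ : ℂ := (α₁:ℂ) + 2*π*Complex.I*β₁ with hc₀
  set c₁ : ℂ := (α₂:ℂ) + 2*π*Complex.I*β₂ with hc₁
  have hfe : ∀ x : ℝ, f x = Complex.exp (((α₀ + α₁*x + α₂/2*x^2 : ℝ) : ℂ)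
      + 2*(π:ℂ)*Complex.I*((β₀ + β₁*x + β₂/2*x^2 : ℝ) : ℂ)) := by
    intro x
    rw [hf x, hA x, hφ x, Complex.ofReal_exp, ← Complex.exp_add]
  have hfd : ∀ x : ℝ, HasDerivAt f ((c₀ + c₁*x) * f x) x := by
    intro x
    have h1 : HasDerivAt (fun y : ℝ => α₀ + α₁*y + α₂/2*y^2) (α₁ + α₂*x) x := by
      have := ((hasDerivAt_const x α₀).add ((hasDerivAt_id x).const_mul α₁)).add
        ((hasDerivAt_pow 2 x).const_mul (α₂/2))
      refine this.congr_deriv ?_; push_cast; ring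
    have h2 : HasDerivAt (fun y : ℝ => β₀ + β₁*y + β₂/2*y^2) (β₁ + β₂*x) x := by
      have := ((hasDerivAt_const x β₀).add ((hasDerivAt_id x).const_mul β₁)).add
        ((hasDerivAt_pow 2 x).const_mul (β₂/2))
      refine this.congr_deriv ?_; push_cast; ring
    have hℓ : HasDerivAt (fun y : ℝ => ((α₀ + α₁*y + α₂/2*y^2 : ℝ) : ℂ)
        + 2*(π:ℂ)*Complex.I*((β₀ + β₁*y + β₂/2*y^2 : ℝ) : ℂ)) (c₀ + c₁*x) x := by
      have := (h1.ofReal_comp).add ((h2.ofReal_comp).const_mul (2*(π:ℂ)*Complex.I))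
      refine this.congr_deriv ?_; rw [hc₀, hc₁]; push_cast; ring
    have he := hℓ.cexp
    rw [funext hfe]
    convert he using 1
    simp only []; ring
  have hfn : ∀ x : ℝ, ‖f x‖ ≤ M := by
    intro x
    have : ‖f x‖ = A x := by
      rw [hfe x, Complex.norm_exp, hA x]
      congr 1
      simp [← Complex.ofReal_pow]
    rw [this]; exact hMb x
  have hc : Continuous f :=
    Differentiable.continuous (fun x => (hfd x).differentiableAt : Differentiable ℝ f)
  have hI : (2*(π:ℂ)*Complex.I) ≠ 0 := by
    simp [Complex.I_ne_zero, Complex.ofReal_ne_zero, pi_ne_zero]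
  -- notation
  set V : ℝ → ℂ := fun η' => STFT f (⇑g) t η' with hVd
  set Φ : ℝ → ℝ → ℂ := fun η' τ => f (t + τ) * (starRingEnd ℂ) (g τ) *
      Complex.exp (-2 * (π : ℂ) * Complex.I * (η' : ℂ) * (τ : ℂ)) with hΦ
  have hVint : ∀ η', V η' = ∫ τ : ℝ, Φ η' τ := fun η' => rfl
  -- derivatives of V
  have hDη : ∀ η', HasDerivAt V (∫ τ : ℝ, (-2 * (π:ℂ) * Complex.I * τ) * Φ η' τ) η' :=
    fun η' => (stft_deriv_eta f hc M hfn g t η').2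
  have hDηint : ∀ η', Integrable (fun τ : ℝ => (-2 * (π:ℂ) * Complex.I * τ) * Φ η' τ) :=
    fun η' => (stft_deriv_eta f hc M hfn g t η').1
  have hDt : ∀ η', HasDerivAt (fun t' => STFT f (⇑g) t' η')
      (∫ τ : ℝ, (c₀ + c₁*(t+τ)) * Φ η' τ) t :=
    fun η' => (stft_deriv_t f c₀ c₁ hfd M hfn g t η').2
  have hDtint : ∀ η', Integrable (fun τ : ℝ => (c₀ + c₁*(t+τ)) * Φ η' τ) :=
    fun η' => (stft_deriv_t f c₀ c₁ hfd M hfn g t η').1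
  have hΦint : ∀ η', Integrable (Φ η') := by
    intro η'
    have hcontΦ : Continuous (Φ η') :=
      ((hc.comp (continuous_const.add continuous_id)).mul
        (Complex.continuous_conj.comp g.continuous)).mul
        (Complex.continuous_exp.comp (continuous_const.mul Complex.continuous_ofReal))
    apply ((g.integrable_pow_mul volume 0).const_mul M).mono hcontΦ.aestronglyMeasurable
    refine Filter.Eventually.of_forall fun τ => ?_
    have hnorm : ‖Φ η' τ‖ = ‖f (t+τ)‖ * ‖g τ‖ := by
      simp only [hΦ, norm_mul, Complex.norm_exp]
      have h0 : (-2 * (π:ℂ) * Complex.I * (η':ℂ) * (τ:ℂ)).re = 0 := by simp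
      rw [h0, Real.exp_zero, mul_one]
      simp
    rw [hnorm]
    calc ‖f (t+τ)‖ * ‖g τ‖ ≤ M * ‖g τ‖ :=
          mul_le_mul_of_nonneg_right (hfn _) (norm_nonneg _)
      _ = M * (‖τ‖^0 * ‖g τ‖) := by simp
      _ ≤ ‖M * (‖τ‖^0 * ‖g τ‖)‖ := le_abs_self _
  -- linear relation between the two derivative integrals
  have hrel : ∀ η', (∫ τ : ℝ, (c₀ + c₁*(t+τ)) * Φ η' τ)
      = (c₀ + c₁*t) * V η' + (c₁ / (-2 * (π:ℂ) * Complex.I)) *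
        (∫ τ : ℝ, (-2 * (π:ℂ) * Complex.I * τ) * Φ η' τ) := by
    intro η'
    have heq : (fun τ : ℝ => (c₀ + c₁*(t+τ)) * Φ η' τ)
        = fun τ : ℝ => (c₀ + c₁*t) * Φ η' τ + (c₁ / (-2 * (π:ℂ) * Complex.I)) *
          ((-2 * (π:ℂ) * Complex.I * τ) * Φ η' τ) := by
      funext τ
      have hI' : (-2*(π:ℂ)*Complex.I) ≠ 0 := by
        rw [show (-2*(π:ℂ)*Complex.I) = -(2*(π:ℂ)*Complex.I) by ring, neg_ne_zero]
        exact hI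
      field_simp
      ring
    rw [heq, integral_add (((hΦint η').const_mul _)) (((hDηint η').const_mul _)),
      integral_const_mul, integral_const_mul, ← hVint]
  -- eventual equality of ωe with affine function of τe
  set k : ℂ := c₁ / (2*(π:ℂ)*Complex.I) with hk
  have hVne : ∀ᶠ η' in nhds η, V η' ≠ 0 := (hDη η).continuousAt.eventually_ne hV
  have heveq : ωe =ᶠ[nhds η] fun η' => (c₀ + c₁*t) / (2*(π:ℂ)*Complex.I) + k * (τe η' - t) := by
    filter_upwards [hVne] with η' hV'
    rw [hω, hτ]
    simp only []
    rw [(hDt η').deriv, (hDη η').deriv, hrel η']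
    have hSV : STFT f (⇑g) t η' = V η' := rfl
    rw [hSV, hk]
    field_simp [hV', hI]
    ring
  -- differentiate
  have hτdiff : DifferentiableAt ℝ τe η := by
    by_contra h
    exact hne (deriv_zero_of_not_differentiableAt h)
  have hderiv : deriv ωe η = k * deriv τe η := by
    rw [heveq.deriv_eq]
    have : (fun η' => (c₀ + c₁*t) / (2*(π:ℂ)*Complex.I) + k * (τe η' - t))
        = fun η' => ((c₀ + c₁*t) / (2*(π:ℂ)*Complex.I) - k*t) + k * τe η' := by
      funext η'; ring
    rw [this, deriv_const_add]
    exact deriv_const_mul k hτdiff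
  rw [hderiv, mul_div_assoc, div_self hne, mul_one]
  -- compute k.re
  have hkval : k = (β₂:ℂ) - ((α₂/(2*π) : ℝ) : ℂ)*Complex.I := by
    rw [hk, div_eq_iff hI, hc₁]
    have hπ : (π:ℂ) ≠ 0 := by exact_mod_cast pi_ne_zero
    field_simp
    ring_nf
    simp [Complex.I_sq]
    field_simp
    ring
  rw [hkval]
  simp [Complex.div_im]
end

section
/- Let f(τ) = A(τ)·exp(2πi·φ(τ)) be a Gaussian modulated linear chirp with log A(τ) = α₀ + α₁τ + (α₂/2)τ², φ(τ) = β₀ + β₁τ + (β₂/2)τ², real coefficients, and A bounded on ℝ; let g : ℝ → ℂ be a Schwartz function. Fix (t,η) with V_f^g(t,η) ≠ 0 and ∂_η τ̃_f(t,η) ≠ 0. Then the second-order complex instantaneous-frequency estimate ω̃_{η,f}^{[2]}(t,η) = ω̃_f(t,η) + q̃_{η,f}(t,η)·(t − τ̃_f(t,η)) recovers the instantaneous frequency exactly: φ'(t) = β₁ + β₂t = Re(ω̃_{η,f}^{[2]}(t,η)). -/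
open MeasureTheory Real

private lemma aux_re (a b : ℝ) :
    (((a:ℂ) + 2*(π:ℂ)*Complex.I*(b:ℂ)) / (2*(π:ℂ)*Complex.I)).re = b := by
  have hπ : (π:ℂ) ≠ 0 := Complex.ofReal_ne_zero.mpr Real.pi_ne_zero
  have hc2ne : (2*(π:ℂ)*Complex.I) ≠ 0 := by
    simp [Complex.ext_iff, Real.pi_ne_zero]
  have key : ∀ u v : ℝ, ((v:ℂ) - (u:ℂ)*Complex.I).re = v := by intro u v; simp
  have h : ((a:ℂ) + 2*(π:ℂ)*Complex.I*(b:ℂ)) =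
      (2*(π:ℂ)*Complex.I) * ((b:ℂ) - ((a/(2*π) : ℝ):ℂ) * Complex.I) := by
    push_cast
    field_simp
    ring_nf
    simp [Complex.I_sq]
  rw [h, mul_div_cancel_left₀ _ hc2ne, key]

/-- for a Gaussian modulated linear chirp, the second-order complex IF
estimate `ω̃^{[2]}_{η,f}(t,η) = ω̃_f(t,η) + q̃_{η,f}(t,η)·(t − τ̃_f(t,η))` recovers the
instantaneous frequency exactly: `φ'(t) = β₁ + β₂ t = Re(ω̃^{[2]}_{η,f}(t,η))`. -/
theorem second_order_if_estimate_gaussian_chirp (α₀ α₁ α₂ β₀ β₁ β₂ : ℝ)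
    (A : ℝ → ℝ) (hA : ∀ τ : ℝ, A τ = Real.exp (α₀ + α₁ * τ + α₂ / 2 * τ ^ 2))
    (φ : ℝ → ℝ) (hφ : ∀ τ : ℝ, φ τ = β₀ + β₁ * τ + β₂ / 2 * τ ^ 2)
    (hbd : ∃ M : ℝ, ∀ τ : ℝ, A τ ≤ M)
    (f : ℝ → ℂ)
    (hf : ∀ τ : ℝ, f τ = (A τ : ℂ) * Complex.exp (2 * (π : ℂ) * Complex.I * (φ τ : ℂ)))
    (g : SchwartzMap ℝ ℂ) (t η : ℝ) (hV : STFT f (⇑g) t η ≠ 0)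
    (ωe τe : ℝ → ℂ)
    (hω : ωe = fun η' : ℝ => deriv (fun t' : ℝ => STFT f (⇑g) t' η') t /
      (2 * (π : ℂ) * Complex.I * STFT f (⇑g) t η'))
    (hτ : τe = fun η' : ℝ => (t : ℂ) - deriv (fun η'' : ℝ => STFT f (⇑g) t η'') η' /
      (2 * (π : ℂ) * Complex.I * STFT f (⇑g) t η'))
    (hne : deriv τe η ≠ 0) :
    deriv φ t = β₁ + β₂ * t ∧
    (ωe η + (deriv ωe η / deriv τe η) * ((t : ℂ) - τe η)).re = β₁ + β₂ * t := by
  obtain ⟨M, hM⟩ := hbd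
  -- first conjunct
  have hφfun : φ = fun τ : ℝ => β₀ + β₁ * τ + β₂ / 2 * τ ^ 2 := funext hφ
  have hφd : HasDerivAt φ (β₁ + β₂ * t) t := by
    rw [hφfun]
    have h1 : HasDerivAt (fun τ : ℝ => β₀ + β₁ * τ + β₂ / 2 * τ ^ 2)
        (0 + β₁ * 1 + β₂ / 2 * (2 * t ^ 1)) t :=
      ((hasDerivAt_const t β₀).add ((hasDerivAt_id t).const_mul β₁)).add
        ((hasDerivAt_pow 2 t).const_mul (β₂ / 2))
    convert h1 using 1
    ring
  refine ⟨hφd.deriv, ?_⟩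
  -- constants
  have hπ : (π:ℂ) ≠ 0 := Complex.ofReal_ne_zero.mpr Real.pi_ne_zero
  set c2 : ℂ := 2 * (π : ℂ) * Complex.I with hc2
  have hc2ne : c2 ≠ 0 := by
    rw [hc2]; simp [Complex.ext_iff, Real.pi_ne_zero]
  set lam : ℂ := ((α₁ + α₂ * t : ℝ) : ℂ) + c2 * ((β₁ + β₂ * t : ℝ) : ℂ) with hlam
  set mu : ℂ := ((α₂ : ℝ) : ℂ) + c2 * ((β₂ : ℝ) : ℂ) with hmu
  set Qc : ℂ → ℂ := fun z => (α₀ : ℂ) + (α₁:ℂ) * z + (α₂:ℂ) / 2 * z ^ 2 +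
      c2 * ((β₀ : ℂ) + (β₁:ℂ) * z + (β₂:ℂ) / 2 * z ^ 2) with hQc
  set Qd : ℂ → ℂ := fun z => (α₁ : ℂ) + (α₂:ℂ) * z + c2 * ((β₁ : ℂ) + (β₂:ℂ) * z) with hQd
  have hQderiv : ∀ z : ℂ, HasDerivAt Qc (Qd z) z := by
    intro z
    have h1 : HasDerivAt (fun z : ℂ => (α₀ : ℂ) + (α₁:ℂ) * z + (α₂:ℂ) / 2 * z ^ 2 +
        c2 * ((β₀ : ℂ) + (β₁:ℂ) * z + (β₂:ℂ) / 2 * z ^ 2))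
        (0 + (α₁:ℂ) * 1 + (α₂:ℂ) / 2 * (2 * z ^ 1) +
          c2 * (0 + (β₁:ℂ) * 1 + (β₂:ℂ) / 2 * (2 * z ^ 1))) z :=
      (((hasDerivAt_const z _).add ((hasDerivAt_id z).const_mul _)).add
        ((hasDerivAt_pow 2 z).const_mul _)).add
        ((((hasDerivAt_const z _).add ((hasDerivAt_id z).const_mul _)).add
          ((hasDerivAt_pow 2 z).const_mul _)).const_mul c2)
    rw [hQc, hQd]
    convert h1 using 1
    ring
  have hffun : f = fun u : ℝ => Complex.exp (Qc (u:ℂ)) := by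
    funext u
    rw [hf, hA, hφ, Complex.ofReal_exp, ← Complex.exp_add]
    congr 1
    rw [hQc]
    push_cast
    ring
  have hQdshift : ∀ τ : ℝ, Qd ((t:ℂ) + (τ:ℂ)) = lam + mu * (τ:ℂ) := by
    intro τ
    rw [hQd, hlam, hmu]
    push_cast
    ring
  -- norm facts
  have hA_pos : ∀ u : ℝ, 0 < A u := fun u => by rw [hA]; exact Real.exp_pos _
  have hMnn : 0 ≤ M := le_trans (hA_pos 0).le (hM 0)
  have hnf : ∀ u : ℝ, ‖f u‖ = A u := by
    intro u
    rw [hf, norm_mul]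
    have h2 : ‖Complex.exp (2*(π:ℂ)*Complex.I*((φ u : ℝ):ℂ))‖ = 1 := by
      have h : (2*(π:ℂ)*Complex.I*((φ u : ℝ):ℂ)) = ((2*π*φ u : ℝ):ℂ) * Complex.I := by
        push_cast; ring
      rw [h]
      exact Complex.norm_exp_ofReal_mul_I _
    rw [h2, mul_one, Complex.norm_real, Real.norm_eq_abs, abs_of_pos (hA_pos u)]
  have hMf : ∀ u : ℝ, ‖f u‖ ≤ M := fun u => (hnf u) ▸ hM u
  have hK1 : ∀ x τ : ℝ, ‖Complex.exp (-2*(π:ℂ)*Complex.I*(x:ℂ)*(τ:ℂ))‖ = 1 := by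
    intro x τ
    have h : (-2*(π:ℂ)*Complex.I*(x:ℂ)*(τ:ℂ)) = ((-2*π*x*τ : ℝ):ℂ) * Complex.I := by
      push_cast; ring
    rw [h]
    exact Complex.norm_exp_ofReal_mul_I _
  -- continuity
  have hQccont : Continuous Qc := by rw [hQc]; fun_prop
  have hQdcont : Continuous Qd := by rw [hQd]; fun_prop
  have hfc : Continuous f := by
    rw [hffun]
    exact Complex.continuous_exp.comp (hQccont.comp Complex.continuous_ofReal)
  -- the integrand
  have hcontF : ∀ x y : ℝ, Continuous (fun τ : ℝ => f (x + τ) * (starRingEnd ℂ) (g τ) *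
      Complex.exp (-2*(π:ℂ)*Complex.I*(y:ℂ)*(τ:ℂ))) := by
    intro x y
    refine ((hfc.comp (continuous_const.add continuous_id)).mul
      (continuous_star.comp g.continuous)).mul (Complex.continuous_exp.comp ?_)
    fun_prop
  have hgint : Integrable (fun τ : ℝ => g τ) := g.integrable
  have hg1 : Integrable (fun τ : ℝ => ‖τ‖ * ‖g τ‖) := by
    simpa using g.integrable_pow_mul (volume) 1
  have hnormF : ∀ x y τ : ℝ, ‖f (x + τ) * (starRingEnd ℂ) (g τ) *
      Complex.exp (-2*(π:ℂ)*Complex.I*(y:ℂ)*(τ:ℂ))‖ = ‖f (x+τ)‖ * ‖g τ‖ := by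
    intro x y τ
    rw [norm_mul, norm_mul, hK1, mul_one, RCLike.norm_conj]
  have hInt0 : ∀ x y : ℝ, Integrable (fun τ : ℝ => f (x + τ) * (starRingEnd ℂ) (g τ) *
      Complex.exp (-2*(π:ℂ)*Complex.I*(y:ℂ)*(τ:ℂ))) := by
    intro x y
    refine (hgint.norm.const_mul M).mono' ((hcontF x y).aestronglyMeasurable) ?_
    filter_upwards with τ
    rw [hnormF]
    exact mul_le_mul_of_nonneg_right (hMf _) (norm_nonneg _)
  have hInt1 : ∀ y : ℝ, Integrable (fun τ : ℝ => (τ:ℂ) * (f (t + τ) * (starRingEnd ℂ) (g τ) *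
      Complex.exp (-2*(π:ℂ)*Complex.I*(y:ℂ)*(τ:ℂ)))) := by
    intro y
    refine ((hg1.const_mul M).mono'
      ((Complex.continuous_ofReal.mul (hcontF t y)).aestronglyMeasurable) ?_)
    filter_upwards with τ
    rw [norm_mul, hnormF, Complex.norm_real, Real.norm_eq_abs]
    calc |τ| * (‖f (t+τ)‖ * ‖g τ‖) ≤ |τ| * (M * ‖g τ‖) := by
          exact mul_le_mul_of_nonneg_left
            (mul_le_mul_of_nonneg_right (hMf _) (norm_nonneg _)) (abs_nonneg τ)
      _ = M * (‖τ‖ * ‖g τ‖) := by rw [Real.norm_eq_abs]; ring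
  -- the η-integral with a τ factor
  set I1 : ℝ → ℂ := fun y => ∫ τ : ℝ, (τ:ℂ) * (f (t + τ) * (starRingEnd ℂ) (g τ) *
      Complex.exp (-2*(π:ℂ)*Complex.I*(y:ℂ)*(τ:ℂ))) with hI1
  -- derivative in η
  have hderivη : ∀ y : ℝ, HasDerivAt (fun η'' : ℝ => STFT f (⇑g) t η'') (-c2 * I1 y) y := by
    intro y
    have key := hasDerivAt_integral_of_dominated_loc_of_deriv_le (μ := volume)
      (F := fun (x : ℝ) (τ : ℝ) => f (t + τ) * (starRingEnd ℂ) (g τ) *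
        Complex.exp (-2*(π:ℂ)*Complex.I*(x:ℂ)*(τ:ℂ)))
      (F' := fun (x : ℝ) (τ : ℝ) => f (t + τ) * (starRingEnd ℂ) (g τ) *
        (Complex.exp (-2*(π:ℂ)*Complex.I*(x:ℂ)*(τ:ℂ)) * (-2*(π:ℂ)*Complex.I*(τ:ℂ))))
      (x₀ := y) (bound := fun τ => (2*π*M) * (‖τ‖ * ‖g τ‖)) (s := Metric.ball y 1) (Metric.ball_mem_nhds y one_pos)
      (Filter.Eventually.of_forall fun x => (hcontF t x).aestronglyMeasurable)
      (hInt0 t y) ?meas ?bdd (hg1.const_mul (2*π*M)) ?diff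
    case meas =>
      refine Continuous.aestronglyMeasurable ?_
      refine ((hfc.comp (continuous_const.add continuous_id)).mul
        (continuous_star.comp g.continuous)).mul (?_)
      fun_prop
    case bdd =>
      filter_upwards with τ
      intro x _
      rw [norm_mul, norm_mul, norm_mul, RCLike.norm_conj, hK1, one_mul]
      have h : (-2*(π:ℂ)*Complex.I*(τ:ℂ)) = ((2*π*τ:ℝ):ℂ) * (-Complex.I) := by
        push_cast; ring
      rw [h, norm_mul, Complex.norm_real, norm_neg, Complex.norm_I, mul_one,
        Real.norm_eq_abs, abs_mul, abs_mul, abs_of_nonneg Real.pi_nonneg]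
      have h2 : ‖f (t+τ)‖ * ‖g τ‖ * (|2| * π * |τ|) ≤ M * ‖g τ‖ * (2 * π * |τ|) := by
        rw [abs_two]
        refine mul_le_mul_of_nonneg_right
          (mul_le_mul_of_nonneg_right (hMf _) (norm_nonneg _)) (by positivity)
      calc ‖f (t+τ)‖ * ‖g τ‖ * (|2| * π * |τ|) ≤ M * ‖g τ‖ * (2 * π * |τ|) := h2
        _ = 2*π*M * (‖τ‖ * ‖g τ‖) := by rw [Real.norm_eq_abs]; ring
    case diff =>
      filter_upwards with τ
      intro x _
      have hlin : HasDerivAt (fun z : ℂ => -2*(π:ℂ)*Complex.I*z*(τ:ℂ))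
          (-2*(π:ℂ)*Complex.I*(τ:ℂ)) (x:ℂ) := by
        simpa using ((hasDerivAt_id ((x:ℝ):ℂ)).const_mul (-2*(π:ℂ)*Complex.I)).mul_const (τ:ℂ)
      have hz := hlin.cexp.comp_ofReal
      exact hz.const_mul (f (t + τ) * (starRingEnd ℂ) (g τ))
    have h3 : (∫ τ : ℝ, f (t + τ) * (starRingEnd ℂ) (g τ) *
        (Complex.exp (-2*(π:ℂ)*Complex.I*(y:ℂ)*(τ:ℂ)) * (-2*(π:ℂ)*Complex.I*(τ:ℂ))))
        = -c2 * I1 y := by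
      rw [hI1, ← MeasureTheory.integral_const_mul]
      congr 1
      funext τ
      rw [hc2]
      ring
    rw [show (fun η'' : ℝ => STFT f (⇑g) t η'') = (fun x : ℝ => ∫ τ : ℝ,
      f (t + τ) * (starRingEnd ℂ) (g τ) *
        Complex.exp (-2*(π:ℂ)*Complex.I*(x:ℂ)*(τ:ℂ))) from rfl, ← h3]
    exact key.2
  -- derivative in t
  have hderivt : ∀ y : ℝ, HasDerivAt (fun t' : ℝ => STFT f (⇑g) t' y)
      (lam * STFT f (⇑g) t y + mu * I1 y) t := by
    intro y
    have h1 : ∀ x τ : ℝ, HasDerivAt (fun x : ℝ => f (x + τ))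
        (Qd ((x:ℂ)+(τ:ℂ)) * f (x + τ)) x := by
      intro x τ
      have h2 := ((hQderiv (((x+τ : ℝ)):ℂ)).cexp).comp_ofReal
      have hin : HasDerivAt (fun u : ℝ => u + τ) 1 x := by
        simpa using (hasDerivAt_id x).add_const τ
      have h3 := HasDerivAt.scomp x h2 hin
      rw [Function.comp_def] at h3
      rw [one_smul] at h3
      rw [hffun]
      simp only []
      refine h3.congr_deriv ?_
      rw [Complex.ofReal_add]
      ring
    have hD : ∀ x τ : ℝ, HasDerivAt (fun x : ℝ => f (x + τ) * (starRingEnd ℂ) (g τ) *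
        Complex.exp (-2*(π:ℂ)*Complex.I*(y:ℂ)*(τ:ℂ)))
        (Qd ((x:ℂ)+(τ:ℂ)) * f (x + τ) * (starRingEnd ℂ) (g τ) *
          Complex.exp (-2*(π:ℂ)*Complex.I*(y:ℂ)*(τ:ℂ))) x :=
      fun x τ => ((h1 x τ).mul_const _).mul_const _
    have key := hasDerivAt_integral_of_dominated_loc_of_deriv_le (μ := volume)
      (F := fun (x : ℝ) (τ : ℝ) => f (x + τ) * (starRingEnd ℂ) (g τ) *
        Complex.exp (-2*(π:ℂ)*Complex.I*(y:ℂ)*(τ:ℂ)))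
      (F' := fun (x : ℝ) (τ : ℝ) => Qd ((x:ℂ)+(τ:ℂ)) * f (x + τ) * (starRingEnd ℂ) (g τ) *
        Complex.exp (-2*(π:ℂ)*Complex.I*(y:ℂ)*(τ:ℂ)))
      (x₀ := t) (bound := fun τ => (‖lam‖+‖mu‖) * (M * ‖g τ‖) + ‖mu‖ * (M * (‖τ‖ * ‖g τ‖)))
      (s := Metric.ball t 1) (Metric.ball_mem_nhds t one_pos)
      (Filter.Eventually.of_forall fun x => (hcontF x y).aestronglyMeasurable)
      (hInt0 t y) ?meas ?bdd
      (((hgint.norm.const_mul M).const_mul _).add ((hg1.const_mul M).const_mul _)) ?diff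
    case meas =>
      refine Continuous.aestronglyMeasurable ?_
      refine (((hQdcont.comp (by fun_prop)).mul
        (hfc.comp (continuous_const.add continuous_id))).mul
        (continuous_star.comp g.continuous)).mul (Complex.continuous_exp.comp (by fun_prop))
    case bdd =>
      filter_upwards with τ
      intro x hx
      have hxt : |x - t| ≤ 1 := by
        rw [Metric.mem_ball, Real.dist_eq] at hx
        exact hx.le
      have hQdval : Qd ((x:ℂ)+(τ:ℂ)) = lam + mu * ((x - t : ℝ):ℂ) + mu * (τ:ℂ) := by
        rw [hQd, hlam, hmu]
        push_cast
        ring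
      have hQdb : ‖Qd ((x:ℂ)+(τ:ℂ))‖ ≤ ‖lam‖ + ‖mu‖ + ‖mu‖ * |τ| := by
        rw [hQdval]
        refine le_trans (norm_add_le _ _) ?_
        refine add_le_add (le_trans (norm_add_le _ _) (add_le_add le_rfl ?_)) ?_
        · rw [norm_mul, Complex.norm_real, Real.norm_eq_abs]
          calc ‖mu‖ * |x - t| ≤ ‖mu‖ * 1 := by
                exact mul_le_mul_of_nonneg_left hxt (norm_nonneg _)
            _ = ‖mu‖ := mul_one _
        · rw [norm_mul, Complex.norm_real, Real.norm_eq_abs]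
      rw [norm_mul, norm_mul, norm_mul, RCLike.norm_conj, hK1, mul_one]
      calc ‖Qd ((x:ℂ)+(τ:ℂ))‖ * ‖f (x+τ)‖ * ‖g τ‖
          ≤ (‖lam‖ + ‖mu‖ + ‖mu‖ * |τ|) * (M * ‖g τ‖) := by
            rw [mul_assoc]
            refine mul_le_mul hQdb ?_ (by positivity) (by positivity)
            exact mul_le_mul_of_nonneg_right (hMf _) (norm_nonneg _)
        _ = (‖lam‖+‖mu‖) * (M * ‖g τ‖) + ‖mu‖ * (M * (‖τ‖ * ‖g τ‖)) := by
            rw [Real.norm_eq_abs]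
            ring
    case diff =>
      filter_upwards with τ
      intro x _
      exact hD x τ
    have hsplit : (∫ τ : ℝ, Qd ((t:ℂ)+(τ:ℂ)) * f (t + τ) * (starRingEnd ℂ) (g τ) *
        Complex.exp (-2*(π:ℂ)*Complex.I*(y:ℂ)*(τ:ℂ)))
        = lam * STFT f (⇑g) t y + mu * I1 y := by
      have hfe : (fun τ : ℝ => Qd ((t:ℂ)+(τ:ℂ)) * f (t + τ) * (starRingEnd ℂ) (g τ) *
          Complex.exp (-2*(π:ℂ)*Complex.I*(y:ℂ)*(τ:ℂ)))
          = fun τ : ℝ => lam * (f (t + τ) * (starRingEnd ℂ) (g τ) *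
              Complex.exp (-2*(π:ℂ)*Complex.I*(y:ℂ)*(τ:ℂ))) +
            mu * ((τ:ℂ) * (f (t + τ) * (starRingEnd ℂ) (g τ) *
              Complex.exp (-2*(π:ℂ)*Complex.I*(y:ℂ)*(τ:ℂ)))) := by
        funext τ
        rw [hQdshift]
        ring
      rw [hfe, integral_add ((hInt0 t y).const_mul lam) ((hInt1 y).const_mul mu),
        MeasureTheory.integral_const_mul, MeasureTheory.integral_const_mul, hI1]
      rfl
    rw [show (fun t' : ℝ => STFT f (⇑g) t' y) = (fun x : ℝ => ∫ τ : ℝ,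
      f (x + τ) * (starRingEnd ℂ) (g τ) *
        Complex.exp (-2*(π:ℂ)*Complex.I*(y:ℂ)*(τ:ℂ))) from rfl, ← hsplit]
    exact key.2
  -- assembly
  have hVne : ∀ᶠ y in nhds η, STFT f (⇑g) t y ≠ 0 :=
    (hderivη η).continuousAt.eventually_ne hV
  have hEq : ωe =ᶠ[nhds η] fun y => lam / c2 + mu / c2 * (τe y - (t:ℂ)) := by
    filter_upwards [hVne] with y hy
    rw [hω, hτ]
    simp only []
    rw [(hderivη y).deriv, (hderivt y).deriv]
    field_simp
    ring
  have hq : deriv ωe η = mu / c2 * deriv τe η := by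
    rw [hEq.deriv_eq, deriv_const_add, deriv_const_mul_field, deriv_sub_const]
  have hω0 : ωe η = lam / c2 + mu / c2 * (τe η - (t:ℂ)) := hEq.self_of_nhds
  rw [hω0, hq]
  have hdd : mu / c2 * deriv τe η / deriv τe η = mu / c2 := by
    field_simp
  rw [hdd]
  have hsum : lam / c2 + mu / c2 * (τe η - (t:ℂ)) + mu / c2 * ((t:ℂ) - τe η) = lam / c2 := by
    ring
  rw [hsum, hlam, hc2]
  exact aux_re (α₁ + α₂ * t) (β₁ + β₂ * t)
end

section
/- Let f ∈ L¹(ℝ, ℂ) and let g : ℝ → ℂ be a Schwartz function. Fix (t,η) such that V_f^g(t,η) ≠ 0 and V_f^g(t,η)·V_f^{t²g}(t,η) − (V_f^{tg}(t,η))² ≠ 0. Then ∂_η τ̃_f(t,η) ≠ 0 and the second-order local complex modulation operator admits the closed form q̃_{η,f}(t,η) = ∂_η ω̃_f(t,η)/∂_η τ̃_f(t,η) = −(1/(2πi)) · [ (V_f^g)² + V_f^g·V_f^{tg'} − V_f^{g'}·V_f^{tg} ] / [ V_f^g·V_f^{t²g} − (V_f^{tg})² ], all STFTs being evaluated at (t,η).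 -/
open MeasureTheory Real

lemma twoPiI_ne : (2 * (π:ℂ) * Complex.I) ≠ 0 := by
  simp [Real.pi_ne_zero, Complex.I_ne_zero, Complex.ofReal_ne_zero]

lemma norm_cexp_eta (η τ : ℝ) :
    ‖Complex.exp (-2 * (π : ℂ) * Complex.I * (η : ℂ) * (τ : ℂ))‖ = 1 := by
  have hz : -2 * (π:ℂ) * Complex.I * (η:ℂ) * (τ:ℂ)
      = ((-2*π*η*τ : ℝ):ℂ) * Complex.I := by push_cast; ring
  rw [hz, Complex.norm_exp_ofReal_mul_I]

lemma schwartz_bound (g : SchwartzMap ℝ ℂ) (k : ℕ) :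
    ∃ C : ℝ, 0 < C ∧ ∀ x : ℝ, |x| ^ k * ‖g x‖ ≤ C := by
  obtain ⟨C, hC, h⟩ := g.decay k 0
  exact ⟨C, hC, fun x => by
    simpa [Real.norm_eq_abs, norm_iteratedFDeriv_zero] using h x⟩

lemma stft_integrable (f : ℝ → ℂ) (hf : Integrable f) {w : ℝ → ℂ} (hw : Continuous w)
    {C : ℝ} (hC : ∀ x : ℝ, ‖w x‖ ≤ C) (t η : ℝ) :
    Integrable (fun τ : ℝ => f (t + τ) * (starRingEnd ℂ) (w τ) *
      Complex.exp (-2 * (π : ℂ) * Complex.I * (η : ℂ) * (τ : ℂ))) := by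
  have hft : Integrable (fun τ : ℝ => f (t + τ)) := hf.comp_add_left t
  have h : Integrable (fun τ : ℝ => ((starRingEnd ℂ) (w τ) *
      Complex.exp (-2 * (π:ℂ) * Complex.I * (η:ℂ) * (τ:ℂ))) * f (t + τ)) := by
    refine hft.bdd_mul (c := C) ?_ (Filter.Eventually.of_forall fun τ => ?_)
    · exact ((Complex.continuous_conj.comp hw).mul (by fun_prop)).aestronglyMeasurable
    · rw [norm_mul, norm_cexp_eta, mul_one, RingHomIsometric.norm_map]
      exact hC τ
  exact h.congr (Filter.Eventually.of_forall fun τ => by ring)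

lemma hasDerivAt_STFT_eta (f : ℝ → ℂ) (hf : Integrable f) {w : ℝ → ℂ} (hw : Continuous w)
    {C0 C1 : ℝ} (h0 : ∀ x : ℝ, ‖w x‖ ≤ C0) (h1 : ∀ x : ℝ, |x| * ‖w x‖ ≤ C1)
    {w₂ : ℝ → ℂ} (hw₂ : ∀ τ : ℝ, w₂ τ = (τ:ℂ) * w τ) (t η : ℝ) :
    HasDerivAt (fun η' : ℝ => STFT f w t η')
      (-(2 * (π:ℂ) * Complex.I) * STFT f w₂ t η) η := by
  have hft : Integrable (fun τ : ℝ => f (t + τ)) := hf.comp_add_left t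
  set F : ℝ → ℝ → ℂ := fun η' τ => f (t + τ) * (starRingEnd ℂ) (w τ) *
    Complex.exp (-2 * (π : ℂ) * Complex.I * (η' : ℂ) * (τ : ℂ)) with hF
  set F' : ℝ → ℝ → ℂ := fun η' τ => f (t + τ) * (starRingEnd ℂ) (w τ) *
    (Complex.exp (-2 * (π : ℂ) * Complex.I * (η' : ℂ) * (τ : ℂ)) *
      (-2 * (π : ℂ) * Complex.I * (τ : ℂ))) with hF'
  have meas : ∀ η' : ℝ, AEStronglyMeasurable (F η') volume := fun η' =>
    (stft_integrable f hf hw h0 t η').1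
  have meas' : AEStronglyMeasurable (F' η) volume := by
    have h := (meas η).mul ((by fun_prop : Continuous fun τ : ℝ =>
      (-2 * (π : ℂ) * Complex.I * (τ : ℂ))).aestronglyMeasurable)
    exact h.congr (Filter.Eventually.of_forall fun τ => by simp only [hF, hF', Pi.mul_apply]; ring)
  have key := hasDerivAt_integral_of_dominated_loc_of_deriv_le (F := F) (F' := F')
    (μ := volume) (x₀ := η) (bound := fun τ => 2 * π * C1 * ‖f (t + τ)‖)
    (s := Metric.ball η 1) (Metric.ball_mem_nhds η one_pos)
    (Filter.Eventually.of_forall meas)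
    (stft_integrable f hf hw h0 t η)
    meas'
    (Filter.Eventually.of_forall fun τ => fun x _ => by
      have : ‖F' x τ‖ = ‖f (t + τ)‖ * ‖w τ‖ * (2 * π * |τ|) := by
        rw [hF']
        simp only [norm_mul, RingHomIsometric.norm_map, norm_cexp_eta, one_mul,
          show ‖(-2:ℂ)‖ = (2:ℝ) from by norm_num, Complex.norm_real, Complex.norm_I,
          Real.norm_eq_abs, abs_of_nonneg Real.pi_pos.le]
        ring
      rw [this]
      calc ‖f (t + τ)‖ * ‖w τ‖ * (2 * π * |τ|)
          = 2 * π * (|τ| * ‖w τ‖) * ‖f (t + τ)‖ := by ring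
        _ ≤ 2 * π * C1 * ‖f (t + τ)‖ := by
            have := h1 τ
            gcongr
      )
    ((hft.norm.const_mul (2 * π * C1)))
    (Filter.Eventually.of_forall fun τ => fun x _ => by
      have hinner : HasDerivAt (fun η' : ℝ =>
          Complex.exp (-2 * (π : ℂ) * Complex.I * (η' : ℂ) * (τ : ℂ)))
          (Complex.exp (-2 * (π : ℂ) * Complex.I * (x : ℂ) * (τ : ℂ)) *
            (-2 * (π : ℂ) * Complex.I * (τ : ℂ))) x := by
        have hc : HasDerivAt (fun z : ℂ =>
            Complex.exp (-2 * (π : ℂ) * Complex.I * z * (τ : ℂ)))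
            (Complex.exp (-2 * (π : ℂ) * Complex.I * ((x:ℝ) : ℂ) * (τ : ℂ)) *
              (-2 * (π : ℂ) * Complex.I * (τ : ℂ))) ((x:ℝ) : ℂ) := by
          have := (((hasDerivAt_id ((x:ℝ):ℂ)).const_mul
            (-2 * (π : ℂ) * Complex.I)).mul_const (τ:ℂ)).cexp
          simpa [mul_comm, mul_assoc, mul_left_comm] using this
        exact hc.comp_ofReal
      exact hinner.const_mul _)
  refine key.2.congr_deriv ?_
  symm
  rw [show STFT f w₂ t η = ∫ τ : ℝ, f (t + τ) * (starRingEnd ℂ) ((τ:ℂ) * w τ) *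
      Complex.exp (-2 * (π : ℂ) * Complex.I * (η : ℂ) * (τ : ℂ)) by
    unfold STFT; congr 1; funext τ; rw [hw₂]]
  rw [← integral_const_mul]
  congr 1; funext τ
  simp only [map_mul, Complex.conj_ofReal]
  ring

lemma STFT_shift (f w : ℝ → ℂ) (t η : ℝ) :
    STFT f w t η = ∫ u : ℝ, f u * (starRingEnd ℂ) (w (u - t)) *
      Complex.exp (-2 * (π : ℂ) * Complex.I * (η : ℂ) * ((u : ℂ) - (t : ℂ))) := by
  rw [STFT, ← integral_add_left_eq_self t (f := fun u : ℝ => f u * (starRingEnd ℂ) (w (u - t)) *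
      Complex.exp (-2 * (π : ℂ) * Complex.I * (η : ℂ) * ((u : ℂ) - (t : ℂ))))]
  congr 1; funext τ
  have h1 : t + τ - t = τ := by ring
  have h2 : ((t + τ : ℝ) : ℂ) - (t : ℂ) = (τ : ℂ) := by push_cast; ring
  rw [h1, h2]

lemma norm_cexp_shift (η u s : ℝ) :
    ‖Complex.exp (-2 * (π : ℂ) * Complex.I * (η : ℂ) * ((u : ℂ) - (s : ℂ)))‖ = 1 := by
  have hz : -2 * (π:ℂ) * Complex.I * (η:ℂ) * ((u:ℂ) - (s:ℂ))
      = ((-2*π*η*(u - s) : ℝ):ℂ) * Complex.I := by push_cast; ring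
  rw [hz, Complex.norm_exp_ofReal_mul_I]

lemma shifted_integrable (f : ℝ → ℂ) (hf : Integrable f) {w : ℝ → ℂ} (hw : Continuous w)
    {C : ℝ} (hC : ∀ x : ℝ, ‖w x‖ ≤ C) (t η : ℝ) :
    Integrable (fun u : ℝ => f u * (starRingEnd ℂ) (w (u - t)) *
      Complex.exp (-2 * (π : ℂ) * Complex.I * (η : ℂ) * ((u : ℂ) - (t : ℂ)))) := by
  have h : Integrable (fun u : ℝ => ((starRingEnd ℂ) (w (u - t)) *
      Complex.exp (-2 * (π : ℂ) * Complex.I * (η : ℂ) * ((u : ℂ) - (t : ℂ)))) * f u) := by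
    refine hf.bdd_mul (c := C) ?_ (Filter.Eventually.of_forall fun u => ?_)
    · exact ((Complex.continuous_conj.comp (hw.comp (continuous_id.sub continuous_const))).mul
        (by fun_prop)).aestronglyMeasurable
    · rw [norm_mul, norm_cexp_shift, mul_one, RingHomIsometric.norm_map]
      exact hC (u - t)
  exact h.congr (Filter.Eventually.of_forall fun u => by ring)

lemma hasDerivAt_STFT_t (f : ℝ → ℂ) (hf : Integrable f) (g : SchwartzMap ℝ ℂ) (t η : ℝ) :
    HasDerivAt (fun t' : ℝ => STFT f (⇑g) t' η)
      (-(STFT f (deriv (⇑g)) t η) + 2 * (π:ℂ) * Complex.I * (η:ℂ) * STFT f (⇑g) t η) t := by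
  obtain ⟨Cg, hCgpos, hCg⟩ := g.decay 0 0
  have hCg' : ∀ x : ℝ, ‖g x‖ ≤ Cg := fun x => by
    simpa [norm_iteratedFDeriv_zero] using hCg x
  set g' : SchwartzMap ℝ ℂ := SchwartzMap.derivCLM ℝ ℂ g with hg'
  have hg'coe : ⇑g' = deriv (⇑g) := funext fun x => SchwartzMap.derivCLM_apply ℝ g x
  obtain ⟨Cd, hCdpos, hCd⟩ := g'.decay 0 0
  have hCd' : ∀ x : ℝ, ‖deriv (⇑g) x‖ ≤ Cd := fun x => by
    rw [← hg'coe]; simpa [norm_iteratedFDeriv_zero] using hCd x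
  set F : ℝ → ℝ → ℂ := fun t' u => f u * ((starRingEnd ℂ) (g (u - t')) *
    Complex.exp (-2 * (π : ℂ) * Complex.I * (η : ℂ) * ((u : ℂ) - (t' : ℂ)))) with hF
  set F' : ℝ → ℝ → ℂ := fun t' u => f u *
    ((starRingEnd ℂ) (deriv (⇑g) (u - t') * (-1)) *
        Complex.exp (-2 * (π : ℂ) * Complex.I * (η : ℂ) * ((u : ℂ) - (t' : ℂ)))
      + (starRingEnd ℂ) (g (u - t')) *
        (Complex.exp (-2 * (π : ℂ) * Complex.I * (η : ℂ) * ((u : ℂ) - (t' : ℂ))) *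
          (-2 * (π : ℂ) * Complex.I * (η : ℂ) * (-1)))) with hF'
  have contK : ∀ t' : ℝ, Continuous fun u : ℝ => (starRingEnd ℂ) (g (u - t')) *
      Complex.exp (-2 * (π : ℂ) * Complex.I * (η : ℂ) * ((u : ℂ) - (t' : ℂ))) := fun t' =>
    ((Complex.continuous_conj.comp (g.continuous.comp
      (continuous_id.sub continuous_const))).mul (by fun_prop))
  have meas : ∀ t' : ℝ, AEStronglyMeasurable (F t') volume := fun t' =>
    hf.1.mul (contK t').aestronglyMeasurable
  have hg'cont : Continuous (deriv (⇑g)) := by rw [← hg'coe]; exact g'.continuous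
  have meas' : AEStronglyMeasurable (F' t) volume := by
    refine hf.1.mul (Continuous.aestronglyMeasurable ?_)
    apply Continuous.add
    · exact (Complex.continuous_conj.comp ((hg'cont.comp
        (continuous_id.sub continuous_const)).mul continuous_const)).mul (by fun_prop)
    · exact (Complex.continuous_conj.comp (g.continuous.comp
        (continuous_id.sub continuous_const))).mul (by fun_prop)
  have key := hasDerivAt_integral_of_dominated_loc_of_deriv_le (F := F) (F' := F')
    (μ := volume) (x₀ := t) (bound := fun u => ‖f u‖ * (Cd + Cg * (2 * π * |η|)))
    (s := Metric.ball t 1) (Metric.ball_mem_nhds t one_pos)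
    (Filter.Eventually.of_forall meas)
    (by
      have := (shifted_integrable f hf g.continuous hCg' t η)
      exact this.congr (Filter.Eventually.of_forall fun u => by simp only [hF]; ring))
    meas'
    (Filter.Eventually.of_forall fun u => fun x _ => by
      have hb : ‖F' x u‖ ≤ ‖f u‖ * (Cd + Cg * (2 * π * |η|)) := by
        rw [hF']
        simp only [norm_mul]
        gcongr
        refine (norm_add_le _ _).trans ?_
        have e1 : ‖(starRingEnd ℂ) (deriv (⇑g) (u - x) * (-1)) *
            Complex.exp (-2 * (π : ℂ) * Complex.I * (η : ℂ) * ((u : ℂ) - (x : ℂ)))‖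
            ≤ Cd := by
          rw [norm_mul, norm_cexp_shift, mul_one, RingHomIsometric.norm_map, norm_mul]
          simpa using hCd' (u - x)
        have e2 : ‖(starRingEnd ℂ) (g (u - x)) *
            (Complex.exp (-2 * (π : ℂ) * Complex.I * (η : ℂ) * ((u : ℂ) - (x : ℂ))) *
              (-2 * (π : ℂ) * Complex.I * (η : ℂ) * (-1)))‖
            ≤ Cg * (2 * π * |η|) := by
          rw [norm_mul, norm_mul, norm_cexp_shift, one_mul, RingHomIsometric.norm_map]
          have : ‖-2 * (π : ℂ) * Complex.I * (η : ℂ) * (-1)‖ = 2 * π * |η| := by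
            simp only [norm_mul, show ‖(-2:ℂ)‖ = (2:ℝ) from by norm_num,
              show ‖(-1:ℂ)‖ = (1:ℝ) from by norm_num, Complex.norm_real, Complex.norm_I,
              Real.norm_eq_abs, abs_of_nonneg Real.pi_pos.le]
            ring
          rw [this]
          exact mul_le_mul_of_nonneg_right (hCg' (u - x)) (by positivity)
        exact add_le_add e1 e2
      exact hb)
    (hf.norm.mul_const _)
    (Filter.Eventually.of_forall fun u => fun x _ => by
      have hre : HasDerivAt (fun y : ℝ => ((y:ℝ):ℂ)) 1 x := by
        simpa using (hasDerivAt_id x).ofReal_comp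
      have hsub : HasDerivAt (fun t' : ℝ => u - t') (-1 : ℝ) x :=
        (hasDerivAt_id x).const_sub u
      have hgd : HasDerivAt (fun t' : ℝ => g (u - t')) (deriv (⇑g) (u - x) * (-1)) x := by
        have h0 : HasDerivAt (⇑g) (deriv (⇑g) (u - x)) (u - x) :=
          g.differentiableAt.hasDerivAt
        have hc := HasDerivAt.scomp x h0 hsub
        simpa [Function.comp_def, neg_smul, one_smul, mul_neg_one] using hc
      have hconj : HasDerivAt (fun t' : ℝ => (starRingEnd ℂ) (g (u - t')))
          ((starRingEnd ℂ) (deriv (⇑g) (u - x) * (-1))) x := by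
        simpa [Complex.star_def] using hgd.star
      have hsub2 : HasDerivAt (fun t' : ℝ => (u : ℂ) - (t' : ℂ)) (-1 : ℂ) x :=
        hre.const_sub ((u:ℝ):ℂ)
      have hexp : HasDerivAt (fun t' : ℝ =>
          Complex.exp (-2 * (π : ℂ) * Complex.I * (η : ℂ) * ((u : ℂ) - (t' : ℂ))))
          (Complex.exp (-2 * (π : ℂ) * Complex.I * (η : ℂ) * ((u : ℂ) - (x : ℂ))) *
            (-2 * (π : ℂ) * Complex.I * (η : ℂ) * (-1))) x :=
        (hsub2.const_mul (-2 * (π : ℂ) * Complex.I * (η : ℂ))).cexp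
      exact (hconj.mul hexp).const_mul (f u))
  have hfun : (fun t' : ℝ => STFT f (⇑g) t' η) = fun t' : ℝ => ∫ u : ℝ, F t' u := by
    funext t'
    rw [STFT_shift]
    congr 1; funext u; simp only [hF]; ring
  have Int1 : Integrable (fun u : ℝ => f u * (starRingEnd ℂ) (deriv (⇑g) (u - t)) *
      Complex.exp (-2 * (π : ℂ) * Complex.I * (η : ℂ) * ((u : ℂ) - (t : ℂ)))) :=
    shifted_integrable f hf hg'cont hCd' t η
  have Int2 : Integrable (fun u : ℝ => f u * (starRingEnd ℂ) (g (u - t)) *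
      Complex.exp (-2 * (π : ℂ) * Complex.I * (η : ℂ) * ((u : ℂ) - (t : ℂ)))) :=
    shifted_integrable f hf g.continuous hCg' t η
  have hval : (∫ u : ℝ, F' t u) = -(STFT f (deriv (⇑g)) t η)
      + 2 * (π:ℂ) * Complex.I * (η:ℂ) * STFT f (⇑g) t η := by
    have hsplit : (fun u : ℝ => F' t u) = fun u : ℝ =>
        (-(f u * (starRingEnd ℂ) (deriv (⇑g) (u - t)) *
          Complex.exp (-2 * (π : ℂ) * Complex.I * (η : ℂ) * ((u : ℂ) - (t : ℂ)))))
        + (2 * (π:ℂ) * Complex.I * (η:ℂ)) * (f u * (starRingEnd ℂ) (g (u - t)) *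
          Complex.exp (-2 * (π : ℂ) * Complex.I * (η : ℂ) * ((u : ℂ) - (t : ℂ)))) := by
      funext u
      simp only [hF', map_mul, map_neg, map_one]
      ring
    have Int1n : Integrable (fun u : ℝ => -(f u * (starRingEnd ℂ) (deriv (⇑g) (u - t)) *
        Complex.exp (-2 * (π : ℂ) * Complex.I * (η : ℂ) * ((u : ℂ) - (t : ℂ))))) := Int1.neg
    have Int2c : Integrable (fun u : ℝ => (2 * (π:ℂ) * Complex.I * (η:ℂ)) *
        (f u * (starRingEnd ℂ) (g (u - t)) *
          Complex.exp (-2 * (π : ℂ) * Complex.I * (η : ℂ) * ((u : ℂ) - (t : ℂ))))) :=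
      Int2.const_mul _
    rw [hsplit, integral_add Int1n Int2c, integral_neg, integral_const_mul,
      ← STFT_shift, ← STFT_shift]
  rw [hfun, ← hval]
  exact key.2


/-- closed form of the second-order local complex modulation operator:
`q̃_{η,f}(t,η) = −(1/(2πi))·[(V_f^g)² + V_f^g·V_f^{tg'} − V_f^{g'}·V_f^{tg}] /
[V_f^g·V_f^{t²g} − (V_f^{tg})²]`. -/
theorem modulation_operator_closed_form (f : ℝ → ℂ) (hf : Integrable f)
    (g : SchwartzMap ℝ ℂ) (t η : ℝ) (hV : STFT f (⇑g) t η ≠ 0)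
    (hD : STFT f (⇑g) t η * STFT f (fun τ : ℝ => (τ : ℂ) ^ 2 * g τ) t η
        - (STFT f (fun τ : ℝ => (τ : ℂ) * g τ) t η) ^ 2 ≠ 0)
    (ωe τe : ℝ → ℂ)
    (hω : ωe = fun η' : ℝ => deriv (fun t' : ℝ => STFT f (⇑g) t' η') t /
      (2 * (π : ℂ) * Complex.I * STFT f (⇑g) t η'))
    (hτ : τe = fun η' : ℝ => (t : ℂ) - deriv (fun η'' : ℝ => STFT f (⇑g) t η'') η' /
      (2 * (π : ℂ) * Complex.I * STFT f (⇑g) t η')) :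
    deriv τe η ≠ 0 ∧
    deriv ωe η / deriv τe η
      = -(1 / (2 * (π : ℂ) * Complex.I)) *
          (((STFT f (⇑g) t η) ^ 2
              + STFT f (⇑g) t η * STFT f (fun τ : ℝ => (τ : ℂ) * deriv (⇑g) τ) t η
              - STFT f (deriv (⇑g)) t η * STFT f (fun τ : ℝ => (τ : ℂ) * g τ) t η) /
            (STFT f (⇑g) t η * STFT f (fun τ : ℝ => (τ : ℂ) ^ 2 * g τ) t η
              - (STFT f (fun τ : ℝ => (τ : ℂ) * g τ) t η) ^ 2)) := by
  -- bounds on the various windows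
  obtain ⟨C0, _, hb0⟩ := schwartz_bound g 0
  obtain ⟨C1, _, hb1⟩ := schwartz_bound g 1
  obtain ⟨C2, _, hb2⟩ := schwartz_bound g 2
  have h0 : ∀ x : ℝ, ‖g x‖ ≤ C0 := fun x => by simpa using hb0 x
  have h1 : ∀ x : ℝ, |x| * ‖g x‖ ≤ C1 := fun x => by simpa using hb1 x
  set g' : SchwartzMap ℝ ℂ := SchwartzMap.derivCLM ℝ ℂ g with hg'
  have hg'coe : ⇑g' = deriv (⇑g) := funext fun x => SchwartzMap.derivCLM_apply ℝ g x
  have hg'cont : Continuous (deriv (⇑g)) := by rw [← hg'coe]; exact g'.continuous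
  obtain ⟨D0, _, hd0⟩ := schwartz_bound g' 0
  obtain ⟨D1, _, hd1⟩ := schwartz_bound g' 1
  have hd0' : ∀ x : ℝ, ‖deriv (⇑g) x‖ ≤ D0 := fun x => by
    rw [← hg'coe]; simpa using hd0 x
  have hd1' : ∀ x : ℝ, |x| * ‖deriv (⇑g) x‖ ≤ D1 := fun x => by
    rw [← hg'coe]; simpa using hd1 x
  have hwn : ∀ x : ℝ, ‖(x:ℂ) * g x‖ = |x| * ‖g x‖ := fun x => by
    rw [norm_mul, Complex.norm_real, Real.norm_eq_abs]
  have h0w : ∀ x : ℝ, ‖(x:ℂ) * g x‖ ≤ C1 := fun x => by rw [hwn]; exact h1 x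
  have h1w : ∀ x : ℝ, |x| * ‖(x:ℂ) * g x‖ ≤ C2 := fun x => by
    rw [hwn]
    have := hb2 x
    calc |x| * (|x| * ‖g x‖) = |x| ^ 2 * ‖g x‖ := by ring
      _ ≤ C2 := this
  have hwcont : Continuous fun x : ℝ => (x:ℂ) * g x :=
    Complex.continuous_ofReal.mul g.continuous
  -- derivatives in η
  have hB : ∀ η' : ℝ, HasDerivAt (fun y : ℝ => STFT f (⇑g) t y)
      (-(2 * (π:ℂ) * Complex.I) * STFT f (fun τ : ℝ => (τ:ℂ) * g τ) t η') η' :=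
    fun η' => hasDerivAt_STFT_eta f hf g.continuous h0 h1
      (w₂ := fun τ : ℝ => (τ:ℂ) * g τ) (fun _ => rfl) t η'
  have hBtg : HasDerivAt (fun y : ℝ => STFT f (fun τ : ℝ => (τ:ℂ) * g τ) t y)
      (-(2 * (π:ℂ) * Complex.I) * STFT f (fun τ : ℝ => (τ:ℂ) ^ 2 * g τ) t η) η :=
    hasDerivAt_STFT_eta f hf hwcont h0w h1w
      (w₂ := fun τ : ℝ => (τ:ℂ) ^ 2 * g τ) (fun τ => by ring) t η
  have hBg' : HasDerivAt (fun y : ℝ => STFT f (deriv (⇑g)) t y)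
      (-(2 * (π:ℂ) * Complex.I) * STFT f (fun τ : ℝ => (τ:ℂ) * deriv (⇑g) τ) t η) η :=
    hasDerivAt_STFT_eta f hf hg'cont hd0' hd1'
      (w₂ := fun τ : ℝ => (τ:ℂ) * deriv (⇑g) τ) (fun _ => rfl) t η
  -- rewrite the reassignment operators
  have hτe : τe = fun η' : ℝ => (t:ℂ) -
      (-(2 * (π:ℂ) * Complex.I) * STFT f (fun τ : ℝ => (τ:ℂ) * g τ) t η') /
      (2 * (π:ℂ) * Complex.I * STFT f (⇑g) t η') := by
    rw [hτ]; funext η'; rw [(hB η').deriv]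
  have hωe : ωe = fun η' : ℝ =>
      (-(STFT f (deriv (⇑g)) t η') + 2 * (π:ℂ) * Complex.I * (η':ℂ) * STFT f (⇑g) t η') /
      (2 * (π:ℂ) * Complex.I * STFT f (⇑g) t η') := by
    rw [hω]; funext η'; rw [(hasDerivAt_STFT_t f hf g t η').deriv]
  have hden : 2 * (π:ℂ) * Complex.I * STFT f (⇑g) t η ≠ 0 := mul_ne_zero twoPiI_ne hV
  -- derivative of τe
  have Hτ : HasDerivAt τe (-(2 * (π:ℂ) * Complex.I) *
      (STFT f (⇑g) t η * STFT f (fun τ : ℝ => (τ:ℂ) ^ 2 * g τ) t η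
        - (STFT f (fun τ : ℝ => (τ:ℂ) * g τ) t η) ^ 2) / (STFT f (⇑g) t η) ^ 2) η := by
    rw [hτe]
    have hnum := hBtg.const_mul (-(2 * (π:ℂ) * Complex.I))
    have hden' := (hB η).const_mul (2 * (π:ℂ) * Complex.I)
    have Hq := (hnum.div hden' hden).const_sub (t:ℂ)
    refine Hq.congr_deriv ?_
    symm
    field_simp [twoPiI_ne]
  -- derivative of ωe
  have h1lin : HasDerivAt (fun η' : ℝ => 2 * (π:ℂ) * Complex.I * (η':ℂ))
      (2 * (π:ℂ) * Complex.I) η := by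
    simpa using Complex.ofRealCLM.hasDerivAt.const_mul (2 * (π:ℂ) * Complex.I)
  have Hω : HasDerivAt ωe
      (((STFT f (⇑g) t η) ^ 2
          + STFT f (⇑g) t η * STFT f (fun τ : ℝ => (τ:ℂ) * deriv (⇑g) τ) t η
          - STFT f (deriv (⇑g)) t η * STFT f (fun τ : ℝ => (τ:ℂ) * g τ) t η) /
        (STFT f (⇑g) t η) ^ 2) η := by
    rw [hωe]
    have hN := (hBg'.neg).add (h1lin.mul (hB η))
    have hden' := (hB η).const_mul (2 * (π:ℂ) * Complex.I)
    have Hq := hN.div hden' hden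
    refine Hq.congr_deriv ?_
    symm
    simp only [Pi.add_apply, Pi.neg_apply, Pi.mul_apply]
    field_simp [twoPiI_ne]
    ring
  constructor
  · rw [Hτ.deriv]
    exact div_ne_zero (mul_ne_zero (neg_ne_zero.mpr twoPiI_ne) hD) (pow_ne_zero 2 hV)
  · rw [Hω.deriv, Hτ.deriv]
    have ha2 : (STFT f (⇑g) t η) ^ 2 ≠ 0 := pow_ne_zero 2 hV
    field_simp [twoPiI_ne, hV, hD, ha2]
end

section
/- Let P(τ) = Σ_{k=0}^N c_k τ^k/k! be a complex polynomial of degree at most N ≥ 1 whose real part is bounded above on ℝ; write P = log A + 2πi·φ with real polynomials log A = Re P and φ = Im P/(2π), set f(τ) = exp(P(τ)) = A(τ)e^{2πiφ(τ)}, let g : ℝ → ℂ be a Schwartz function, and define r_k(t) = P^{(k)}(t)/(2πi·(k−1)!) for 1 ≤ k ≤ N. Then at every point (t,η) with V_f^g(t,η) ≠ 0, the instantaneous frequency is recovered exactly: φ'(t) = Re( ω̃_f(t,η) − Σ_{k=2}^N r_k(t) · V_f^{t^{k−1} g}(t,η)/V_f^g(t,η) ). -/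
open MeasureTheory Real

/- Auxiliary lemmas -/

lemma aux_poly_norm_le (Q : Polynomial ℂ) (z : ℂ) :
    ‖Q.eval z‖ ≤ (∑ i ∈ Finset.range (Q.natDegree + 1), ‖Q.coeff i‖) * (1 + ‖z‖) ^ Q.natDegree := by
  rw [Polynomial.eval_eq_sum_range, Finset.sum_mul]
  refine (norm_sum_le _ _).trans (Finset.sum_le_sum fun i hi => ?_)
  rw [norm_mul, norm_pow]
  have h1 : (0:ℝ) ≤ 1 + ‖z‖ := by positivity
  have h2 : ‖z‖ ^ i ≤ (1 + ‖z‖) ^ Q.natDegree := by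
    calc ‖z‖ ^ i ≤ (1 + ‖z‖) ^ i :=
          pow_le_pow_left₀ (norm_nonneg z) (by linarith) i
      _ ≤ (1 + ‖z‖) ^ Q.natDegree :=
          pow_le_pow_right₀ (by linarith [norm_nonneg z]) (by
            simpa [Nat.lt_succ_iff] using hi)
  exact mul_le_mul_of_nonneg_left h2 (norm_nonneg _)

lemma aux_int_pow_mul (g : SchwartzMap ℝ ℂ) (d : ℕ) :
    Integrable (fun τ : ℝ => (1 + |τ|) ^ d * ‖g τ‖) := by
  have : (fun τ : ℝ => (1 + |τ|) ^ d * ‖g τ‖)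
      = fun τ : ℝ => ∑ i ∈ Finset.range (d + 1),
          (d.choose i : ℝ) * (|τ| ^ (d - i) * ‖g τ‖) := by
    funext τ
    rw [add_pow, Finset.sum_mul]
    refine Finset.sum_congr rfl fun i _ => ?_
    ring
  rw [this]
  refine integrable_finset_sum _ fun i _ => Integrable.const_mul ?_ _
  simpa [Real.norm_eq_abs] using g.integrable_pow_mul volume (d - i)

lemma aux_sum_Icc2 {α : Type*} [AddCommMonoid α] (M : ℕ) (f : ℕ → α) :
    ∑ k ∈ Finset.Icc 2 (M + 1), f k = ∑ j ∈ Finset.range M, f (j + 2) := by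
  induction M with
  | zero => simp
  | succ m ih =>
      rw [Finset.sum_range_succ, ← ih, Finset.sum_Icc_succ_top (by omega)]

/-- for `f = exp ∘ P`, `P = log A + 2πi·φ` a polynomial of degree at most
`N` with real part bounded above, the instantaneous frequency `φ'(t) = Im(P'(t))/(2π)` is
recovered exactly:
`φ'(t) = Re(ω̃_f(t,η) − Σ_{k=2}^N r_k(t)·V_f^{t^{k−1}g}(t,η)/V_f^g(t,η))`,
where `r_k(t) = P^{(k)}(t)/(2πi·(k−1)!)`. -/
theorem exact_if_recovery_poly_exp (N : ℕ) (hN : 1 ≤ N) (P : Polynomial ℂ)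
    (hdeg : P.natDegree ≤ N)
    (hbd : ∃ M : ℝ, ∀ τ : ℝ, (P.eval (τ : ℂ)).re ≤ M)
    (f : ℝ → ℂ) (hf : f = fun τ : ℝ => Complex.exp (P.eval (τ : ℂ)))
    (g : SchwartzMap ℝ ℂ) (r : ℕ → ℝ → ℂ)
    (hr : ∀ k : ℕ, 1 ≤ k → k ≤ N → ∀ t : ℝ,
      r k t = (Polynomial.derivative^[k] P).eval (t : ℂ) /
        (2 * (π : ℂ) * Complex.I * (Nat.factorial (k - 1) : ℂ)))
    (t η : ℝ) (hV : STFT f (⇑g) t η ≠ 0) :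
    ((Polynomial.derivative P).eval (t : ℂ)).im / (2 * π)
      = (deriv (fun t' : ℝ => STFT f (⇑g) t' η) t /
            (2 * (π : ℂ) * Complex.I * STFT f (⇑g) t η)
          - ∑ k ∈ Finset.Icc 2 N,
              r k t * (STFT f (fun τ : ℝ => (τ : ℂ) ^ (k - 1) * g τ) t η /
                STFT f (⇑g) t η)).re := by
  obtain ⟨B, hB⟩ := hbd
  -- notation
  set P' := Polynomial.derivative P with hP'
  set e : ℝ → ℂ := fun τ => Complex.exp (-2 * (π : ℂ) * Complex.I * (η : ℂ) * (τ : ℂ)) with he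
  set F : ℝ → ℝ → ℂ := fun x τ => f (x + τ) * (starRingEnd ℂ) (g τ) * e τ with hF
  have hSTFT : ∀ x : ℝ, STFT f (⇑g) x η = ∫ τ : ℝ, F x τ := by
    intro x
    simp only [STFT, hF, he]
  have hnorme : ∀ τ : ℝ, ‖e τ‖ = 1 := by
    intro τ
    simp only [he, Complex.norm_exp]
    have : (-2 * (π : ℂ) * Complex.I * (η : ℂ) * (τ : ℂ)).re = 0 := by
      simp [Complex.ext_iff]
    rw [this, Real.exp_zero]
  have hnormf : ∀ s : ℝ, ‖f s‖ ≤ Real.exp B := by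
    intro s
    rw [hf]
    simp only [Complex.norm_exp]
    exact Real.exp_le_exp.2 (hB s)
  have hnormF : ∀ x τ : ℝ, ‖F x τ‖ ≤ Real.exp B * ‖g τ‖ := by
    intro x τ
    simp only [hF, norm_mul, hnorme, mul_one, RCLike.norm_conj]
    exact mul_le_mul_of_nonneg_right (hnormf _) (norm_nonneg _)
  have hcontf : Continuous f := by
    rw [hf]
    exact Complex.continuous_exp.comp ((P.continuous_aeval).comp Complex.continuous_ofReal)
  have hconte : Continuous e := by
    apply Complex.continuous_exp.comp
    continuity
  have hcontF : ∀ x : ℝ, Continuous (F x) := by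
    intro x
    apply Continuous.mul (Continuous.mul ?_ ?_) hconte
    · exact hcontf.comp (by continuity)
    · exact Complex.continuous_conj.comp g.continuous
  -- integrability of polynomial × integrand
  have hint_pow : ∀ (x : ℝ) (d : ℕ),
      Integrable (fun τ : ℝ => (τ : ℂ) ^ d * F x τ) := by
    intro x d
    refine Integrable.mono' ((aux_int_pow_mul g d).const_mul (Real.exp B))
      (Continuous.aestronglyMeasurable (by exact (Complex.continuous_ofReal.pow d).mul (hcontF x)))
      (Filter.Eventually.of_forall fun τ => ?_)
    rw [norm_mul, norm_pow, Complex.norm_real, Real.norm_eq_abs]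
    calc |τ| ^ d * ‖F x τ‖ ≤ |τ| ^ d * (Real.exp B * ‖g τ‖) :=
          mul_le_mul_of_nonneg_left (hnormF x τ) (by positivity)
      _ ≤ (1 + |τ|) ^ d * (Real.exp B * ‖g τ‖) := by
          refine mul_le_mul_of_nonneg_right
            (pow_le_pow_left₀ (abs_nonneg τ) (by linarith [abs_nonneg τ]) d) (by positivity)
      _ = Real.exp B * ((1 + |τ|) ^ d * ‖g τ‖) := by ring
  have hintF : ∀ x : ℝ, Integrable (F x) := by
    intro x
    have := hint_pow x 0
    simpa using this
  -- the derivative of the STFT in t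
  set D := P'.natDegree with hD
  set C : ℝ := ∑ i ∈ Finset.range (D + 1), ‖P'.coeff i‖ with hC
  have hC0 : 0 ≤ C := Finset.sum_nonneg fun i _ => norm_nonneg _
  set F' : ℝ → ℝ → ℂ := fun x τ => P'.eval ((x : ℂ) + (τ : ℂ)) * F x τ with hF'
  have hderivF : ∀ (τ : ℝ) (x : ℝ), HasDerivAt (fun x' => F x' τ) (F' x τ) x := by
    intro τ x
    have h1 : ∀ w : ℂ, HasDerivAt (fun z : ℂ => Complex.exp (P.eval (z + (τ : ℂ))))
        (P'.eval (w + (τ : ℂ)) * Complex.exp (P.eval (w + (τ : ℂ)))) w := by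
      intro w
      have hpoly : HasDerivAt (fun z : ℂ => P.eval (z + (τ : ℂ)))
          (P'.eval (w + (τ : ℂ))) w := by
        have := (P.hasDerivAt (w + (τ : ℂ))).comp w
          ((hasDerivAt_id w).add_const (τ : ℂ))
        simpa [Function.comp_def, hP'] using this
      simpa [mul_comm] using hpoly.cexp
    have h2 : HasDerivAt (fun x' : ℝ => Complex.exp (P.eval ((x' : ℂ) + (τ : ℂ))))
        (P'.eval ((x : ℂ) + (τ : ℂ)) * Complex.exp (P.eval ((x : ℂ) + (τ : ℂ)))) x :=
      (h1 (x : ℂ)).comp_ofReal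
    have h3 := h2.mul_const ((starRingEnd ℂ) (g τ) * e τ)
    have heq : (fun x' : ℝ => Complex.exp (P.eval ((x' : ℂ) + (τ : ℂ))) *
        ((starRingEnd ℂ) (g τ) * e τ)) = fun x' : ℝ => F x' τ := by
      funext x'
      simp only [hF, hf]
      push_cast
      ring
    rw [heq] at h3
    have heq2 : P'.eval ((x : ℂ) + (τ : ℂ)) * Complex.exp (P.eval ((x : ℂ) + (τ : ℂ))) *
        ((starRingEnd ℂ) (g τ) * e τ) = F' x τ := by
      simp only [hF', hF, hf]
      push_cast
      ring
    rwa [heq2] at h3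
  have hboundF' : ∀ τ : ℝ, ∀ x ∈ Metric.ball t 1,
      ‖F' x τ‖ ≤ (C * (2 + |t|) ^ D * Real.exp B) * ((1 + |τ|) ^ D * ‖g τ‖) := by
    intro τ x hx
    have hxt : |x - t| < 1 := by simpa [Real.dist_eq] using hx
    have hP'le : ‖P'.eval ((x : ℂ) + (τ : ℂ))‖ ≤ C * ((2 + |t|) * (1 + |τ|)) ^ D := by
      refine (aux_poly_norm_le P' _).trans ?_
      refine mul_le_mul_of_nonneg_left (pow_le_pow_left₀ (by positivity) ?_ D) hC0
      have : ‖(x : ℂ) + (τ : ℂ)‖ ≤ |x| + |τ| := by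
        refine (norm_add_le _ _).trans ?_
        simp [Complex.norm_real, Real.norm_eq_abs]
      have hxle : |x| ≤ |t| + 1 := by
        have := abs_sub_abs_le_abs_sub x t
        linarith
      nlinarith [abs_nonneg τ, abs_nonneg t, abs_nonneg x]
    simp only [hF', norm_mul]
    calc ‖P'.eval ((x : ℂ) + (τ : ℂ))‖ * ‖F x τ‖
        ≤ (C * ((2 + |t|) * (1 + |τ|)) ^ D) * (Real.exp B * ‖g τ‖) :=
          mul_le_mul hP'le (hnormF x τ) (norm_nonneg _) (by positivity)
      _ = (C * (2 + |t|) ^ D * Real.exp B) * ((1 + |τ|) ^ D * ‖g τ‖) := by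
          rw [mul_pow]; ring
  have hmeasF' : AEStronglyMeasurable (F' t) volume := by
    refine Continuous.aestronglyMeasurable ?_
    exact (Continuous.mul (P'.continuous.comp (continuous_const.add Complex.continuous_ofReal)) (hcontF t))
  have hHasDeriv : HasDerivAt (fun x => ∫ τ : ℝ, F x τ) (∫ τ : ℝ, F' t τ) t := by
    refine (hasDerivAt_integral_of_dominated_loc_of_deriv_le (Metric.ball_mem_nhds t one_pos)
      (Filter.Eventually.of_forall fun x => (hcontF x).aestronglyMeasurable)
      (hintF t) hmeasF'
      (Filter.Eventually.of_forall fun τ => hboundF' τ)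
      (((aux_int_pow_mul g D).const_mul _))
      (Filter.Eventually.of_forall fun τ x _ => hderivF τ x)).2
  have hderivV : deriv (fun t' : ℝ => STFT f (⇑g) t' η) t = ∫ τ : ℝ, F' t τ := by
    have : (fun t' : ℝ => STFT f (⇑g) t' η) = fun x => ∫ τ : ℝ, F x τ := by
      funext x; exact hSTFT x
    rw [this]
    exact hHasDeriv.deriv
  -- Taylor expansion of P' around t
  have hdegP' : P'.natDegree < N := by
    have h1 : P'.natDegree ≤ P.natDegree - 1 := by
      rw [hP']; exact Polynomial.natDegree_derivative_le P
    omega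
  have htaylor : ∀ τ : ℝ, P'.eval ((t : ℂ) + (τ : ℂ))
      = ∑ i ∈ Finset.range N,
          ((Polynomial.derivative^[i + 1] P).eval (t : ℂ) / (Nat.factorial i : ℂ)) * (τ : ℂ) ^ i := by
    intro τ
    have h1 : P'.eval ((t : ℂ) + (τ : ℂ)) = (Polynomial.taylor (t : ℂ) P').eval (τ : ℂ) := by
      rw [Polynomial.taylor_eval, add_comm]
    rw [h1, Polynomial.eval_eq_sum_range' (by rwa [Polynomial.natDegree_taylor]) (τ : ℂ)]
    refine Finset.sum_congr rfl fun i _ => ?_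
    congr 1
    rw [Polynomial.taylor_coeff]
    have hh : (Nat.factorial i : ℂ) • ((Polynomial.hasseDeriv i) P').eval (t : ℂ)
        = (Polynomial.derivative^[i] P').eval (t : ℂ) := by
      have := congrFun (Polynomial.factorial_smul_hasseDeriv (R := ℂ) i) P'
      rw [← this]
      simp
    have hfac : (Nat.factorial i : ℂ) ≠ 0 := by
      exact_mod_cast Nat.cast_ne_zero.2 (Nat.factorial_ne_zero i)
    have : (Polynomial.derivative^[i] P') = Polynomial.derivative^[i + 1] P := by
      rw [hP', ← Function.iterate_succ_apply]
    rw [← this, ← hh]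
    field_simp
    rw [smul_eq_mul, mul_comm]
  -- The window-moment STFTs
  set W : ℕ → ℂ := fun i => STFT f (fun τ : ℝ => (τ : ℂ) ^ i * g τ) t η with hW
  have hWint : ∀ i : ℕ, W i = ∫ τ : ℝ, (τ : ℂ) ^ i * F t τ := by
    intro i
    rw [hW]
    unfold STFT
    refine integral_congr_ae (Filter.Eventually.of_forall fun τ => ?_)
    simp only [hF, map_mul, map_pow, Complex.conj_ofReal]
    ring
  have hW0 : W 0 = STFT f (⇑g) t η := by
    rw [hWint 0, hSTFT t]
    refine integral_congr_ae (Filter.Eventually.of_forall fun τ => ?_)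
    simp
  -- the derivative as a sum of window moments
  have hderivsum : deriv (fun t' : ℝ => STFT f (⇑g) t' η) t
      = ∑ i ∈ Finset.range N,
          ((Polynomial.derivative^[i + 1] P).eval (t : ℂ) / (Nat.factorial i : ℂ)) * W i := by
    rw [hderivV]
    have h1 : ∀ τ : ℝ, F' t τ = ∑ i ∈ Finset.range N,
        ((Polynomial.derivative^[i + 1] P).eval (t : ℂ) / (Nat.factorial i : ℂ))
          * ((τ : ℂ) ^ i * F t τ) := by
      intro τ
      simp only [hF']
      rw [htaylor τ, Finset.sum_mul]
      exact Finset.sum_congr rfl fun i _ => by ring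
    rw [integral_congr_ae (Filter.Eventually.of_forall h1)]
    rw [integral_finset_sum _ (fun i _ => (hint_pow t i).const_mul _)]
    refine Finset.sum_congr rfl fun i _ => ?_
    rw [integral_const_mul, hWint i]
  -- final algebra
  set V := STFT f (⇑g) t η with hVdef
  set c : ℂ := 2 * (π : ℂ) * Complex.I with hc
  have hc0 : c ≠ 0 := by
    simp only [hc]
    refine mul_ne_zero (mul_ne_zero two_ne_zero ?_) Complex.I_ne_zero
    exact_mod_cast Real.pi_ne_zero
  obtain ⟨M, rfl⟩ : ∃ M, N = M + 1 := ⟨N - 1, by omega⟩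
  have key : deriv (fun t' : ℝ => STFT f (⇑g) t' η) t / (c * V)
      - ∑ k ∈ Finset.Icc 2 (M + 1),
          r k t * (STFT f (fun τ : ℝ => (τ : ℂ) ^ (k - 1) * g τ) t η / V)
      = P'.eval (t : ℂ) / c := by
    rw [hderivsum, aux_sum_Icc2]
    rw [Finset.sum_range_succ']
    have hterm : ∀ j ∈ Finset.range M,
        r (j + 2) t * (STFT f (fun τ : ℝ => (τ : ℂ) ^ (j + 2 - 1) * g τ) t η / V)
        = ((Polynomial.derivative^[j + 1 + 1] P).eval (t : ℂ) / (Nat.factorial (j + 1) : ℂ))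
            * W (j + 1) / (c * V) := by
      intro j hj
      have hjM : j < M := Finset.mem_range.mp hj
      rw [hr (j + 2) (by omega) (by omega) t]
      have h1 : (j + 2 - 1) = j + 1 := by omega
      rw [h1]
      have h2 : (⇑Polynomial.derivative)^[j + 2] P = (⇑Polynomial.derivative)^[j + 1 + 1] P := by
        norm_num
      rw [h2, hW]
      beta_reduce
      simp only [div_eq_mul_inv, mul_inv]
      ring
    rw [Finset.sum_congr rfl hterm]
    rw [add_div, Finset.sum_div]
    have h3 : ∑ j ∈ Finset.range M,
        ((Polynomial.derivative^[j + 1 + 1] P).eval (t : ℂ) / (Nat.factorial (j + 1) : ℂ))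
          * W (j + 1) / (c * V)
        - ∑ j ∈ Finset.range M,
        ((Polynomial.derivative^[j + 1 + 1] P).eval (t : ℂ) / (Nat.factorial (j + 1) : ℂ))
          * W (j + 1) / (c * V) = 0 := sub_self _
    have hV' : V ≠ 0 := hV
    calc (∑ j ∈ Finset.range M,
          ((Polynomial.derivative^[j + 1 + 1] P).eval (t : ℂ) / (Nat.factorial (j + 1) : ℂ))
            * W (j + 1) / (c * V))
        + ((Polynomial.derivative^[0 + 1] P).eval (t : ℂ) / (Nat.factorial 0 : ℂ)) * W 0 / (c * V)
        - ∑ j ∈ Finset.range M,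
          ((Polynomial.derivative^[j + 1 + 1] P).eval (t : ℂ) / (Nat.factorial (j + 1) : ℂ))
            * W (j + 1) / (c * V)
        = ((Polynomial.derivative^[0 + 1] P).eval (t : ℂ) / (Nat.factorial 0 : ℂ)) * W 0
            / (c * V) := by ring
      _ = P'.eval (t : ℂ) / c := by
          rw [hW0]
          simp only [Function.iterate_one, Nat.factorial_zero, Nat.cast_one, div_one, zero_add]
          simp only [div_eq_mul_inv, mul_inv]
          have hVne : V ≠ 0 := hV
          field_simp
          rw [hP']
  rw [key]
  -- real part computation
  have hsplit : (2 * (π : ℂ) * Complex.I) = Complex.I * ((2 * π : ℝ) : ℂ) := by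
    push_cast; ring
  have this1 : P'.eval (t : ℂ) / c = -(P'.eval (t : ℂ) * Complex.I) / ((2 * π : ℝ) : ℂ) := by
    rw [hc, hsplit, ← div_div, Complex.div_I]
  rw [this1, Complex.div_ofReal_re]
  simp only [Complex.neg_re, Complex.mul_re, Complex.I_re, Complex.I_im, mul_zero, mul_one,
    zero_sub, neg_neg]
end

section
/- Let P(τ) = Σ_{k=0}^N c_k τ^k/k! be a complex polynomial of degree at most N ≥ 2 whose real part is bounded above on ℝ; write P = log A + 2πi·φ with real polynomials, set f(τ) = exp(P(τ)), let g : ℝ → ℂ be a Schwartz function, and define r_k(t) = P^{(k)}(t)/(2πi·(k−1)!). Fix t ∈ ℝ and an open set U ⊆ ℝ on which V_f^g(t,·) does not vanish. On U define x_{k,1}(η) = V_f^{t^{k−1}g}(t,η)/V_f^g(t,η) for 1 ≤ k ≤ N and y₁(η) = ω̃_f(t,η), and assume that recursively, for j = 2, …, N, ∂_η x_{j,j−1}(η) ≠ 0 on U, where x_{k,j} = ∂_η x_{k,j−1}/∂_η x_{j,j−1} (j ≤ k ≤ N) and y_j = ∂_η y_{j−1}/∂_η x_{j,j−1} (these quotients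 being differentiable on U). Define q̃^{[N,N]} = y_N and, for j = N−1, …, 2, q̃^{[j,N]} = y_j − Σ_{k=j+1}^N x_{k,j}·q̃^{[k,N]}. Then for every η ∈ U and every 2 ≤ k ≤ N one has q̃^{[k,N]}(η) = r_k(t); in particular Re(q̃^{[k,N]}(η)) = φ^{(k)}(t)/(k−1)!. -/
open MeasureTheory Real

section STFTAux
open Complex Polynomial Metric Finset

lemma STFTaux_re_div (z : ℂ) (c : ℝ) :
    (z / (2 * (π:ℂ) * Complex.I * (c:ℂ))).re = z.im / (2 * π * c) := by
  have h : (2 * (π:ℂ) * Complex.I * (c:ℂ)) = ((2*π*c : ℝ):ℂ) * Complex.I := by push_cast; ring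
  rw [h, ← div_div, Complex.div_I]
  simp only [neg_re, Complex.mul_I_re, Complex.div_ofReal_im, neg_neg]

lemma STFTaux_int_shift (g : SchwartzMap ℝ ℂ) (b : ℝ) (hb : 0 ≤ b) (m : ℕ) :
    Integrable (fun τ : ℝ => (b + |τ|)^m * ‖g τ‖) := by
  have hint : Integrable (fun τ : ℝ => (2*b)^m * ‖g τ‖ + 2^m * (|τ|^m * ‖g τ‖)) := by
    refine (g.integrable.norm.const_mul _).add (Integrable.const_mul ?_ _)
    simpa [Real.norm_eq_abs] using g.integrable_pow_mul (volume) m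
  refine hint.mono' ?_ ?_
  · exact (((continuous_const.add _root_.continuous_abs).pow m).mul
      (g.continuous.norm)).aestronglyMeasurable
  · filter_upwards with τ
    have h0 : 0 ≤ b + |τ| := by positivity
    rw [Real.norm_eq_abs, _root_.abs_of_nonneg (by positivity)]
    have h1 : (b + |τ|)^m ≤ (2*b)^m + 2^m * |τ|^m := by
      have : b + |τ| ≤ 2 * max b |τ| := by
        rcases le_total b |τ| with h | h
        · rw [max_eq_right h]; linarith
        · rw [max_eq_left h]; linarith
      calc (b + |τ|)^m ≤ (2 * max b |τ|)^m := pow_le_pow_left₀ h0 this m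
        _ = 2^m * (max b |τ|)^m := by rw [mul_pow]
        _ ≤ 2^m * (b^m + |τ|^m) := by
            refine mul_le_mul_of_nonneg_left ?_ (by positivity)
            rcases le_total b |τ| with h | h
            · rw [max_eq_right h]; nlinarith [pow_nonneg hb m, pow_nonneg (abs_nonneg τ) m]
            · rw [max_eq_left h]; nlinarith [pow_nonneg hb m, pow_nonneg (abs_nonneg τ) m]
        _ = (2*b)^m + 2^m * |τ|^m := by rw [mul_pow]; ring
    have hg : 0 ≤ ‖g τ‖ := norm_nonneg _
    nlinarith [pow_nonneg h0 m]

lemma STFTaux_norm_eval_le (Q : Polynomial ℂ) (z : ℂ) (w : ℝ) (hw : ‖z‖ ≤ w) :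
    ‖Q.eval z‖ ≤ ∑ i ∈ Finset.range (Q.natDegree + 1), ‖Q.coeff i‖ * w^i := by
  have h0 : (0:ℝ) ≤ w := le_trans (norm_nonneg z) hw
  conv_lhs => rw [Polynomial.eval_eq_sum_range]
  refine (norm_sum_le _ _).trans (Finset.sum_le_sum fun i _ => ?_)
  rw [norm_mul, norm_pow]
  exact mul_le_mul_of_nonneg_left (pow_le_pow_left₀ (norm_nonneg z) hw i) (norm_nonneg _)

lemma STFTaux_phase_norm (η τ : ℝ) : ‖Complex.exp (-2 * (π:ℂ) * Complex.I * η * τ)‖ = 1 := by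
  have h : (-2 * (π:ℂ) * Complex.I * η * τ) = Complex.I * ((-2*π*η*τ : ℝ):ℂ) := by
    push_cast; ring
  rw [h, Complex.norm_exp]
  simp [Complex.mul_re]

lemma STFTaux_f_bound (P : Polynomial ℂ) (M : ℝ) (hM : ∀ τ : ℝ, (P.eval (τ:ℂ)).re ≤ M)
    (s : ℝ) : ‖Complex.exp (P.eval (s:ℂ))‖ ≤ Real.exp M := by
  rw [Complex.norm_exp]
  exact Real.exp_le_exp.2 (hM s)

lemma STFTaux_STFT_eq (P : Polynomial ℂ) (g : SchwartzMap ℝ ℂ) (t η : ℝ) (m : ℕ) :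
    STFT (fun τ : ℝ => Complex.exp (P.eval (τ:ℂ))) (fun τ : ℝ => (τ:ℂ)^m * g τ) t η =
    ∫ τ : ℝ, Complex.exp (P.eval ((t:ℂ) + τ)) * ((τ:ℂ)^m * (starRingEnd ℂ) (g τ)) *
      Complex.exp (-2 * (π:ℂ) * Complex.I * η * τ) := by
  simp only [STFT, Complex.ofReal_add, map_mul, map_pow, Complex.conj_ofReal]

lemma STFTaux_int_base (P : Polynomial ℂ) (M : ℝ) (hM : ∀ τ : ℝ, (P.eval (τ:ℂ)).re ≤ M)
    (g : SchwartzMap ℝ ℂ) (s η : ℝ) (m : ℕ) :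
    Integrable (fun τ : ℝ => Complex.exp (P.eval ((s:ℂ) + τ)) *
      ((τ:ℂ)^m * (starRingEnd ℂ) (g τ)) * Complex.exp (-2 * (π:ℂ) * Complex.I * η * τ)) := by
  refine ((g.integrable_pow_mul volume m).const_mul (Real.exp M)).mono' ?_ ?_
  · have hc : Continuous fun τ : ℝ => (starRingEnd ℂ) (g τ) :=
      Complex.continuous_conj.comp g.continuous
    apply Continuous.aestronglyMeasurable; fun_prop
  · filter_upwards with τ
    rw [norm_mul, norm_mul, STFTaux_phase_norm, mul_one, norm_mul, norm_pow, RCLike.norm_conj]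
    have hexp : ‖Complex.exp (P.eval ((s:ℂ) + τ))‖ ≤ Real.exp M := by
      have : ((s:ℂ) + τ) = ((s + τ : ℝ) : ℂ) := by push_cast; ring
      rw [this]; exact STFTaux_f_bound P M hM (s + τ)
    have : ‖(τ:ℂ)‖ = ‖τ‖ := Complex.norm_real τ
    rw [this]
    exact mul_le_mul_of_nonneg_right hexp (by positivity)

lemma STFTaux_hasDerivAt_t (P : Polynomial ℂ) (M : ℝ) (hM : ∀ τ : ℝ, (P.eval (τ:ℂ)).re ≤ M)
    (g : SchwartzMap ℝ ℂ) (η t : ℝ) :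
    HasDerivAt (fun t' : ℝ => STFT (fun τ : ℝ => Complex.exp (P.eval (τ:ℂ))) (⇑g) t' η)
      (∫ τ : ℝ, P.derivative.eval ((t:ℂ) + τ) * (Complex.exp (P.eval ((t:ℂ) + τ)) *
        ((τ:ℂ)^0 * (starRingEnd ℂ) (g τ)) *
        Complex.exp (-2 * (π:ℂ) * Complex.I * η * τ))) t := by
  set Q := P.derivative with hQ
  set e : ℝ → ℂ := fun τ => Complex.exp (-2 * (π:ℂ) * Complex.I * η * τ) with he
  set F : ℝ → ℝ → ℂ := fun s τ => Complex.exp (P.eval ((s:ℂ) + τ)) *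
      ((τ:ℂ)^0 * (starRingEnd ℂ) (g τ)) * e τ with hF
  set F' : ℝ → ℝ → ℂ := fun s τ => Q.eval ((s:ℂ) + τ) * (Complex.exp (P.eval ((s:ℂ) + τ)) *
      ((τ:ℂ)^0 * (starRingEnd ℂ) (g τ)) * e τ) with hF'
  have hc : Continuous fun τ : ℝ => (starRingEnd ℂ) (g τ) :=
    Complex.continuous_conj.comp g.continuous
  have key : HasDerivAt (fun s : ℝ => ∫ τ : ℝ, F s τ) (∫ τ : ℝ, F' t τ) t := by
    set b : ℝ := |t| + 1 with hbdef
    refine (hasDerivAt_integral_of_dominated_loc_of_deriv_le (F := F) (F' := F')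
      (bound := fun τ => ∑ i ∈ Finset.range (Q.natDegree + 1),
        Real.exp M * ‖Q.coeff i‖ * ((b + |τ|)^(i + 0) * ‖g τ‖))
      (Metric.ball_mem_nhds _ one_pos) ?_ ?_ ?_ ?_ ?_ ?_).2
    · filter_upwards with s
      apply Continuous.aestronglyMeasurable; fun_prop
    · exact STFTaux_int_base P M hM g t η 0
    · apply Continuous.aestronglyMeasurable; fun_prop
    · filter_upwards with τ
      intro s hs
      have hsb : |s| ≤ b := by
        rw [hbdef]
        have := abs_sub_abs_le_abs_sub s t
        rw [mem_ball, Real.dist_eq] at hs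
        have := abs_sub_abs_le_abs_sub s t
        linarith [le_of_lt hs]
      -- pointwise bound
      have hnorm : ‖F' s τ‖ = ‖Q.eval ((s:ℂ) + τ)‖ *
          (‖Complex.exp (P.eval ((s:ℂ) + τ))‖ * (|τ|^0 * ‖g τ‖)) := by
        rw [hF']
        simp only
        rw [norm_mul, norm_mul, norm_mul, he]
        simp only
        rw [STFTaux_phase_norm, mul_one, norm_mul, norm_pow, RCLike.norm_conj]
        simp [Complex.norm_real, Real.norm_eq_abs]
      rw [hnorm]
      have hzb : ‖(s:ℂ) + τ‖ ≤ b + |τ| := by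
        calc ‖(s:ℂ) + τ‖ ≤ ‖(s:ℂ)‖ + ‖(τ:ℂ)‖ := norm_add_le _ _
          _ = |s| + |τ| := by simp [Complex.norm_real, Real.norm_eq_abs]
          _ ≤ b + |τ| := by linarith
      have hQb := STFTaux_norm_eval_le Q ((s:ℂ) + τ) (b + |τ|) hzb
      have hexp : ‖Complex.exp (P.eval ((s:ℂ) + τ))‖ ≤ Real.exp M := by
        have : ((s:ℂ) + τ) = ((s + τ : ℝ) : ℂ) := by push_cast; ring
        rw [this]; exact STFTaux_f_bound P M hM (s + τ)
      have habs : (0:ℝ) ≤ b + |τ| := by positivity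
      calc ‖Q.eval ((s:ℂ) + τ)‖ * (‖Complex.exp (P.eval ((s:ℂ) + τ))‖ * (|τ|^0 * ‖g τ‖))
          ≤ (∑ i ∈ Finset.range (Q.natDegree + 1), ‖Q.coeff i‖ * (b + |τ|)^i) *
            (Real.exp M * (1 * ‖g τ‖)) := by
            apply mul_le_mul hQb _ (by positivity) (Finset.sum_nonneg fun i _ => by positivity)
            apply mul_le_mul hexp (by simp) (by positivity) (Real.exp_nonneg M)
        _ = ∑ i ∈ Finset.range (Q.natDegree + 1),
            Real.exp M * ‖Q.coeff i‖ * ((b + |τ|)^(i + 0) * ‖g τ‖) := by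
            rw [Finset.sum_mul]
            exact Finset.sum_congr rfl fun i _ => by ring
    · exact integrable_finset_sum _ fun i _ =>
        (STFTaux_int_shift g b (by positivity) (i + 0)).const_mul _
    · filter_upwards with τ
      intro s hs
      have h1 : HasDerivAt (fun z : ℂ => P.eval (z + (τ:ℂ))) (Q.eval ((s:ℂ) + τ)) (s:ℂ) := by
        have h0 := P.hasDerivAt ((s:ℂ) + τ)
        have hid : HasDerivAt (fun z : ℂ => z + (τ:ℂ)) 1 (s:ℂ) :=
          (hasDerivAt_id _).add_const _
        have h5 := h0.comp (s:ℂ) hid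
        rw [mul_one] at h5
        exact h5
      have h2 := h1.cexp
      have h3 := h2.comp_ofReal (z := s)
      have h4 := (h3.mul_const ((τ:ℂ)^0 * (starRingEnd ℂ) (g τ))).mul_const (e τ)
      refine HasDerivAt.congr_deriv h4 ?_
      rw [hF']
      ring
  have hfun : (fun t' : ℝ => STFT (fun τ : ℝ => Complex.exp (P.eval (τ:ℂ))) (⇑g) t' η) =
      (fun s : ℝ => ∫ τ : ℝ, F s τ) := by
    funext s
    simp only [STFT, hF, he, Complex.ofReal_add, pow_zero, one_mul]
  rw [hfun]
  exact key

lemma STFTaux_diff_eta (P : Polynomial ℂ) (M : ℝ) (hM : ∀ τ : ℝ, (P.eval (τ:ℂ)).re ≤ M)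
    (g : SchwartzMap ℝ ℂ) (t : ℝ) (m : ℕ) (η : ℝ) :
    DifferentiableAt ℝ (fun η' : ℝ =>
      STFT (fun τ : ℝ => Complex.exp (P.eval (τ:ℂ))) (fun τ : ℝ => (τ:ℂ)^m * g τ) t η') η := by
  have hc : Continuous fun τ : ℝ => (starRingEnd ℂ) (g τ) :=
    Complex.continuous_conj.comp g.continuous
  set F : ℝ → ℝ → ℂ := fun s τ => Complex.exp (P.eval ((t:ℂ) + τ)) *
      ((τ:ℂ)^m * (starRingEnd ℂ) (g τ)) * Complex.exp (-2 * (π:ℂ) * Complex.I * s * τ) with hF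
  set F' : ℝ → ℝ → ℂ := fun s τ => (-2 * (π:ℂ) * Complex.I * τ) *
      (Complex.exp (P.eval ((t:ℂ) + τ)) * ((τ:ℂ)^m * (starRingEnd ℂ) (g τ)) *
      Complex.exp (-2 * (π:ℂ) * Complex.I * s * τ)) with hF'
  have key : HasDerivAt (fun s : ℝ => ∫ τ : ℝ, F s τ) (∫ τ : ℝ, F' η τ) η := by
    refine (hasDerivAt_integral_of_dominated_loc_of_deriv_le (F := F) (F' := F')
      (bound := fun τ => (2 * π * Real.exp M) * (|τ|^(m+1) * ‖g τ‖))
      (Metric.ball_mem_nhds _ one_pos) ?_ ?_ ?_ ?_ ?_ ?_).2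
    · filter_upwards with s
      apply Continuous.aestronglyMeasurable; fun_prop
    · exact STFTaux_int_base P M hM g t η m
    · apply Continuous.aestronglyMeasurable; fun_prop
    · filter_upwards with τ
      intro s hs
      have hFn : ‖F s τ‖ ≤ Real.exp M * (|τ|^m * ‖g τ‖) := by
        rw [hF]
        simp only
        rw [norm_mul, norm_mul, STFTaux_phase_norm, mul_one, norm_mul, norm_pow,
          RCLike.norm_conj]
        have hexp : ‖Complex.exp (P.eval ((t:ℂ) + τ))‖ ≤ Real.exp M := by
          have : ((t:ℂ) + τ) = ((t + τ : ℝ) : ℂ) := by push_cast; ring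
          rw [this]; exact STFTaux_f_bound P M hM (t + τ)
        have h2 : ‖(τ:ℂ)‖ = |τ| := by simp [Complex.norm_real, Real.norm_eq_abs]
        rw [h2]
        exact mul_le_mul_of_nonneg_right hexp (by positivity)
      have h1 : ‖(-2 * (π:ℂ) * Complex.I * (τ:ℂ))‖ = 2 * π * |τ| := by
        rw [norm_mul, norm_mul, norm_mul]
        simp [Complex.norm_real, Real.norm_eq_abs, _root_.abs_of_nonneg Real.pi_pos.le]
      calc ‖F' s τ‖ = ‖(-2 * (π:ℂ) * Complex.I * (τ:ℂ))‖ * ‖F s τ‖ := by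
            rw [hF', hF]; simp only [norm_mul]
        _ ≤ (2 * π * |τ|) * (Real.exp M * (|τ|^m * ‖g τ‖)) := by
            rw [h1]
            exact mul_le_mul_of_nonneg_left hFn (by positivity)
        _ = (2 * π * Real.exp M) * (|τ|^(m+1) * ‖g τ‖) := by ring
    · refine Integrable.const_mul ?_ _
      simpa [Real.norm_eq_abs] using g.integrable_pow_mul (volume) (m+1)
    · filter_upwards with τ
      intro s hs
      have h1 : HasDerivAt (fun z : ℂ => Complex.exp (-2 * (π:ℂ) * Complex.I * z * τ))
          ((-2 * (π:ℂ) * Complex.I * τ) *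
            Complex.exp (-2 * (π:ℂ) * Complex.I * s * τ)) (s:ℂ) := by
        have h0 : HasDerivAt (fun z : ℂ => -2 * (π:ℂ) * Complex.I * z * τ)
            (-2 * (π:ℂ) * Complex.I * τ) (s:ℂ) := by
          have : (fun z : ℂ => -2 * (π:ℂ) * Complex.I * z * τ) =
              fun z : ℂ => (-2 * (π:ℂ) * Complex.I * τ) * z := by funext z; ring
          rw [this]
          simpa using (hasDerivAt_id ((s:ℂ))).const_mul (-2 * (π:ℂ) * Complex.I * (τ:ℂ))
        have := h0.cexp
        simpa [mul_comm] using this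
      have h2 := h1.comp_ofReal (z := s)
      have h3 := (h2.const_mul (Complex.exp (P.eval ((t:ℂ) + τ)) *
        ((τ:ℂ)^m * (starRingEnd ℂ) (g τ))))
      refine HasDerivAt.congr_deriv h3 ?_
      rw [hF']
      ring
  have hfun : (fun η' : ℝ => STFT (fun τ : ℝ => Complex.exp (P.eval (τ:ℂ)))
      (fun τ : ℝ => (τ:ℂ)^m * g τ) t η') = (fun s : ℝ => ∫ τ : ℝ, F s τ) := by
    funext s
    rw [STFTaux_STFT_eq]
  rw [hfun]
  exact key.differentiableAt

lemma STFTaux_expand (P : Polynomial ℂ) (M : ℝ) (hM : ∀ τ : ℝ, (P.eval (τ:ℂ)).re ≤ M)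
    (g : SchwartzMap ℝ ℂ) (t η : ℝ) (N : ℕ) (hd : P.derivative.natDegree < N) :
    (∫ τ : ℝ, P.derivative.eval ((t:ℂ) + τ) * (Complex.exp (P.eval ((t:ℂ) + τ)) *
        ((τ:ℂ)^0 * (starRingEnd ℂ) (g τ)) * Complex.exp (-2 * (π:ℂ) * Complex.I * η * τ)))
    = ∑ m ∈ Finset.range N, (Polynomial.hasseDeriv m P.derivative).eval (t:ℂ) *
        STFT (fun τ : ℝ => Complex.exp (P.eval (τ:ℂ))) (fun τ : ℝ => (τ:ℂ)^m * g τ) t η := by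
  set Q := P.derivative with hQdef
  have hpt : (fun τ : ℝ => Q.eval ((t:ℂ) + τ) * (Complex.exp (P.eval ((t:ℂ) + τ)) *
      ((τ:ℂ)^0 * (starRingEnd ℂ) (g τ)) * Complex.exp (-2 * (π:ℂ) * Complex.I * η * τ)))
      = fun τ : ℝ => ∑ m ∈ Finset.range N, (Polynomial.hasseDeriv m Q).eval (t:ℂ) *
        (Complex.exp (P.eval ((t:ℂ) + τ)) * ((τ:ℂ)^m * (starRingEnd ℂ) (g τ)) *
          Complex.exp (-2 * (π:ℂ) * Complex.I * η * τ)) := by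
    funext τ
    have hT : Q.eval ((t:ℂ) + τ) = ∑ m ∈ Finset.range N,
        (Polynomial.hasseDeriv m Q).eval (t:ℂ) * (τ:ℂ)^m := by
      have h1 : Q.eval ((t:ℂ) + τ) = (Polynomial.taylor (t:ℂ) Q).eval (τ:ℂ) := by
        rw [Polynomial.taylor_eval, add_comm]
      rw [h1, Polynomial.eval_eq_sum_range'
        (lt_of_le_of_lt (le_of_eq (Polynomial.natDegree_taylor Q (t:ℂ))) hd)]
      exact Finset.sum_congr rfl fun m _ => by rw [Polynomial.taylor_coeff]
    rw [hT, Finset.sum_mul]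
    exact Finset.sum_congr rfl fun m _ => by ring
  rw [hpt, integral_finset_sum _ (fun m _ =>
    ((STFTaux_int_base P M hM g t η m).const_mul _))]
  exact Finset.sum_congr rfl fun m _ => by
    rw [integral_const_mul, STFTaux_STFT_eq]

end STFTAux

/-- for `f = exp ∘ P`, `P = log A + 2πi·φ` of degree at most `N ≥ 2` with
real part bounded above, the recursively defined local modulation operators
`q̃^{[k,N]}` (here `q k`, built from `x j k = x_{k,j}` and `y j = y_j`) satisfy
`q̃^{[k,N]}(η) = r_k(t) = P^{(k)}(t)/(2πi·(k−1)!)` on `U`; in particular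
`Re(q̃^{[k,N]}(η)) = φ^{(k)}(t)/(k−1)! = Im(P^{(k)}(t))/(2π·(k−1)!)`. -/
theorem modulation_operators_recursive (N : ℕ) (hN : 2 ≤ N) (P : Polynomial ℂ)
    (hdeg : P.natDegree ≤ N)
    (hbd : ∃ M : ℝ, ∀ τ : ℝ, (P.eval (τ : ℂ)).re ≤ M)
    (f : ℝ → ℂ) (hf : f = fun τ : ℝ => Complex.exp (P.eval (τ : ℂ)))
    (g : SchwartzMap ℝ ℂ) (t : ℝ) (U : Set ℝ) (hU : IsOpen U)
    (hVU : ∀ η ∈ U, STFT f (⇑g) t η ≠ 0)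
    (x : ℕ → ℕ → ℝ → ℂ) (y : ℕ → ℝ → ℂ) (q : ℕ → ℝ → ℂ)
    -- first level: x_{k,1} and y₁
    (hx1 : ∀ k : ℕ, 1 ≤ k → k ≤ N →
      x 1 k = fun η : ℝ =>
        STFT f (fun τ : ℝ => (τ : ℂ) ^ (k - 1) * g τ) t η / STFT f (⇑g) t η)
    (hy1 : y 1 = fun η : ℝ => deriv (fun t' : ℝ => STFT f (⇑g) t' η) t /
      (2 * (π : ℂ) * Complex.I * STFT f (⇑g) t η))
    -- recursive levels: nonvanishing denominators and defining quotients on U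
    (hne : ∀ j : ℕ, 2 ≤ j → j ≤ N → ∀ η ∈ U, deriv (x (j - 1) j) η ≠ 0)
    (hxrec : ∀ j : ℕ, 2 ≤ j → j ≤ N → ∀ k : ℕ, j ≤ k → k ≤ N → ∀ η ∈ U,
      x j k η = deriv (x (j - 1) k) η / deriv (x (j - 1) j) η)
    (hyrec : ∀ j : ℕ, 2 ≤ j → j ≤ N → ∀ η ∈ U,
      y j η = deriv (y (j - 1)) η / deriv (x (j - 1) j) η)
    -- the quotients are differentiable on U
    (hxdiff : ∀ j : ℕ, 2 ≤ j → j ≤ N → ∀ k : ℕ, j ≤ k → k ≤ N → ∀ η ∈ U,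
      DifferentiableAt ℝ (x j k) η)
    (hydiff : ∀ j : ℕ, 2 ≤ j → j ≤ N → ∀ η ∈ U, DifferentiableAt ℝ (y j) η)
    -- backward substitution defining q̃^{[j,N]}
    (hqN : ∀ η ∈ U, q N η = y N η)
    (hqrec : ∀ j : ℕ, 2 ≤ j → j < N → ∀ η ∈ U,
      q j η = y j η - ∑ k ∈ Finset.Icc (j + 1) N, x j k η * q k η) :
    ∀ k : ℕ, 2 ≤ k → k ≤ N → ∀ η ∈ U,
      q k η = (Polynomial.derivative^[k] P).eval (t : ℂ) /
          (2 * (π : ℂ) * Complex.I * (Nat.factorial (k - 1) : ℂ)) ∧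
      (q k η).re = ((Polynomial.derivative^[k] P).eval (t : ℂ)).im /
          (2 * π * (Nat.factorial (k - 1) : ℝ)) := by
  subst hf
  obtain ⟨M, hM⟩ := hbd
  set f : ℝ → ℂ := fun τ : ℝ => Complex.exp (P.eval (τ : ℂ)) with hfdef
  have hQd : P.derivative.natDegree < N := by
    have h1 := Polynomial.natDegree_derivative_le P
    omega
  set r : ℕ → ℂ := fun k => (Polynomial.derivative^[k] P).eval (t:ℂ) /
    (2 * (π:ℂ) * Complex.I * ((Nat.factorial (k-1)) : ℂ)) with hrdef
  have hg0 : (fun τ : ℝ => ((τ:ℂ))^0 * g τ) = ⇑g := by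
    funext τ; simp
  have h2πI : (2 * (π:ℂ) * Complex.I) ≠ 0 := by
    simp [Complex.ext_iff, Real.pi_ne_zero]
  -- level 1 : x 1 1 = 1 on U
  have x11 : ∀ η ∈ U, x 1 1 η = 1 := by
    intro η hη
    simp only [hx1 1 le_rfl (by omega)]
    rw [show (fun τ : ℝ => ((τ:ℂ))^(1-1) * g τ) = ⇑g from by funext τ; simp]
    exact div_self (hVU η hη)
  -- level 1 : differentiability
  have x1diff : ∀ k : ℕ, 1 ≤ k → k ≤ N → ∀ η ∈ U, DifferentiableAt ℝ (x 1 k) η := by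
    intro k hk1 hkN η hη
    rw [hx1 k hk1 hkN]
    have hd0 : DifferentiableAt ℝ (fun η' : ℝ => STFT f (⇑g) t η') η := by
      have h := STFTaux_diff_eta P M hM g t 0 η
      rw [show (fun η' : ℝ => STFT f (fun τ : ℝ => (τ:ℂ)^0 * g τ) t η')
        = (fun η' : ℝ => STFT f (⇑g) t η') from by rw [hg0]] at h
      exact h
    exact (STFTaux_diff_eta P M hM g t (k-1) η).div hd0 (hVU η hη)
  -- level 1 : the expansion of y 1
  have y1sum : ∀ η ∈ U, y 1 η = ∑ k ∈ Finset.Icc 1 N, r k * x 1 k η := by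
    intro η hη
    simp only [hy1]
    rw [(STFTaux_hasDerivAt_t P M hM g η t).deriv, STFTaux_expand P M hM g t η N hQd]
    rw [show Finset.Icc 1 N = Finset.Ico 1 (N+1) from (Finset.Ico_add_one_right_eq_Icc 1 N).symm,
      Finset.sum_Ico_eq_sum_range]
    simp only [Nat.add_sub_cancel]
    rw [div_eq_iff (mul_ne_zero h2πI (hVU η hη)), Finset.sum_mul]
    apply Finset.sum_congr rfl
    intro i hi
    rw [Finset.mem_range] at hi
    rw [hx1 (1+i) (by omega) (by omega)]
    simp only [Nat.add_sub_cancel_left, hrdef]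
    have hc : ((Nat.factorial i : ℂ)) * (Polynomial.hasseDeriv i P.derivative).eval (t:ℂ)
        = (Polynomial.derivative^[1+i] P).eval (t:ℂ) := by
      have h2 := congrFun (Polynomial.factorial_smul_hasseDeriv (R := ℂ) i) P.derivative
      simp only [LinearMap.smul_apply] at h2
      rw [show (1+i) = i+1 from by omega, Function.iterate_succ_apply, ← h2]
      rw [nsmul_eq_mul, Polynomial.eval_mul, Polynomial.eval_natCast]
    have hS0 := hVU η hη
    have hfac : ((Nat.factorial i : ℂ)) ≠ 0 := Nat.cast_ne_zero.2 (Nat.factorial_ne_zero i)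
    rw [← hc]
    field_simp
    ring
  -- forward induction on the level j
  have main : ∀ j : ℕ, 1 ≤ j → j ≤ N →
      (∀ η ∈ U, y j η = ∑ k ∈ Finset.Icc j N, r k * x j k η) ∧
      (∀ k : ℕ, j ≤ k → k ≤ N → ∀ η ∈ U, DifferentiableAt ℝ (x j k) η) ∧
      (∀ η ∈ U, x j j η = 1) := by
    intro j hj1
    induction j, hj1 using Nat.le_induction with
    | base =>
      intro _
      exact ⟨y1sum, x1diff, x11⟩
    | succ j hj1 ih =>
      intro hjN
      have hjN' : j ≤ N := by omega
      obtain ⟨ihy, ihdiff, ihone⟩ := ih hjN'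
      have hj2 : 2 ≤ j + 1 := by omega
      have key : ∀ η ∈ U, deriv (y j) η =
          ∑ k ∈ Finset.Icc (j+1) N, r k * deriv (x j k) η := by
        intro η hη
        have hev : y j =ᶠ[nhds η] (fun η' => ∑ k ∈ Finset.Icc j N, r k * x j k η') :=
          Filter.eventuallyEq_of_mem (hU.mem_nhds hη) (fun η' hη' => ihy η' hη')
        rw [hev.deriv_eq, deriv_fun_sum (fun k hk =>
          ((ihdiff k (Finset.mem_Icc.1 hk).1 (Finset.mem_Icc.1 hk).2 η hη).const_mul (r k)))]
        have hterm : ∀ k ∈ Finset.Icc j N,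
            deriv (fun η' => r k * x j k η') η = r k * deriv (x j k) η := by
          intro k hk
          exact deriv_const_mul (r k)
            (ihdiff k (Finset.mem_Icc.1 hk).1 (Finset.mem_Icc.1 hk).2 η hη)
        rw [Finset.sum_congr rfl hterm, Finset.Icc_eq_cons_Ioc hjN', Finset.sum_cons,
          ← Finset.Icc_add_one_left_eq_Ioc]
        have hev1 : x j j =ᶠ[nhds η] (fun _ => (1:ℂ)) :=
          Filter.eventuallyEq_of_mem (hU.mem_nhds hη) (fun η' hη' => ihone η' hη')
        rw [hev1.deriv_eq, deriv_const]
        ring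
      refine ⟨?_, fun k hk1 hk2 η hη => hxdiff (j+1) hj2 hjN k hk1 hk2 η hη, ?_⟩
      · intro η hη
        rw [hyrec (j+1) hj2 hjN η hη]
        simp only [Nat.add_sub_cancel]
        rw [key η hη, Finset.sum_div]
        apply Finset.sum_congr rfl
        intro k hk
        obtain ⟨hk1, hk2⟩ := Finset.mem_Icc.1 hk
        rw [hxrec (j+1) hj2 hjN k hk1 hk2 η hη]
        simp only [Nat.add_sub_cancel]
        rw [mul_div_assoc]
      · intro η hη
        rw [hxrec (j+1) hj2 hjN (j+1) le_rfl hjN η hη]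
        simp only [Nat.add_sub_cancel]
        have hd := hne (j+1) hj2 hjN η hη
        simp only [Nat.add_sub_cancel] at hd
        exact div_self hd
  -- value of q at the top level
  have qtop : ∀ η ∈ U, q N η = r N := by
    intro η hη
    rw [hqN η hη]
    obtain ⟨hy, _, hone⟩ := main N (by omega) le_rfl
    rw [hy η hη, Finset.Icc_self, Finset.sum_singleton, hone η hη, mul_one]
  -- backward induction
  have back : ∀ d : ℕ, ∀ j : ℕ, 2 ≤ j → j ≤ N → N - j ≤ d → ∀ η ∈ U, q j η = r j := by
    intro d
    induction d with
    | zero =>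
      intro j hj2 hjN hd η hη
      have : j = N := by omega
      subst this
      exact qtop η hη
    | succ d ihd =>
      intro j hj2 hjN hd η hη
      by_cases hjN' : j = N
      · subst hjN'
        exact qtop η hη
      · have hjlt : j < N := lt_of_le_of_ne hjN hjN'
        rw [hqrec j hj2 hjlt η hη]
        obtain ⟨hy, _, hone⟩ := main j (by omega) hjN
        rw [hy η hη]
        have hq' : ∀ k ∈ Finset.Icc (j+1) N, x j k η * q k η = r k * x j k η := by
          intro k hk
          obtain ⟨hk1, hk2⟩ := Finset.mem_Icc.1 hk
          rw [ihd k (by omega) hk2 (by omega) η hη]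
          ring
        rw [Finset.sum_congr rfl hq', Finset.Icc_eq_cons_Ioc hjN, Finset.sum_cons,
          ← Finset.Icc_add_one_left_eq_Ioc, hone η hη, mul_one]
        ring
  -- conclusion
  intro k hk2 hkN η hη
  have hq := back N k hk2 hkN (by omega) η hη
  rw [hrdef] at hq
  simp only at hq
  refine ⟨hq, ?_⟩
  rw [hq]
  have h := STFTaux_re_div ((Polynomial.derivative^[k] P).eval (t:ℂ)) ((Nat.factorial (k-1) : ℝ))
  push_cast at h ⊢
  exact h
end
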